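/- arXiv:1907.11016 — 9 statements merged into one kernel-verified Lean document; each statement's English description precedes it below -/
import Mathlib

section
/- For a scalar cubic form P : ℝ^N → ℝ with N ≥ 2 and associated symmetric trilinear form T, the following are equivalent: (i) P has a regular zero (a point v with P(v)=0 and the linear functional x ↦ T(v,v,x) nonzero); (ii) P is not a perfect cube, i.e., P is not of the form P(x) = (ℓ(x))^3 for some linear functional ℓ; (iii) the linear map L : ℝ^N → Sym(N,ℝ), L(x) = 6·T(x,·,·), has rank strictly greater than one. -/
/-!
Only (ii) ⇒ (i) needs an idea. Normalise `e` with `P e = 1` and restrict `P` to the lines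
`x + t e`: `t ↦ P (x + t e)` is a monic real cubic whose derivative is `3 T(x + t e, x + t e, e)`.
If every zero of `P` is singular, every real root of this cubic is a double root, and a real
monic cubic with this property is a perfect cube `(t + T(x,e,e))³`; at `t = 0` this reads
`P x = T(e,e,x)³`. For (iii) ⇒ (ii), if every `T(x,·,·)` is proportional to a fixed form, symmetry
lets one peel off the arguments one at a time: `T(x,y,z) = k λ(x) λ(y) λ(z)` with `λ = T(y₀,z₀,·)`.
-/

theorem exists_depressed_cubic_eq_zero (p q : ℝ) : ∃ s : ℝ, s ^ 3 + p * s + q = 0 := by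
  set M : ℝ := 1 + |p| + |q|
  have hM : 1 ≤ M := by simp only [M]; linarith [abs_nonneg p, abs_nonneg q]
  have hneg : (-M) ^ 3 + p * (-M) + q ≤ 0 := by
    nlinarith [le_abs_self p, neg_abs_le p, le_abs_self q, abs_nonneg q,
      mul_le_mul_of_nonneg_right (neg_abs_le p) (by linarith : (0 : ℝ) ≤ M), sq_nonneg M]
  have hpos : 0 ≤ M ^ 3 + p * M + q := by
    nlinarith [neg_abs_le p, neg_abs_le q, abs_nonneg p, sq_nonneg M]
  obtain ⟨s, -, hs⟩ := intermediate_value_Icc (by linarith : -M ≤ M)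
    (f := fun s : ℝ => s ^ 3 + p * s + q) (by fun_prop) ⟨hneg, hpos⟩
  exact ⟨s, hs⟩

theorem exists_pow_three_eq (a : ℝ) : ∃ r : ℝ, r ^ 3 = a := by
  obtain ⟨r, hr⟩ := exists_depressed_cubic_eq_zero 0 (-a)
  exact ⟨r, by linear_combination hr⟩

theorem eq_sq_and_eq_pow_three_of_forall_root_double {b c d : ℝ}
    (h : ∀ t, t ^ 3 + 3 * b * t ^ 2 + 3 * c * t + d = 0 → t ^ 2 + 2 * b * t + c = 0) :
    c = b ^ 2 ∧ d = b ^ 3 := by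
  obtain ⟨s, hs⟩ := exists_depressed_cubic_eq_zero (3 * (c - b ^ 2)) (d - 3 * b * c + 2 * b ^ 3)
  have h₁ : s ^ 2 + c - b ^ 2 = 0 := by
    linear_combination h (s - b) (by linear_combination hs)
  -- `s` is a double root of the depressed cubic, so its third root is `-2 s`.
  have h₂ : 4 * s ^ 2 + c - b ^ 2 = 0 := by
    linear_combination h (-2 * s - b) (by linear_combination hs - 9 * s * h₁)
  obtain rfl : s = 0 := pow_eq_zero_iff two_ne_zero |>.mp (by linear_combination (h₂ - h₁) / 3)
  exact ⟨by linear_combination h₁, by linear_combination hs + 3 * b * h₁⟩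

section CommRing

variable {R V : Type*} [CommRing R] [AddCommGroup V] [Module R V]

def IsSymmTrilinear (T : V →ₗ[R] V →ₗ[R] V →ₗ[R] R) : Prop :=
  ∀ x y z, T x y z = T y x z ∧ T x y z = T x z y

def IsCube (T : V →ₗ[R] V →ₗ[R] V →ₗ[R] R) : Prop :=
  ∃ l : V →ₗ[R] R, ∀ x, T x x x = l x ^ 3

namespace IsSymmTrilinear

variable {T : V →ₗ[R] V →ₗ[R] V →ₗ[R] R}

theorem swap₁₂ (hT : IsSymmTrilinear T) (x y z : V) : T x y z = T y x z := (hT x y z).1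

theorem swap₂₃ (hT : IsSymmTrilinear T) (x y z : V) : T x y z = T x z y := (hT x y z).2

theorem swap₁₃ (hT : IsSymmTrilinear T) (x y z : V) : T x y z = T z y x := by
  rw [hT.swap₂₃, hT.swap₁₂, hT.swap₂₃]

theorem rotate (hT : IsSymmTrilinear T) (x y z : V) : T x y z = T y z x :=
  (hT.swap₁₂ x y z).trans (hT.swap₂₃ y x z)

theorem apply_add_smul_apply_add_smul_apply (hT : IsSymmTrilinear T) (x e : V) (t : R) :
    T (x + t • e) (x + t • e) e = T x x e + 2 * t * T x e e + t ^ 2 * T e e e := by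
  simp only [map_add, map_smul, LinearMap.add_apply, LinearMap.smul_apply, smul_eq_mul]
  linear_combination t * hT.swap₁₂ e x e

theorem cube_add_smul (hT : IsSymmTrilinear T) (x e : V) (t : R) :
    T (x + t • e) (x + t • e) (x + t • e) =
      T x x x + 3 * t * T x x e + 3 * t ^ 2 * T x e e + t ^ 3 * T e e e := by
  simp only [map_add, map_smul, LinearMap.add_apply, LinearMap.smul_apply, smul_eq_mul]
  linear_combination t * hT.swap₂₃ x e x + t * hT.swap₁₃ e x x + t ^ 2 * hT.swap₁₂ e x e
    + t ^ 2 * (hT.swap₂₃ e e x).trans (hT.swap₁₂ e x e)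

theorem six_mul_eq_polarization (hT : IsSymmTrilinear T) (x y z : V) :
    6 * T x y z = T (x + y + z) (x + y + z) (x + y + z) - T (x + y) (x + y) (x + y)
      - T (x + z) (x + z) (x + z) - T (y + z) (y + z) (y + z) + T x x x + T y y y + T z z z := by
  simp only [map_add, LinearMap.add_apply]
  linear_combination hT.swap₂₃ x y z + hT.swap₁₂ x y z + hT.swap₁₃ x y z
    + hT.rotate x y z - hT.rotate z x y

end IsSymmTrilinear

end CommRing

namespace IsSymmTrilinear

section Field

variable {K V : Type*} [Field K] [CharZero K] [AddCommGroup V] [Module K V]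
  {T : V →ₗ[K] V →ₗ[K] V →ₗ[K] K}

theorem eq_mul_mul_of_forall_apply_self_eq_pow (hT : IsSymmTrilinear T) {l : V →ₗ[K] K}
    (hl : ∀ x, T x x x = l x ^ 3) (x y z : V) : T x y z = l x * l y * l z := by
  have h := hT.six_mul_eq_polarization x y z
  simp only [hl] at h
  simp only [map_add] at h
  linear_combination h / 6

theorem apply_eq_zero_of_apply_self_eq_zero (hT : IsSymmTrilinear T) {l : V →ₗ[K] K}
    (hl : ∀ x, T x x x = l x ^ 3) {v : V} (hv : T v v v = 0) (x : V) : T v v x = 0 := by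
  have hlv : l v = 0 := pow_eq_zero_iff three_ne_zero |>.mp (hl v ▸ hv)
  rw [hT.eq_mul_mul_of_forall_apply_self_eq_pow hl, hlv, zero_mul, zero_mul]

end Field

variable {V : Type*} [AddCommGroup V] [Module ℝ V] {T : V →ₗ[ℝ] V →ₗ[ℝ] V →ₗ[ℝ] ℝ}

theorem isCube_of_forall_singular (hT : IsSymmTrilinear T)
    (hsing : ∀ v, T v v v = 0 → ∀ x, T v v x = 0) : IsCube T := by
  by_cases hzero : ∀ x, T x x x = 0
  · exact ⟨0, fun x => by simp [hzero x]⟩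
  push Not at hzero
  obtain ⟨e₀, he₀⟩ := hzero
  obtain ⟨r, hr⟩ := exists_pow_three_eq (T e₀ e₀ e₀)⁻¹
  set e := r • e₀
  have he : T e e e = 1 := by
    simp only [e, map_smul, LinearMap.smul_apply, smul_eq_mul]
    linear_combination T e₀ e₀ e₀ * hr + inv_mul_cancel₀ he₀
  refine ⟨T e e, fun x => ?_⟩
  have hroots : ∀ t, t ^ 3 + 3 * T x e e * t ^ 2 + 3 * T x x e * t + T x x x = 0 →
      t ^ 2 + 2 * T x e e * t + T x x e = 0 := by
    intro t ht
    have hzero : T (x + t • e) (x + t • e) (x + t • e) = 0 := by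
      rw [hT.cube_add_smul, he]
      linear_combination ht
    have hsing_e := hsing _ hzero e
    rw [hT.apply_add_smul_apply_add_smul_apply, he] at hsing_e
    linear_combination hsing_e
  rw [(eq_sq_and_eq_pow_three_of_forall_root_double hroots).2, hT.rotate]

theorem isCube_of_mul_apply_eq (hT : IsSymmTrilinear T) {x₀ y₀ z₀ : V} (h₀ : T x₀ y₀ z₀ ≠ 0)
    (h : ∀ x y z, T x₀ y₀ z₀ * T x y z = T x y₀ z₀ * T x₀ y z) : IsCube T := by
  set a := T x₀ y₀ z₀
  have key : ∀ x, a ^ 3 * T x x x = T x₀ x₀ x₀ * T x y₀ z₀ ^ 3 := by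
    intro x
    linear_combination a ^ 2 * h x x x + a ^ 2 * T x y₀ z₀ * hT.swap₁₂ x₀ x x
      + a * T x y₀ z₀ * h x x₀ x + a * T x y₀ z₀ ^ 2 * hT.swap₁₃ x₀ x₀ x
      + T x y₀ z₀ ^ 2 * h x x₀ x₀
  obtain ⟨r, hr⟩ := exists_pow_three_eq (T x₀ x₀ x₀ / a ^ 3)
  refine ⟨r • T y₀ z₀, fun x => ?_⟩
  rw [LinearMap.smul_apply, smul_eq_mul, ← hT.rotate x y₀ z₀, mul_pow, hr]
  field_simp
  linear_combination key x

theorem isCube_of_forall_exists_eq_mul (hT : IsSymmTrilinear T) (B : V → V → ℝ)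
    (hB : ∀ x, ∃ c : ℝ, ∀ y z, T x y z = c * B y z) : IsCube T := by
  by_cases hzero : ∀ x y z, T x y z = 0
  · exact ⟨0, fun x => by simp [hzero]⟩
  push Not at hzero
  obtain ⟨x₀, y₀, z₀, h₀⟩ := hzero
  choose c hc using hB
  refine hT.isCube_of_mul_apply_eq h₀ fun x y z => ?_
  rw [hc x₀ y₀ z₀, hc x y z, hc x y₀ z₀, hc x₀ y z]
  ring

end IsSymmTrilinear

theorem scalar_cubic_regular_zero_tfae_general (N : ℕ)
    (P : (Fin N → ℝ) → ℝ)
    (T : (Fin N → ℝ) →ₗ[ℝ] (Fin N → ℝ) →ₗ[ℝ] (Fin N → ℝ) →ₗ[ℝ] ℝ)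
    (hsym : ∀ x y z, T x y z = T y x z ∧ T x y z = T x z y)
    (hP : ∀ x, P x = T x x x) :
    ((∃ v, P v = 0 ∧ ∃ x, T v v x ≠ 0) ↔
      ¬ ∃ l : (Fin N → ℝ) →ₗ[ℝ] ℝ, ∀ x, P x = (l x) ^ 3) ∧
    ((¬ ∃ l : (Fin N → ℝ) →ₗ[ℝ] ℝ, ∀ x, P x = (l x) ^ 3) ↔
      ¬ ∃ B : (Fin N → ℝ) → (Fin N → ℝ) → ℝ, ∀ x, ∃ c : ℝ,
        ∀ y z, 6 * T x y z = c * B y z) := by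
  have hT : IsSymmTrilinear T := hsym
  simp only [hP]
  change (_ ↔ ¬IsCube T) ∧ (¬IsCube T ↔ _)
  refine ⟨⟨?_, fun hnot => ?_⟩, not_congr ⟨?_, ?_⟩⟩
  · rintro ⟨v, hv, x, hx⟩ ⟨l, hl⟩
    exact hx (hT.apply_eq_zero_of_apply_self_eq_zero hl hv x)
  · by_contra! hsing
    exact hnot (hT.isCube_of_forall_singular hsing)
  · rintro ⟨l, hl⟩
    refine ⟨fun y z => l y * l z, fun x => ⟨6 * l x, fun y z => ?_⟩⟩
    rw [hT.eq_mul_mul_of_forall_apply_self_eq_pow hl]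
    ring
  · rintro ⟨B, hB⟩
    refine hT.isCube_of_forall_exists_eq_mul B fun x => ?_
    obtain ⟨c, hc⟩ := hB x
    exact ⟨c / 6, fun y z => by linear_combination hc y z / 6⟩

/-- for a scalar cubic form `P(x) = T(x,x,x)` on `ℝ^N`, `N ≥ 2`:
(i) `P` has a regular zero ↔ (ii) `P` is not a perfect cube ↔ (iii) the linear
map `L(x) = 6T(x,·,·)` into symmetric bilinear forms has rank `> 1`. -/
theorem scalar_cubic_regular_zero_tfae (N : ℕ) (hN : 2 ≤ N)
    (P : (Fin N → ℝ) → ℝ)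
    (T : (Fin N → ℝ) →ₗ[ℝ] (Fin N → ℝ) →ₗ[ℝ] (Fin N → ℝ) →ₗ[ℝ] ℝ)
    (hsym : ∀ x y z, T x y z = T y x z ∧ T x y z = T x z y)
    (hP : ∀ x, P x = T x x x) :
    ((∃ v, P v = 0 ∧ ∃ x, T v v x ≠ 0) ↔
      ¬ ∃ l : (Fin N → ℝ) →ₗ[ℝ] ℝ, ∀ x, P x = (l x) ^ 3) ∧
    ((¬ ∃ l : (Fin N → ℝ) →ₗ[ℝ] ℝ, ∀ x, P x = (l x) ^ 3) ↔
      ¬ ∃ B : (Fin N → ℝ) → (Fin N → ℝ) → ℝ, ∀ x, ∃ c : ℝ,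
        ∀ y z, 6 * T x y z = c * B y z) :=
  scalar_cubic_regular_zero_tfae_general N P T hsym hP
end

section
/- The quadratic map Q : ℝ² → ℝ², Q(x₁,x₂) = (x₁² − x₂², 2x₁x₂), has no nontrivial zeros (in particular no regular zeros), but Q is an open map. -/
/-! Under `ℂ ≃ ℝ × ℝ` the map `Q` is `z ↦ z ^ 2`: it vanishes only at `0` because `ℂ` is a field,
and it is open by the open mapping theorem for the nonconstant entire function `z ↦ z ^ 2`. -/

open Complex

theorem Complex.isOpenMap_pow {n : ℕ} (hn : n ≠ 0) : IsOpenMap fun z : ℂ => z ^ n := by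
  refine ((analyticOnNhd_id.pow n).is_constant_or_isOpenMap).resolve_left ?_
  rintro ⟨w, hw⟩
  have h0 := hw 0
  have h1 := hw 1
  simp only [Pi.pow_apply, zero_pow hn, one_pow] at h0 h1
  exact one_ne_zero (h1.trans h0.symm)

theorem Complex.equivRealProdCLM_sq (z : ℂ) :
    equivRealProdCLM (z ^ 2) = (z.re ^ 2 - z.im ^ 2, 2 * z.re * z.im) :=
  Prod.ext (by simp [pow_two]) (by simp [pow_two]; ring)

theorem Complex.equivRealProdCLM_sq_symm (v : ℝ × ℝ) :
    (v.1 ^ 2 - v.2 ^ 2, 2 * v.1 * v.2) = equivRealProdCLM ((equivRealProdCLM.symm v) ^ 2) := by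
  rw [equivRealProdCLM_sq, equivRealProdCLM_symm_apply]
  simp

/-- the quadratic map `Q(x₁,x₂) = (x₁² − x₂², 2x₁x₂)` has no
nontrivial zeros, but it is an open map. -/
theorem quadratic_no_zero_but_open :
    (∀ v : ℝ × ℝ, (v.1 ^ 2 - v.2 ^ 2, 2 * v.1 * v.2) = (0, 0) → v = 0) ∧
    IsOpenMap (fun v : ℝ × ℝ => (v.1 ^ 2 - v.2 ^ 2, 2 * v.1 * v.2)) := by
  simp only [equivRealProdCLM_sq_symm]
  constructor
  · intro v hv
    have hsq : (equivRealProdCLM.symm v) ^ 2 = 0 :=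
      equivRealProdCLM.map_eq_zero_iff.mp (hv.trans Prod.mk_zero_zero)
    exact equivRealProdCLM.symm.map_eq_zero_iff.mp ((pow_eq_zero_iff two_ne_zero).mp hsq)
  · let e := equivRealProdCLM.toHomeomorph
    exact e.isOpenMap.comp ((isOpenMap_pow two_ne_zero).comp e.symm.isOpenMap)
end

section
/- Let X be a Banach space, F : U ⊂ X → ℝ^m smooth with F(0)=0, and suppose 0 is a corank-one critical point of F (i.e., Im(d₀F) has codimension one in ℝ^m). If there exists v ∈ ker(d₀F) with d₀²F(v,x) ∈ Im(d₀F) for all x ∈ X and d₀³F(v,v,v) ∉ Im(d₀F), then F is open at the origin. -/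
open Filter Set

lemma mvt_step {ψ ψd : ℝ → ℝ} {δ t : ℝ}
    (hd : ∀ u ∈ Metric.ball (0:ℝ) δ, HasDerivAt ψ (ψd u) u)
    (h0 : ψ 0 = 0) (ht : t ≠ 0) (h : |t| < δ) :
    ∃ ξ, |ξ| < |t| ∧ 0 < ξ * t ∧ ψ t = ψd ξ * t := by
  have hball : ∀ u : ℝ, |u| ≤ |t| → u ∈ Metric.ball (0:ℝ) δ := fun u hu => by
    simp only [Metric.mem_ball, Real.dist_eq, sub_zero]; exact lt_of_le_of_lt hu h
  rcases lt_or_gt_of_ne ht with htneg | htpos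
  · have habs : ∀ u ∈ Icc t 0, |u| ≤ |t| := fun u hu => by
      rw [abs_of_nonpos hu.2, abs_of_nonpos htneg.le]; linarith [hu.1]
    have hcont : ContinuousOn ψ (Icc t 0) := fun u hu =>
      ((hd u (hball u (habs u hu))).continuousAt).continuousWithinAt
    obtain ⟨ξ, hξ, hval⟩ := exists_hasDerivAt_eq_slope ψ ψd htneg hcont
      (fun u hu => hd u (hball u (habs u (Ioo_subset_Icc_self hu))))
    refine ⟨ξ, ?_, mul_pos_of_neg_of_neg hξ.2 htneg, ?_⟩
    · rw [abs_of_nonpos hξ.2.le, abs_of_nonpos htneg.le]; linarith [hξ.1]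
    · have hval' : ψ 0 - ψ t = ψd ξ * (0 - t) :=
        (div_eq_iff (sub_ne_zero.mpr (Ne.symm ht))).mp hval.symm
      rw [h0] at hval'
      linear_combination -hval'
  · have habs : ∀ u ∈ Icc 0 t, |u| ≤ |t| := fun u hu => by
      rw [abs_of_nonneg hu.1, abs_of_nonneg htpos.le]; linarith [hu.2]
    have hcont : ContinuousOn ψ (Icc 0 t) := fun u hu =>
      ((hd u (hball u (habs u hu))).continuousAt).continuousWithinAt
    obtain ⟨ξ, hξ, hval⟩ := exists_hasDerivAt_eq_slope ψ ψd htpos hcont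
      (fun u hu => hd u (hball u (habs u (Ioo_subset_Icc_self hu))))
    refine ⟨ξ, ?_, mul_pos hξ.1 htpos, ?_⟩
    · rw [abs_of_nonneg hξ.1.le, abs_of_nonneg htpos.le]; linarith [hξ.2]
    · have hval' : ψ t - ψ 0 = ψd ξ * (t - 0) :=
        (div_eq_iff (sub_ne_zero.mpr ht)).mp hval.symm
      rw [h0] at hval'
      linear_combination hval'

lemma cubic_sign {φ φ1 φ2 φ3 : ℝ → ℝ} {ε : ℝ} (hε : 0 < ε)
    (h1 : ∀ t ∈ Metric.ball (0:ℝ) ε, HasDerivAt φ (φ1 t) t)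
    (h2 : ∀ t ∈ Metric.ball (0:ℝ) ε, HasDerivAt φ1 (φ2 t) t)
    (h3 : ∀ t ∈ Metric.ball (0:ℝ) ε, HasDerivAt φ2 (φ3 t) t)
    (hp0 : φ 0 = 0) (hp10 : φ1 0 = 0) (hp20 : φ2 0 = 0)
    (hc : ContinuousAt φ3 0) (hc0 : φ3 0 ≠ 0) :
    ∃ δ, 0 < δ ∧ δ < ε ∧ ∀ t, t ≠ 0 → |t| < δ → 0 < φ t * t * φ3 0 := by
  have hmem : {u | 0 < φ3 u * φ3 0} ∈ nhds (0:ℝ) := by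
    have hca : ContinuousAt (fun u => φ3 u * φ3 0) 0 := hc.mul continuousAt_const
    have hpos : (0:ℝ) < φ3 0 * φ3 0 := mul_self_pos.mpr hc0
    exact hca.preimage_mem_nhds (isOpen_Ioi.mem_nhds hpos)
  obtain ⟨δ0, hδ0, hsub⟩ := Metric.mem_nhds_iff.1 hmem
  set δ : ℝ := min (δ0 / 2) (ε / 2) with hδdef
  have hδpos : 0 < δ := lt_min (by linarith) (by linarith)
  have hδε : δ < ε := lt_of_le_of_lt (min_le_right _ _) (by linarith)
  have hsign : ∀ u : ℝ, |u| < δ → 0 < φ3 u * φ3 0 := by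
    intro u hu
    apply hsub
    simp only [Metric.mem_ball, Real.dist_eq, sub_zero]
    exact lt_of_lt_of_le hu (le_trans (min_le_left _ _) (by linarith))
  have hballsub : Metric.ball (0:ℝ) δ ⊆ Metric.ball (0:ℝ) ε := Metric.ball_subset_ball hδε.le
  have s2 : ∀ t : ℝ, t ≠ 0 → |t| < δ → 0 < φ2 t * t * φ3 0 := by
    intro t ht htδ
    obtain ⟨ξ, hξ1, hξ2, hval⟩ := mvt_step (fun u hu => h3 u (hballsub hu)) hp20 ht htδ
    rw [hval]
    nlinarith [hsign ξ (lt_trans hξ1 htδ), mul_self_pos.mpr ht]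
  have s1 : ∀ t : ℝ, t ≠ 0 → |t| < δ → 0 < φ1 t * φ3 0 := by
    intro t ht htδ
    obtain ⟨ξ, hξ1, hξ2, hval⟩ := mvt_step (fun u hu => h2 u (hballsub hu)) hp10 ht htδ
    have hξne : ξ ≠ 0 := by rintro rfl; simp at hξ2
    have hs := s2 ξ hξne (lt_trans hξ1 htδ)
    rw [hval]
    nlinarith [mul_pos hs hξ2, mul_self_pos.mpr hξne]
  refine ⟨δ, hδpos, hδε, fun t ht htδ => ?_⟩
  obtain ⟨ξ, hξ1, hξ2, hval⟩ := mvt_step (fun u hu => h1 u (hballsub hu)) hp0 ht htδ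
  have hξne : ξ ≠ 0 := by rintro rfl; simp at hξ2
  have hs := s1 ξ hξne (lt_trans hξ1 htδ)
  rw [hval]
  nlinarith [mul_pos hs (mul_self_pos.mpr ht)]

lemma itfd_three_apply {E F' : Type*} [NormedAddCommGroup E] [NormedSpace ℝ E]
    [NormedAddCommGroup F'] [NormedSpace ℝ F'] (f : E → F') (z a b c : E) :
    iteratedFDeriv ℝ 3 f z ![a, b, c] =
      fderiv ℝ (fderiv ℝ (fderiv ℝ f)) z a b c := by
  rw [iteratedFDeriv_succ_apply_right, iteratedFDeriv_two_apply]
  norm_num [Fin.init, Fin.last]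

set_option maxHeartbeats 4000000 in
set_option synthInstance.maxHeartbeats 400000 in
/-- third order open mapping theorem at a corank-one critical
point: if `v ∈ ker d₀F`, `d₀²F(v,x) ∈ Im d₀F` for all `x`, and
`d₀³F(v,v,v) ∉ Im d₀F`, then `F` is open at the origin. -/
theorem third_order_open_mapping_corank_one
    {X : Type*} [NormedAddCommGroup X] [NormedSpace ℝ X]
    (m : ℕ) (U : Set X) (hU : IsOpen U) (h0U : (0 : X) ∈ U)
    (F : X → (Fin m → ℝ)) (hF : ContDiffOn ℝ (⊤ : ℕ∞) F U) (hF0 : F 0 = 0)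
    (hcorank : Module.finrank ℝ ((Fin m → ℝ) ⧸ LinearMap.range (fderiv ℝ F 0 : X →ₗ[ℝ] (Fin m → ℝ))) = 1)
    (v : X) (hv : fderiv ℝ F 0 v = 0)
    (hdom : ∀ x : X, iteratedFDeriv ℝ 2 F 0 ![v, x] ∈ LinearMap.range (fderiv ℝ F 0 : X →ₗ[ℝ] (Fin m → ℝ)))
    (hthird : iteratedFDeriv ℝ 3 F 0 ![v, v, v] ∉ LinearMap.range (fderiv ℝ F 0 : X →ₗ[ℝ] (Fin m → ℝ))) :
    ∀ s ∈ nhds (0 : X), F '' s ∈ nhds (0 : Fin m → ℝ) := by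
  classical
  intro s hs
  have hF4 : ContDiffOn ℝ 4 F U := hF.of_le (WithTop.coe_le_coe.mpr le_top)
  have hFc : ContDiffAt ℝ 4 F 0 := hF4.contDiffAt (hU.mem_nhds h0U)
  have hLd : HasFDerivAt F (fderiv ℝ F 0) 0 :=
    (hFc.differentiableAt (by norm_num)).hasFDerivAt
  set L : X →L[ℝ] (Fin m → ℝ) := fderiv ℝ F 0 with hLdef
  set R : Submodule ℝ (Fin m → ℝ) := LinearMap.range (L : X →ₗ[ℝ] (Fin m → ℝ)) with hRdef
  -- the functional lam with kernel R
  have hrank1 : Module.finrank ℝ ((Fin m → ℝ) ⧸ R) = Module.finrank ℝ ℝ := by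
    rw [hcorank, Module.finrank_self]
  let eQ : ((Fin m → ℝ) ⧸ R) ≃ₗ[ℝ] ℝ := LinearEquiv.ofFinrankEq _ _ hrank1
  let lam : (Fin m → ℝ) →L[ℝ] ℝ :=
    LinearMap.toContinuousLinearMap (eQ.toLinearMap ∘ₗ R.mkQ)
  have hlam_mem : ∀ z, lam z = 0 ↔ z ∈ R := by
    intro z
    show eQ (R.mkQ z) = 0 ↔ z ∈ R
    rw [LinearEquiv.map_eq_zero_iff]
    exact Submodule.Quotient.mk_eq_zero R
  have hlamL : ∀ x : X, lam (L x) = 0 := fun x => (hlam_mem _).mpr ⟨x, rfl⟩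
  obtain ⟨w, hw⟩ : ∃ w, lam w = 1 := by
    obtain ⟨w, hw⟩ := Submodule.Quotient.mk_surjective R (eQ.symm 1)
    refine ⟨w, ?_⟩
    show eQ (R.mkQ w) = 1
    rw [show R.mkQ w = Submodule.Quotient.mk w from rfl, hw]
    simp
  -- right inverse u of L on R
  obtain ⟨u0, hu0⟩ := LinearMap.exists_rightInverse_of_surjective
    ((L : X →ₗ[ℝ] (Fin m → ℝ)).rangeRestrict) (LinearMap.range_rangeRestrict _)
  have hu0' : ∀ y : R, L (u0 y) = (y : Fin m → ℝ) := by
    intro y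
    exact congrArg Subtype.val (LinearMap.congr_fun hu0 y)
  let u : R →L[ℝ] X := LinearMap.toContinuousLinearMap u0
  have hu : ∀ y : R, L (u y) = (y : Fin m → ℝ) := hu0'
  -- projection pi onto R
  let P : (Fin m → ℝ) →L[ℝ] (Fin m → ℝ) :=
    ContinuousLinearMap.id ℝ _ - lam.smulRight w
  have hPmem : ∀ z, P z ∈ R := by
    intro z
    rw [← hlam_mem]
    show lam (z - lam z • w) = 0
    rw [map_sub, map_smul, hw]
    simp
  let pi : (Fin m → ℝ) →L[ℝ] R := P.codRestrict R hPmem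
  have hpi_apply : ∀ z, (pi z : Fin m → ℝ) = z - lam z • w := fun z => rfl
  have hpiR : ∀ y : R, pi (y : Fin m → ℝ) = y := by
    intro y
    apply Subtype.ext
    rw [hpi_apply, (hlam_mem _).mpr y.2]
    simp
  -- the affine parametrization
  let al : (ℝ × R) →L[ℝ] X :=
    (ContinuousLinearMap.fst ℝ ℝ R).smulRight v + u.comp (ContinuousLinearMap.snd ℝ ℝ R)
  have hal : ∀ p : ℝ × R, al p = p.1 • v + u p.2 := fun p => rfl
  have hal0 : al (0, 0) = 0 := by rw [hal]; simp
  -- the map Psi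
  set Psi : ℝ × R → ℝ × R := fun p => (p.1, pi (F (al p))) with hPsidef
  have hPsi0 : Psi (0, 0) = (0, 0) := by
    simp only [hPsidef, hal0, hF0, map_zero]
  have hPsiC : ContDiffAt ℝ 4 Psi (0, 0) := by
    apply ContDiffAt.prodMk
    · exact contDiffAt_fst
    · have h1 : ContDiffAt ℝ 4 F (al (0, 0)) := by rw [hal0]; exact hFc
      exact (pi.contDiff.contDiffAt).comp _ (h1.comp _ al.contDiff.contDiffAt)
  have hPsiD : HasFDerivAt Psi
      (((ContinuousLinearEquiv.refl ℝ (ℝ × R)) : (ℝ × R) ≃L[ℝ] (ℝ × R)) :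
        (ℝ × R) →L[ℝ] (ℝ × R)) (0, 0) := by
    have h2 : HasFDerivAt (fun p : ℝ × R => pi (F (al p)))
        ((pi.comp L).comp al) (0, 0) := by
      have hF' : HasFDerivAt F L (al (0, 0)) := by rw [hal0]; exact hLd
      exact pi.hasFDerivAt.comp _ (hF'.comp _ al.hasFDerivAt)
    have h3 := ((ContinuousLinearMap.fst ℝ ℝ R).hasFDerivAt (x := ((0:ℝ), (0:R)))).prodMk h2
    have heq : (ContinuousLinearMap.fst ℝ ℝ R).prod ((pi.comp L).comp al) =
        (((ContinuousLinearEquiv.refl ℝ (ℝ × R)) : (ℝ × R) ≃L[ℝ] (ℝ × R)) :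
          (ℝ × R) →L[ℝ] (ℝ × R)) := by
      apply ContinuousLinearMap.ext
      intro p
      have hcomp : pi (L (al p)) = p.2 := by
        rw [hal, map_add, map_smul, hv, smul_zero, zero_add, hu, hpiR]
      show (p.1, pi (L (al p))) = p
      rw [hcomp]
    rw [← heq]
    exact h3
    -- local inverse
  have hn1 : (4 : WithTop ℕ∞) ≠ 0 := by norm_num
  haveI : CompleteSpace R := FiniteDimensional.complete ℝ R
  set g : ℝ × R → ℝ × R := hPsiC.localInverse hPsiD hn1 with hgdef
  have hstrict := hPsiC.hasStrictFDerivAt' hPsiD hn1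
  have hgeq : g = hstrict.localInverse Psi _ (0, 0) := rfl
  have hg0 : g (0, 0) = (0, 0) := by
    have h := hPsiC.localInverse_apply_image hPsiD hn1
    rwa [← hgdef, hPsi0] at h
  have hgC : ContDiffAt ℝ 4 g (0, 0) := by
    have h := hPsiC.to_localInverse hPsiD hn1
    rwa [← hgdef, hPsi0] at h
  have hgD : HasFDerivAt g (ContinuousLinearMap.id ℝ (ℝ × R)) (0, 0) := by
    have h := hstrict.to_localInverse.hasFDerivAt
    rw [← hgeq, hPsi0] at h
    simpa using h
  have hright : ∀ᶠ p in nhds ((0, 0) : ℝ × R), Psi (g p) = p := by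
    have h := hstrict.eventually_right_inverse
    rw [hPsi0] at h
    rw [hgeq]
    exact h
  -- sigma and the scalar component
  set sig : ℝ × R → X := fun p => al (g p) with hsigdef
  have hsig0 : sig (0, 0) = 0 := by rw [hsigdef]; simp only [hg0, hal0]
  set hfun : ℝ × R → ℝ := fun p => lam (F (sig p)) with hhfundef
  have hdecomp : ∀ p : ℝ × R, Psi (g p) = p →
      F (sig p) = (p.2 : Fin m → ℝ) + hfun p • w := by
    intro p hp
    have h2 : pi (F (sig p)) = p.2 := congrArg Prod.snd hp
    have h3 := congrArg Subtype.val h2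
    rw [hpi_apply] at h3
    rw [← h3]
    show F (sig p) = F (sig p) - lam (F (sig p)) • w + lam (F (sig p)) • w
    abel
  -- the curve gamma
  set gam : ℝ → X := fun t => sig (t, 0) with hgamdef
  have hgam0 : gam 0 = 0 := hsig0
  have hgamC : ContDiffAt ℝ 4 gam 0 := by
    have h1 : ContDiffAt ℝ 4 sig (0, 0) := al.contDiff.contDiffAt.comp _ hgC
    have h2 : ContDiffAt ℝ 4 (fun t : ℝ => ((t, 0) : ℝ × R)) 0 :=
      (ContinuousLinearMap.inl ℝ ℝ R).contDiff.contDiffAt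
    exact ContDiffAt.comp (g := sig) (f := fun t : ℝ => ((t, 0) : ℝ × R)) 0 h1 h2
  have hgamD : HasDerivAt gam v 0 := by
    have h1 : HasDerivAt (fun t : ℝ => ((t, 0) : ℝ × R)) ((1 : ℝ), (0 : R)) 0 :=
      (hasDerivAt_id 0).prodMk (hasDerivAt_const 0 0)
    have h2 : HasDerivAt (fun t : ℝ => g (t, 0)) ((1 : ℝ), (0 : R)) 0 := by
      have h := hgD.comp_hasDerivAt 0 h1
      exact h
    have h3 := al.hasFDerivAt.comp_hasDerivAt 0 h2
    have : al ((1 : ℝ), (0 : R)) = v := by rw [hal]; simp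
    rw [this] at h3
    exact h3
    -- the scalar function f = lam ∘ F and its derivatives
  set f : X → ℝ := fun x => lam (F x) with hfdef
  have hfC : ContDiffOn ℝ 4 f U := lam.contDiff.comp_contDiffOn hF4
  set f1 : X → X →L[ℝ] ℝ := fderiv ℝ f with hf1def
  set f2 : X → (X →L[ℝ] (X →L[ℝ] ℝ)) := fderiv ℝ f1 with hf2def
  set f3 : X → (X →L[ℝ] (X →L[ℝ] (X →L[ℝ] ℝ))) := fderiv ℝ f2 with hf3def
  have hf1C : ContDiffOn ℝ 3 f1 U := hfC.fderiv_of_isOpen hU (by norm_num)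
  have hf2C : ContDiffOn ℝ 2 f2 U := hf1C.fderiv_of_isOpen hU (by norm_num)
  have hf1d : ∀ x ∈ U, HasFDerivAt f (f1 x) x := fun x hx =>
    ((hfC.differentiableOn (by norm_num) x hx).differentiableAt (hU.mem_nhds hx)).hasFDerivAt
  have hf2d : ∀ x ∈ U, HasFDerivAt f1 (f2 x) x := fun x hx =>
    ((hf1C.differentiableOn (by norm_num) x hx).differentiableAt (hU.mem_nhds hx)).hasFDerivAt
  have hf3d : ∀ x ∈ U, HasFDerivAt f2 (f3 x) x := fun x hx =>
    ((hf2C.differentiableOn (by norm_num) x hx).differentiableAt (hU.mem_nhds hx)).hasFDerivAt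
  -- values at 0
  have hf10 : f1 0 = 0 := by
    have h : HasFDerivAt f (lam.comp L) 0 := lam.hasFDerivAt.comp 0 hLd
    rw [hf1def, h.fderiv]
    apply ContinuousLinearMap.ext
    intro x
    show lam (L x) = 0
    exact hlamL x
  -- iterated derivatives of f vs F
  have hIT : ∀ i : ℕ, (i : WithTop ℕ∞) ≤ 4 → ∀ mm : Fin i → X,
      iteratedFDeriv ℝ i f 0 mm = lam (iteratedFDeriv ℝ i F 0 mm) := by
    intro i hi mm
    have h1 := lam.iteratedFDerivWithin_comp_left (hF4 0 h0U) hU.uniqueDiffOn h0U hi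
    have h2 := iteratedFDerivWithin_of_isOpen (𝕜 := ℝ) (f := f) i hU h0U
    have h3 := iteratedFDerivWithin_of_isOpen (𝕜 := ℝ) (f := F) i hU h0U
    calc iteratedFDeriv ℝ i f 0 mm = iteratedFDerivWithin ℝ i f U 0 mm := by rw [h2]
      _ = lam (iteratedFDerivWithin ℝ i F U 0 mm) := by
          rw [show f = ⇑lam ∘ F from rfl] at *
          rw [h1]
          rfl
      _ = lam (iteratedFDeriv ℝ i F 0 mm) := by rw [h3]
  have hf20 : ∀ x : X, f2 0 v x = 0 := by
    intro x
    have h1 := iteratedFDeriv_two_apply (𝕜 := ℝ) f 0 ![v, x]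
    have h2 := hIT 2 (by norm_num) ![v, x]
    have h3 : lam (iteratedFDeriv ℝ 2 F 0 ![v, x]) = 0 := (hlam_mem _).mpr (hdom x)
    have : iteratedFDeriv ℝ 2 f 0 ![v, x] = f2 0 v x := by
      rw [h1]; rfl
    rw [← this, h2, h3]
  have hsymm : ∀ a b : X, f2 0 a b = f2 0 b a := by
    intro a b
    apply second_derivative_symmetric_of_eventually_of_real (f := f) (f' := f1) (x := 0)
    · filter_upwards [hU.mem_nhds h0U] with x hx using hf1d x hx
    · exact hf2d 0 h0U
  have hf30 : f3 0 v v v ≠ 0 := by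
    have h1 := itfd_three_apply f 0 v v v
    have h2 := hIT 3 (by norm_num) ![v, v, v]
    have h3 : lam (iteratedFDeriv ℝ 3 F 0 ![v, v, v]) ≠ 0 := by
      intro hcon
      exact hthird ((hlam_mem _).mp hcon)
    rw [← hf1def, ← hf2def, ← hf3def] at h1
    intro hcon
    apply h3
    rw [← h2, h1]
    exact hcon
    -- a good open neighborhood W2 of 0 in ℝ
  obtain ⟨W0, hW0n, hgamW0⟩ := hgamC.contDiffOn (le_refl 4) (by norm_num)
  have h0W1 : (0 : ℝ) ∈ interior W0 := mem_interior_iff_mem_nhds.mpr hW0n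
  have hgamW1 : ContDiffOn ℝ 4 gam (interior W0) := hgamW0.mono interior_subset
  have hgamcont : ContinuousOn gam (interior W0) :=
    hgamW1.continuousOn
  set W2 : Set ℝ := interior W0 ∩ gam ⁻¹' U with hW2def
  have hW2open : IsOpen W2 := hgamcont.isOpen_inter_preimage isOpen_interior hU
  have h0W2 : (0 : ℝ) ∈ W2 := ⟨h0W1, by rw [mem_preimage, hgam0]; exact h0U⟩
  have hgamW2 : ContDiffOn ℝ 4 gam W2 := hgamW1.mono inter_subset_left
  have hgamU : ∀ t ∈ W2, gam t ∈ U := fun t ht => ht.2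
  -- derivatives of gam
  set g1 : ℝ → X := deriv gam with hg1def
  set g2 : ℝ → X := deriv g1 with hg2def
  have hg1d : ∀ t ∈ W2, HasDerivAt gam (g1 t) t := fun t ht =>
    ((hgamW2.differentiableOn (by norm_num) t ht).differentiableAt
      (hW2open.mem_nhds ht)).hasDerivAt
  have hg1C : ContDiffOn ℝ 3 g1 W2 := hgamW2.deriv_of_isOpen hW2open (by norm_num)
  have hg2d : ∀ t ∈ W2, HasDerivAt g1 (g2 t) t := fun t ht =>
    ((hg1C.differentiableOn (by norm_num) t ht).differentiableAt
      (hW2open.mem_nhds ht)).hasDerivAt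
  have hg2C : ContDiffOn ℝ 2 g2 W2 := hg1C.deriv_of_isOpen hW2open (by norm_num)
  have hg3d : HasDerivAt g2 (deriv g2 0) 0 :=
    ((hg2C.differentiableOn (by norm_num) 0 h0W2).differentiableAt
      (hW2open.mem_nhds h0W2)).hasDerivAt
  have hg10 : g1 0 = v := hgamD.deriv
  -- phi and its derivatives
  set phi : ℝ → ℝ := fun t => f (gam t) with hphidef
  have hphiC : ContDiffOn ℝ 4 phi W2 := hfC.comp hgamW2 hgamU
  set p1 : ℝ → ℝ := deriv phi with hp1def
  set p2 : ℝ → ℝ := deriv p1 with hp2def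
  set p3 : ℝ → ℝ := deriv p2 with hp3def
  have hp1d : ∀ t ∈ W2, HasDerivAt phi (p1 t) t := fun t ht =>
    ((hphiC.differentiableOn (by norm_num) t ht).differentiableAt
      (hW2open.mem_nhds ht)).hasDerivAt
  have hp1C : ContDiffOn ℝ 3 p1 W2 := hphiC.deriv_of_isOpen hW2open (by norm_num)
  have hp2d : ∀ t ∈ W2, HasDerivAt p1 (p2 t) t := fun t ht =>
    ((hp1C.differentiableOn (by norm_num) t ht).differentiableAt
      (hW2open.mem_nhds ht)).hasDerivAt
  have hp2C : ContDiffOn ℝ 2 p2 W2 := hp1C.deriv_of_isOpen hW2open (by norm_num)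
  have hp3d : ∀ t ∈ W2, HasDerivAt p2 (p3 t) t := fun t ht =>
    ((hp2C.differentiableOn (by norm_num) t ht).differentiableAt
      (hW2open.mem_nhds ht)).hasDerivAt
  have hp3C : ContDiffOn ℝ 1 p3 W2 := hp2C.deriv_of_isOpen hW2open (by norm_num)
  have hp3cont : ContinuousAt p3 0 :=
    (hp3C.continuousOn).continuousAt (hW2open.mem_nhds h0W2)
  -- first-order formula
  have hE1 : ∀ t ∈ W2, HasDerivAt phi (f1 (gam t) (g1 t)) t := fun t ht =>
    (hf1d (gam t) (hgamU t ht)).comp_hasDerivAt t (hg1d t ht)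
  have hp1eq : ∀ t ∈ W2, p1 t = f1 (gam t) (g1 t) := fun t ht => (hE1 t ht).deriv
  -- second-order formula
  have hE2 : ∀ t ∈ W2, HasDerivAt (fun τ => f1 (gam τ) (g1 τ))
      (f2 (gam t) (g1 t) (g1 t) + f1 (gam t) (g2 t)) t := by
    intro t ht
    have hA : HasDerivAt (fun τ => f1 (gam τ)) (f2 (gam t) (g1 t)) t :=
      (hf2d (gam t) (hgamU t ht)).comp_hasDerivAt t (hg1d t ht)
    exact hA.clm_apply (hg2d t ht)
  have hp2eq : ∀ t ∈ W2, p2 t = f2 (gam t) (g1 t) (g1 t) + f1 (gam t) (g2 t) := by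
    intro t ht
    have heq : p1 =ᶠ[nhds t] fun τ => f1 (gam τ) (g1 τ) := by
      filter_upwards [hW2open.mem_nhds ht] with τ hτ using hp1eq τ hτ
    rw [hp2def, heq.deriv_eq]
    exact (hE2 t ht).deriv
  -- third-order value at 0
  have hB : HasDerivAt (fun τ => f2 (gam τ)) (f3 0 v) 0 := by
    have h := HasFDerivAt.comp_hasDerivAt (l := f2) 0 (hf3d (gam 0) (hgamU 0 h0W2)) (hg1d 0 h0W2)
    rwa [hgam0, hg10] at h
  have hterm1a : HasDerivAt (fun τ => f2 (gam τ) (g1 τ))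
      (f3 0 v v + f2 0 (g2 0)) 0 := by
    have h := hB.clm_apply (hg2d 0 h0W2)
    rwa [hgam0, hg10] at h
  have hterm1 : HasDerivAt (fun τ => f2 (gam τ) (g1 τ) (g1 τ))
      ((f3 0 v v + f2 0 (g2 0)) v + f2 0 v (g2 0)) 0 := by
    have h := hterm1a.clm_apply (hg2d 0 h0W2)
    rwa [hgam0, hg10] at h
  have hterm2 : HasDerivAt (fun τ => f1 (gam τ) (g2 τ))
      (f2 0 v (g2 0) + f1 0 (deriv g2 0)) 0 := by
    have hA : HasDerivAt (fun τ => f1 (gam τ)) (f2 0 v) 0 := by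
      have h := (hf2d (gam 0) (hgamU 0 h0W2)).comp_hasDerivAt 0 (hg1d 0 h0W2)
      rwa [hgam0, hg10] at h
    have h := hA.clm_apply hg3d
    rwa [hgam0] at h
  have hE3 : HasDerivAt (fun τ => f2 (gam τ) (g1 τ) (g1 τ) + f1 (gam τ) (g2 τ))
      ((f3 0 v v + f2 0 (g2 0)) v + f2 0 v (g2 0) +
        (f2 0 v (g2 0) + f1 0 (deriv g2 0))) 0 := hterm1.add hterm2
  have hzero1 : f2 0 (g2 0) v = 0 := by rw [hsymm]; exact hf20 _
  have hp30 : p3 0 = f3 0 v v v := by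
    have heq : p2 =ᶠ[nhds 0] fun τ => f2 (gam τ) (g1 τ) (g1 τ) + f1 (gam τ) (g2 τ) := by
      filter_upwards [hW2open.mem_nhds h0W2] with τ hτ using hp2eq τ hτ
    rw [hp3def, heq.deriv_eq, hE3.deriv]
    rw [ContinuousLinearMap.add_apply, hzero1, hf20 (g2 0), hf10]
    simp
  -- values at 0
  have hphi0 : phi 0 = 0 := by
    rw [hphidef]
    show f (gam 0) = 0
    rw [hgam0, hfdef]
    show lam (F 0) = 0
    rw [hF0, map_zero]
  have hp10 : p1 0 = 0 := by
    rw [hp1eq 0 h0W2, hgam0, hg10, hf10]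
    simp
  have hp20 : p2 0 = 0 := by
    rw [hp2eq 0 h0W2, hgam0, hg10, hf20 v, hf10]
    simp
    -- neighborhood bookkeeping for the endgame
  obtain ⟨ρ, hρpos, hρsub⟩ := Metric.mem_nhds_iff.1 hs
  obtain ⟨Vg, hVgn, hgVg⟩ := hgC.contDiffOn (le_refl 4) (by norm_num)
  have hgcont : ContinuousOn g (interior Vg) := (hgVg.mono interior_subset).continuousOn
  have hsigcont : ContinuousOn sig (interior Vg) := al.continuous.comp_continuousOn hgcont
  set Nopen : Set (ℝ × R) := interior Vg ∩ sig ⁻¹' (U ∩ Metric.ball (0 : X) ρ) with hNopendef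
  have hNopen_open : IsOpen Nopen :=
    hsigcont.isOpen_inter_preimage isOpen_interior (hU.inter Metric.isOpen_ball)
  have h0Nopen : ((0, 0) : ℝ × R) ∈ Nopen := by
    constructor
    · exact mem_interior_iff_mem_nhds.mpr hVgn
    · rw [mem_preimage, hsig0]
      exact ⟨h0U, Metric.mem_ball_self hρpos⟩
  have hNmem : Nopen ∩ {p | Psi (g p) = p} ∈ nhds ((0, 0) : ℝ × R) :=
    inter_mem (hNopen_open.mem_nhds h0Nopen) hright
  obtain ⟨r, hrpos, hrsub⟩ := Metric.mem_nhds_iff.1 hNmem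
  have hhcont : ∀ p ∈ Nopen, ContinuousAt hfun p := by
    intro p hp
    have h1 : ContinuousAt sig p := hsigcont.continuousAt (isOpen_interior.mem_nhds hp.1)
    have h2 : ContinuousAt F (sig p) :=
      hF4.continuousOn.continuousAt (hU.mem_nhds hp.2.1)
    exact lam.continuous.continuousAt.comp (h2.comp h1)
  -- run the sign analysis
  obtain ⟨ε0, hε0pos, hε0sub⟩ := Metric.mem_nhds_iff.1 (hW2open.mem_nhds h0W2)
  set ε : ℝ := min ε0 r with hεdef
  have hεpos : 0 < ε := lt_min hε0pos hrpos
  have hεW2 : Metric.ball (0 : ℝ) ε ⊆ W2 :=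
    (Metric.ball_subset_ball (min_le_left _ _)).trans hε0sub
  have hεr : ε ≤ r := min_le_right _ _
  obtain ⟨δ, hδpos, hδε, hsigns⟩ := cubic_sign hεpos
    (fun t ht => hp1d t (hεW2 ht)) (fun t ht => hp2d t (hεW2 ht))
    (fun t ht => hp3d t (hεW2 ht)) hphi0 hp10 hp20 hp3cont
    (by rw [hp30]; exact hf30)
  set tp : ℝ := δ / 2 with htpdef
  set tm : ℝ := -(δ / 2) with htmdef
  have htp_pos : 0 < tp := by rw [htpdef]; linarith
  have htm_neg : tm < 0 := by rw [htmdef]; linarith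
  set c : ℝ := p3 0 with hcdef
  have hc0 : c ≠ 0 := by rw [hp30]; exact hf30
  have hsp : 0 < phi tp * tp * c := hsigns tp (ne_of_gt htp_pos)
    (by rw [abs_of_pos htp_pos]; rw [htpdef]; linarith)
  have hsm : 0 < phi tm * tm * c := hsigns tm (ne_of_lt htm_neg)
    (by rw [abs_of_neg htm_neg]; rw [htmdef]; simp; linarith)
  set a : ℝ := phi tp with hadef
  set b : ℝ := phi tm with hbdef
  have ha0 : a ≠ 0 := by
    intro h; rw [h] at hsp; simp at hsp
  have hb0 : b ≠ 0 := by
    intro h; rw [h] at hsm; simp at hsm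
  set q : ℝ := min (|a| / 2) (|b| / 2) with hqdef
  have hqpos : 0 < q :=
    lt_min (half_pos (abs_pos.mpr ha0)) (half_pos (abs_pos.mpr hb0))
  have hqa : q ≤ |a| / 2 := min_le_left _ _
  have hqb : q ≤ |b| / 2 := min_le_right _ _
  clear_value tp tm c a b q
  -- membership of parameters in the good ball
  have hmemball : ∀ (t : ℝ) (y : R), |t| ≤ δ / 2 → ‖y‖ < r →
      ((t, y) : ℝ × R) ∈ Metric.ball ((0, 0) : ℝ × R) r := by
    intro t y h1 h2
    rw [Metric.mem_ball, Prod.dist_eq]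
    have hd1 : dist t 0 < r := by
      rw [Real.dist_eq, sub_zero]
      have : δ < r := lt_of_lt_of_le hδε hεr
      linarith
    have hd2 : dist y 0 < r := by rwa [dist_zero_right]
    exact max_lt hd1 hd2
  -- phi t = hfun (t, 0)
  have hphi_hfun : ∀ t : ℝ, phi t = hfun (t, 0) := fun t => rfl
  -- continuity in y at the two endpoints
  have hkp : ContinuousAt (fun y : R => hfun (tp, y)) 0 := by
    have hmem : ((tp, (0 : R)) : ℝ × R) ∈ Nopen :=
      (hrsub (hmemball tp 0 (by rw [abs_of_pos htp_pos, htpdef]) (by simpa using hrpos))).1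
    have hf : ContinuousAt (fun y : ↥R => ((tp, y) : ℝ × ↥R)) 0 :=
      (continuous_const.prodMk continuous_id).continuousAt
    exact ContinuousAt.comp (g := hfun) (f := fun y : ↥R => ((tp, y) : ℝ × ↥R))
      (hhcont _ hmem) hf
  have hkm : ContinuousAt (fun y : R => hfun (tm, y)) 0 := by
    have hmem : ((tm, (0 : R)) : ℝ × R) ∈ Nopen :=
      (hrsub (hmemball tm 0 (by rw [abs_of_neg htm_neg, htmdef]; simp) (by simpa using hrpos))).1
    have hf : ContinuousAt (fun y : ↥R => ((tm, y) : ℝ × ↥R)) 0 :=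
      (continuous_const.prodMk continuous_id).continuousAt
    exact ContinuousAt.comp (g := hfun) (f := fun y : ↥R => ((tm, y) : ℝ × ↥R))
      (hhcont _ hmem) hf
  set Y : Set R :=
    {y | |hfun (tp, y) - a| < |a| / 2 ∧ |hfun (tm, y) - b| < |b| / 2 ∧ ‖y‖ < r} with hYdef
  have hYnhds : Y ∈ nhds (0 : R) := by
    have h1 : {y : R | |hfun (tp, y) - a| < |a| / 2} ∈ nhds (0 : R) := by
      have hb2 := hkp (Metric.ball_mem_nhds (hfun (tp, 0))
        (half_pos (abs_pos.mpr ha0)))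
      filter_upwards [hb2] with y hy
      rw [mem_preimage, Metric.mem_ball, Real.dist_eq] at hy
      rw [← hphi_hfun tp, ← hadef] at hy
      exact hy
    have h2 : {y : R | |hfun (tm, y) - b| < |b| / 2} ∈ nhds (0 : R) := by
      have hb2 := hkm (Metric.ball_mem_nhds (hfun (tm, 0))
        (half_pos (abs_pos.mpr hb0)))
      filter_upwards [hb2] with y hy
      rw [mem_preimage, Metric.mem_ball, Real.dist_eq] at hy
      rw [← hphi_hfun tm, ← hbdef] at hy
      exact hy
    have h3 : {y : R | ‖y‖ < r} ∈ nhds (0 : R) := by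
      have := Metric.ball_mem_nhds (0 : R) hrpos
      filter_upwards [this] with y hy
      rwa [Metric.mem_ball, dist_zero_right] at hy
    filter_upwards [h1, h2, h3] with y hy1 hy2 hy3
    exact ⟨hy1, hy2, hy3⟩
  -- the linear equivalence (y, z) ↦ y + z • w
  let eL : (R × ℝ) →ₗ[ℝ] (Fin m → ℝ) :=
    R.subtype ∘ₗ LinearMap.fst ℝ R ℝ +
      (LinearMap.toSpanSingleton ℝ _ w) ∘ₗ LinearMap.snd ℝ R ℝ
  have heL : ∀ yz : R × ℝ, eL yz = (yz.1 : Fin m → ℝ) + yz.2 • w := fun _ => rfl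
  have heLbij : Function.Bijective eL := by
    constructor
    · rw [injective_iff_map_eq_zero]
      rintro ⟨y, z⟩ hyz
      rw [heL] at hyz
      have hz : z = 0 := by
        have := congrArg lam hyz
        rw [map_add, map_smul, hw, (hlam_mem _).mpr y.2, map_zero] at this
        simpa using this
      rw [hz, zero_smul, add_zero] at hyz
      rw [Prod.mk_eq_zero]
      exact ⟨Subtype.ext hyz, hz⟩
    · intro x
      refine ⟨(pi x, lam x), ?_⟩
      rw [heL, hpi_apply]
      abel
  let eCL : (R × ℝ) ≃L[ℝ] (Fin m → ℝ) :=
    LinearEquiv.toContinuousLinearEquiv (LinearEquiv.ofBijective eL heLbij)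
  have heCL : ∀ yz : R × ℝ, eCL yz = (yz.1 : Fin m → ℝ) + yz.2 • w := fun _ => rfl
  -- image inclusion
  have htmtp : tm ≤ tp := by rw [htmdef, htpdef]; linarith
  have himg : ⇑eCL '' (Y ×ˢ Ioo (-q) q) ⊆ F '' s := by
    rintro x ⟨⟨y, z⟩, ⟨hy, hz⟩, rfl⟩
    obtain ⟨hy1, hy2, hy3⟩ := hy
    obtain ⟨hz1, hz2⟩ := hz
    have hcont : ContinuousOn (fun t => hfun (t, y)) (Icc tm tp) := by
      intro t ht
      have htmem : ((t, y) : ℝ × R) ∈ Nopen := by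
        refine (hrsub (hmemball t y ?_ hy3)).1
        rw [abs_le]
        exact ⟨by rw [← htmdef]; exact ht.1, by rw [← htpdef]; exact ht.2⟩
      have hf : ContinuousAt (fun τ : ℝ => ((τ, y) : ℝ × ↥R)) t :=
        (continuous_id.prodMk continuous_const).continuousAt
      have hcomp : ContinuousAt (fun τ : ℝ => hfun (τ, y)) t :=
        ContinuousAt.comp (g := hfun) (f := fun τ : ℝ => ((τ, y) : ℝ × ↥R))
          (hhcont _ htmem) hf
      exact hcomp.continuousWithinAt
    have habs1 := abs_sub_lt_iff.mp hy1
    have habs2 := abs_sub_lt_iff.mp hy2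
    have hzx : ∃ t ∈ Ioo tm tp, hfun (t, y) = z := by
      rcases lt_trichotomy c 0 with hcneg | hczero | hcpos
      · have haneg : a < 0 := by
          by_contra hcon
          push_neg at hcon
          have hx1 : tp * c < 0 := mul_neg_of_pos_of_neg htp_pos hcneg
          have hx2 : a * (tp * c) ≤ 0 := mul_nonpos_iff.mpr (Or.inl ⟨hcon, hx1.le⟩)
          rw [← mul_assoc] at hx2
          linarith
        have hbpos : 0 < b := by
          by_contra hcon
          push_neg at hcon
          have hx1 : 0 < tm * c := mul_pos_of_neg_of_neg htm_neg hcneg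
          have hx2 : b * (tm * c) ≤ 0 := mul_nonpos_iff.mpr (Or.inr ⟨hcon, hx1.le⟩)
          rw [← mul_assoc] at hx2
          linarith
        have h1 : hfun (tp, y) < z := by
          rw [abs_of_neg haneg] at habs1 hqa
          linarith [habs1.1]
        have h2 : z < hfun (tm, y) := by
          rw [abs_of_pos hbpos] at habs2 hqb
          linarith [habs2.2]
        obtain ⟨t, htmem, hteq⟩ := intermediate_value_Ioo' htmtp hcont ⟨h1, h2⟩
        exact ⟨t, htmem, hteq⟩
      · exact absurd hczero hc0
      · have hapos : 0 < a := by
          by_contra hcon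
          push_neg at hcon
          have hx1 : 0 < tp * c := mul_pos htp_pos hcpos
          have hx2 : a * (tp * c) ≤ 0 := mul_nonpos_iff.mpr (Or.inr ⟨hcon, hx1.le⟩)
          rw [← mul_assoc] at hx2
          linarith
        have hbneg : b < 0 := by
          by_contra hcon
          push_neg at hcon
          have hx1 : tm * c < 0 := mul_neg_of_neg_of_pos htm_neg hcpos
          have hx2 : b * (tm * c) ≤ 0 := mul_nonpos_iff.mpr (Or.inl ⟨hcon, hx1.le⟩)
          rw [← mul_assoc] at hx2
          linarith
        have h1 : hfun (tm, y) < z := by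
          rw [abs_of_neg hbneg] at habs2 hqb
          linarith [habs2.1]
        have h2 : z < hfun (tp, y) := by
          rw [abs_of_pos hapos] at habs1 hqa
          linarith [habs1.2]
        obtain ⟨t, htmem, hteq⟩ := intermediate_value_Ioo htmtp hcont ⟨h1, h2⟩
        exact ⟨t, htmem, hteq⟩
    obtain ⟨t, htIoo, hteq⟩ := hzx
    have htabs : |t| ≤ δ / 2 := by
      rw [abs_le]
      constructor
      · have := htIoo.1; rw [htmdef] at this; linarith
      · have := htIoo.2; rw [htpdef] at this; linarith
    have htN := hrsub (hmemball t y htabs hy3)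
    have hFeq := hdecomp (t, y) htN.2
    refine ⟨sig (t, y), hρsub htN.1.2.2, ?_⟩
    rw [hFeq, hteq, heCL]
  have himgnhds : ⇑eCL '' (Y ×ˢ Ioo (-q) q) ∈ nhds (0 : Fin m → ℝ) := by
    have hmem2 : Y ×ˢ Ioo (-q) q ∈ nhds ((0, 0) : R × ℝ) :=
      prod_mem_nhds hYnhds (Ioo_mem_nhds (by linarith) hqpos)
    have hmap := eCL.map_nhds_eq ((0 : R), (0 : ℝ))
    have he0 : eCL ((0 : R), (0 : ℝ)) = 0 := by
      rw [heCL]; simp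
    rw [he0] at hmap
    rw [← hmap]
    exact image_mem_map hmem2
  exact mem_of_superset himgnhds himg
end

section
/- Third-order simplex symmetrization identity: for a time-dependent family of vector fields g^t on ℝ^n (smooth in x, integrable in t), the operator identity 6 ∫_{Σ₃} g^{τ₃}∘g^{τ₂}∘g^{τ₁} dτ = 2 ∫_{Σ₃} [g^{τ₃},[g^{τ₂},g^{τ₁}]] dτ + 2 (∫_{Σ₂} [g^{τ₂},g^{τ₁}] dτ)∘(∫₀¹ g^t dt) + (∫₀¹ g^t dt)∘(∫_{Σ₂}[g^{τ₂},g^{τ₁}] dτ) + (∫₀¹ g^t dt)^{∘3} holds, where Σ_k is the k-dimensional simplex {0 ≤ τ_k ≤ … ≤ τ₁ ≤ 1}. -/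
open MeasureTheory

/-- A vector field acting as a first-order differential operator on functions. -/
noncomputable def vop {n : ℕ} (g : (Fin n → ℝ) → (Fin n → ℝ))
    (f : (Fin n → ℝ) → ℝ) : (Fin n → ℝ) → ℝ :=
  fun x => fderiv ℝ f x (g x)

/-- Lie bracket of vector fields on `ℝⁿ`. -/
noncomputable def vbr {n : ℕ} (g h : (Fin n → ℝ) → (Fin n → ℝ)) :
    (Fin n → ℝ) → (Fin n → ℝ) :=
  fun x => fderiv ℝ h x (g x) - fderiv ℝ g x (h x)

/-- The 2-dimensional simplex `{0 ≤ τ₂ ≤ τ₁ ≤ 1}`, `p = (τ₁, τ₂)`. -/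
def simplex2 : Set (ℝ × ℝ) := {p | 0 ≤ p.2 ∧ p.2 ≤ p.1 ∧ p.1 ≤ 1}

/-- The 3-dimensional simplex `{0 ≤ τ₃ ≤ τ₂ ≤ τ₁ ≤ 1}`, `p = (τ₁, τ₂, τ₃)`. -/
def simplex3 : Set (ℝ × ℝ × ℝ) :=
  {p | 0 ≤ p.2.2 ∧ p.2.2 ≤ p.2.1 ∧ p.2.1 ≤ p.1 ∧ p.1 ≤ 1}

open Set Metric ContDiff


section ParamIntegral

variable {E : Type*} [NormedAddCommGroup E] [NormedSpace ℝ E]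
  {F : Type*} [NormedAddCommGroup F] [NormedSpace ℝ F]

theorem partial_fderiv_smooth' {P : Type*} [NormedAddCommGroup P] [NormedSpace ℝ P]
    {H : P × E → F} (hH : ContDiff ℝ ∞ H) :
    ContDiff ℝ ∞ (fun p : P × E => fderiv ℝ (fun z => H (p.1, z)) p.2) :=
  ContDiff.fderiv (f := fun (p : P × E) (z : E) => H (p.1, z)) (g := Prod.snd)
    (hH.comp (((contDiff_fst.comp contDiff_fst)).prodMk contDiff_snd)) contDiff_snd (by simp)

variable {A : Type*} [NormedAddCommGroup A] [NormedSpace ℝ A] [MeasureSpace A]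
  [BorelSpace A] [SecondCountableTopology A]
  [IsFiniteMeasureOnCompacts (volume : Measure A)]
  [CompleteSpace F] [ProperSpace E] {K : Set A}

theorem param_hasFDerivAt (hK : IsCompact K) {H : A × E → F} (hH : ContDiff ℝ ∞ H) (x₀ : E) :
    HasFDerivAt (fun y => ∫ a in K, H (a, y))
      (∫ a in K, fderiv ℝ (fun z => H (a, z)) x₀) x₀ := by
  have hH' := partial_fderiv_smooth' hH
  have hsl : ∀ a : A, ContDiff ℝ ∞ (fun z => H (a, z)) := fun a =>
    hH.comp ((contDiff_const (c := a)).prodMk contDiff_id)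
  obtain ⟨C, hC⟩ := (hK.prod (isCompact_closedBall x₀ 1)).exists_bound_of_continuousOn
      hH'.continuous.continuousOn
  have hKm : MeasurableSet K := hK.measurableSet
  apply hasFDerivAt_integral_of_dominated_of_fderiv_le (𝕜 := ℝ) (μ := volume.restrict K)
      (F := fun y a => H (a, y)) (F' := fun y a => fderiv ℝ (fun z => H (a, z)) y)
      (bound := fun _ => C) (ball_mem_nhds x₀ one_pos)
  · exact Filter.Eventually.of_forall fun y =>
      (hH.continuous.comp (continuous_id.prodMk continuous_const)).aestronglyMeasurable
  · exact (hH.continuous.comp (continuous_id.prodMk continuous_const)).continuousOn.integrableOn_compact hK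
  · exact (hH'.continuous.comp (continuous_id.prodMk continuous_const)).aestronglyMeasurable
  · filter_upwards [ae_restrict_mem hKm] with a ha
    intro y hy
    exact hC (a, y) ⟨ha, ball_subset_closedBall hy⟩
  · exact integrableOn_const hK.measure_lt_top.ne
  · exact Filter.Eventually.of_forall fun a y _ =>
      (((hsl a).differentiable (by simp)) y).hasFDerivAt

theorem param_fderiv (hK : IsCompact K) {H : A × E → F} (hH : ContDiff ℝ ∞ H) (x₀ : E) :
    fderiv ℝ (fun y => ∫ a in K, H (a, y)) x₀ = ∫ a in K, fderiv ℝ (fun z => H (a, z)) x₀ :=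
  (param_hasFDerivAt hK hH x₀).fderiv

theorem param_contDiff_nat {E : Type} [NormedAddCommGroup E] [NormedSpace ℝ E] [ProperSpace E]
    (hK : IsCompact K) (k : ℕ) :
    ∀ {F : Type} [NormedAddCommGroup F] [NormedSpace ℝ F] [CompleteSpace F]
      {H : A × E → F}, ContDiff ℝ ∞ H → ContDiff ℝ (k : WithTop ℕ∞) (fun y => ∫ a in K, H (a, y)) := by
  induction k with
  | zero =>
    intro F _ _ _ H hH
    rw [Nat.cast_zero, contDiff_zero]
    exact Differentiable.continuous fun y => (param_hasFDerivAt hK hH y).differentiableAt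
  | succ k ih =>
    intro F _ _ _ H hH
    rw [show (((k+1 : ℕ)) : WithTop ℕ∞) = ((k : ℕ) : WithTop ℕ∞) + 1 by push_cast; rfl,
      contDiff_succ_iff_fderiv]
    refine ⟨fun y => (param_hasFDerivAt hK hH y).differentiableAt, by simp, ?_⟩
    have heq : fderiv ℝ (fun y => ∫ a in K, H (a, y))
        = fun x₀ => ∫ a in K, fderiv ℝ (fun z => H (a, z)) x₀ :=
      funext fun x₀ => param_fderiv hK hH x₀
    rw [heq]
    exact ih (partial_fderiv_smooth' hH)

end ParamIntegral

section VopLemmas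
variable {n : ℕ}

theorem vop_vbr_eq {h k : (Fin n → ℝ) → (Fin n → ℝ)} {u : (Fin n → ℝ) → ℝ} {x : Fin n → ℝ}
    (hh : DifferentiableAt ℝ h x) (hk : DifferentiableAt ℝ k x) (hu : ContDiffAt ℝ 2 u x) :
    vop (vbr h k) u x = vop h (vop k u) x - vop k (vop h u) x := by
  have hdu : HasFDerivAt (fderiv ℝ u) (fderiv ℝ (fderiv ℝ u) x) x :=
    ((hu.fderiv_right (m := 1) (by norm_num)).differentiableAt (by norm_num)).hasFDerivAt
  have h1 : HasFDerivAt (vop k u)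
      ((fderiv ℝ u x).comp (fderiv ℝ k x) + (fderiv ℝ (fderiv ℝ u) x).flip (k x)) x :=
    hdu.clm_apply hk.hasFDerivAt
  have h2 : HasFDerivAt (vop h u)
      ((fderiv ℝ u x).comp (fderiv ℝ h x) + (fderiv ℝ (fderiv ℝ u) x).flip (h x)) x :=
    hdu.clm_apply hh.hasFDerivAt
  have hsym := (hu.isSymmSndFDerivAt (by norm_num)) (h x) (k x)
  have e1 : vop h (vop k u) x
      = fderiv ℝ u x (fderiv ℝ k x (h x)) + fderiv ℝ (fderiv ℝ u) x (h x) (k x) := by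
    show fderiv ℝ (vop k u) x (h x) = _
    rw [h1.fderiv]; rfl
  have e2 : vop k (vop h u) x
      = fderiv ℝ u x (fderiv ℝ h x (k x)) + fderiv ℝ (fderiv ℝ u) x (k x) (h x) := by
    show fderiv ℝ (vop h u) x (k x) = _
    rw [h2.fderiv]; rfl
  have e0 : vop (vbr h k) u x
      = fderiv ℝ u x (fderiv ℝ k x (h x)) - fderiv ℝ u x (fderiv ℝ h x (k x)) := by
    show fderiv ℝ u x (fderiv ℝ k x (h x) - fderiv ℝ h x (k x)) = _
    rw [map_sub]
  rw [e0, e1, e2, hsym]; ring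

theorem vop_sub {h : (Fin n → ℝ) → (Fin n → ℝ)} {u v : (Fin n → ℝ) → ℝ} {x : Fin n → ℝ}
    (hu : DifferentiableAt ℝ u x) (hv : DifferentiableAt ℝ v x) :
    vop h (fun y => u y - v y) x = vop h u x - vop h v x := by
  show fderiv ℝ (fun y => u y - v y) x (h x) = fderiv ℝ u x (h x) - fderiv ℝ v x (h x)
  rw [fderiv_fun_sub hu hv]; rfl

end VopLemmas

section Regions

/-- order cell -/
def ocell (A B C : ℝ×ℝ×ℝ → ℝ) : Set (ℝ×ℝ×ℝ) :=
  {q | 0 ≤ A q ∧ A q ≤ B q ∧ B q ≤ C q ∧ C q ≤ 1}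

lemma ocell_closed {A B C : ℝ×ℝ×ℝ → ℝ} (hA : Continuous A) (hB : Continuous B)
    (hC : Continuous C) : IsClosed (ocell A B C) := by
  have : ocell A B C = {q | 0 ≤ A q} ∩ ({q | A q ≤ B q} ∩ ({q | B q ≤ C q} ∩ {q | C q ≤ 1})) := rfl
  rw [this]
  exact (isClosed_le continuous_const hA).inter ((isClosed_le hA hB).inter
    ((isClosed_le hB hC).inter (isClosed_le hC continuous_const)))

lemma simplex3_eq_ocell : simplex3 = ocell (fun q => q.2.2) (fun q => q.2.1) (fun q => q.1) := rfl

lemma isCompact_simplex2 : IsCompact simplex2 := by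
  have hcl : IsClosed simplex2 := by
    have : simplex2 = {p : ℝ×ℝ | 0 ≤ p.2} ∩ ({p | p.2 ≤ p.1} ∩ {p | p.1 ≤ 1}) := rfl
    rw [this]
    exact (isClosed_le continuous_const continuous_snd).inter
      ((isClosed_le continuous_snd continuous_fst).inter
        (isClosed_le continuous_fst continuous_const))
  refine IsCompact.of_isClosed_subset
    (isCompact_Icc.prod isCompact_Icc : IsCompact ((Icc (0:ℝ) 1) ×ˢ (Icc (0:ℝ) 1))) hcl ?_
  rintro ⟨a,b⟩ ⟨h1,h2,h3⟩
  exact ⟨⟨by linarith, by linarith⟩, by linarith, by linarith⟩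

lemma cube_compact : IsCompact ((Icc (0:ℝ) 1) ×ˢ ((Icc (0:ℝ) 1) ×ˢ (Icc (0:ℝ) 1))) :=
  isCompact_Icc.prod (isCompact_Icc.prod isCompact_Icc)

lemma isCompact_simplex3 : IsCompact simplex3 := by
  refine IsCompact.of_isClosed_subset cube_compact
    (by rw [simplex3_eq_ocell]; exact ocell_closed (by fun_prop) (by fun_prop) (by fun_prop)) ?_
  rintro ⟨a,b,c⟩ ⟨h1,h2,h3,h4⟩
  exact ⟨⟨by linarith, by linarith⟩, ⟨by linarith, by linarith⟩, by linarith, by linarith⟩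

-- null sets
lemma volume_diag_zero : (volume : Measure (ℝ×ℝ)) {q : ℝ×ℝ | q.1 = q.2} = 0 := by
  have hms : MeasurableSet {q : ℝ×ℝ | q.1 = q.2} :=
    (isClosed_eq continuous_fst continuous_snd).measurableSet
  rw [Measure.volume_eq_prod, Measure.prod_apply hms]
  have h : ∀ x : ℝ, (volume : Measure ℝ) (Prod.mk x ⁻¹' {q : ℝ×ℝ | q.1 = q.2}) = 0 := by
    intro x
    have he : Prod.mk x ⁻¹' {q : ℝ×ℝ | q.1 = q.2} = {x} := by ext y; simp [eq_comm]
    rw [he]; exact Real.volume_singleton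
  simp [h]

lemma null12 : (volume : Measure (ℝ×ℝ×ℝ)) {q : ℝ×ℝ×ℝ | q.1 = q.2.1} = 0 := by
  have hms : MeasurableSet {q : ℝ×ℝ×ℝ | q.1 = q.2.1} :=
    (isClosed_eq continuous_fst (continuous_fst.comp continuous_snd)).measurableSet
  rw [Measure.volume_eq_prod, Measure.prod_apply hms]
  have h : ∀ x : ℝ, (volume : Measure (ℝ×ℝ)) {a : ℝ×ℝ | x = a.1} = 0 := by
    intro x
    have he : {a : ℝ×ℝ | x = a.1} = ({x} : Set ℝ) ×ˢ (univ : Set ℝ) := by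
      ext a
      simp only [mem_setOf_eq, mem_prod, mem_singleton_iff, mem_univ, and_true]
      exact eq_comm
    rw [he, Measure.volume_eq_prod, Measure.prod_prod, Real.volume_singleton, zero_mul]
  simp [h]

lemma null13 : (volume : Measure (ℝ×ℝ×ℝ)) {q : ℝ×ℝ×ℝ | q.1 = q.2.2} = 0 := by
  have hms : MeasurableSet {q : ℝ×ℝ×ℝ | q.1 = q.2.2} :=
    (isClosed_eq continuous_fst (continuous_snd.comp continuous_snd)).measurableSet
  rw [Measure.volume_eq_prod, Measure.prod_apply hms]
  have h : ∀ x : ℝ, (volume : Measure (ℝ×ℝ)) {a : ℝ×ℝ | x = a.2} = 0 := by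
    intro x
    have he : {a : ℝ×ℝ | x = a.2} = (univ : Set ℝ) ×ˢ ({x} : Set ℝ) := by
      ext a
      simp only [mem_setOf_eq, mem_prod, mem_singleton_iff, mem_univ, true_and]
      exact eq_comm
    rw [he, Measure.volume_eq_prod, Measure.prod_prod, Real.volume_singleton, mul_zero]
  simp [h]

lemma null23 : (volume : Measure (ℝ×ℝ×ℝ)) {q : ℝ×ℝ×ℝ | q.2.1 = q.2.2} = 0 := by
  have hms : MeasurableSet {q : ℝ×ℝ×ℝ | q.2.1 = q.2.2} :=
    (isClosed_eq (continuous_fst.comp continuous_snd)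
      (continuous_snd.comp continuous_snd)).measurableSet
  rw [Measure.volume_eq_prod, Measure.prod_apply hms]
  simp [volume_diag_zero]

def HH : Set (ℝ×ℝ×ℝ) :=
  ({q : ℝ×ℝ×ℝ | q.1 = q.2.1} ∪ {q : ℝ×ℝ×ℝ | q.1 = q.2.2}) ∪ {q : ℝ×ℝ×ℝ | q.2.1 = q.2.2}

lemma nullHH : (volume : Measure (ℝ×ℝ×ℝ)) HH = 0 :=
  measure_union_null (measure_union_null null12 null13) null23

lemma aedisj {s t : Set (ℝ×ℝ×ℝ)} (h : s ∩ t ⊆ HH) :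
    AEDisjoint (volume : Measure (ℝ×ℝ×ℝ)) s t :=
  measure_mono_null h nullHH

-- permutation maps
lemma mp_t23 : MeasurePreserving (fun p : ℝ×ℝ×ℝ => (p.1, (p.2.2, p.2.1))) volume volume := by
  have h := (MeasurePreserving.id (volume : Measure ℝ)).prod
      (Measure.measurePreserving_swap (μ := (volume : Measure ℝ)) (ν := (volume : Measure ℝ)))
  rw [Measure.volume_eq_prod]
  exact h

lemma mp_t312 : MeasurePreserving (fun p : ℝ×ℝ×ℝ => (p.2.1, (p.2.2, p.1))) volume volume := by
  have h := (volume_preserving_prodAssoc (α₁ := ℝ) (β₁ := ℝ) (γ₁ := ℝ)).comp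
    (Measure.measurePreserving_swap (μ := (volume : Measure ℝ)) (ν := (volume : Measure (ℝ×ℝ))))
  rw [show (fun p : ℝ×ℝ×ℝ => (p.2.1, (p.2.2, p.1)))
      = (⇑(MeasurableEquiv.prodAssoc (α := ℝ) (β := ℝ) (γ := ℝ)) ∘ Prod.swap) from rfl]
  rw [Measure.volume_eq_prod]
  exact h

lemma mp_t12 : MeasurePreserving (fun p : ℝ×ℝ×ℝ => (p.2.1, (p.1, p.2.2))) volume volume :=
  mp_t23.comp mp_t312

lemma mp_t231 : MeasurePreserving (fun p : ℝ×ℝ×ℝ => (p.2.2, (p.1, p.2.1))) volume volume :=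
  mp_t312.comp mp_t312

lemma mp_t132 : MeasurePreserving (fun p : ℝ×ℝ×ℝ => (p.2.2, (p.2.1, p.1))) volume volume :=
  mp_t23.comp mp_t231

lemma me_t23 : MeasurableEmbedding (fun p : ℝ×ℝ×ℝ => (p.1, (p.2.2, p.2.1))) :=
  ((MeasurableEquiv.refl ℝ).prodCongr MeasurableEquiv.prodComm).measurableEmbedding

lemma me_t312 : MeasurableEmbedding (fun p : ℝ×ℝ×ℝ => (p.2.1, (p.2.2, p.1))) :=
  ((MeasurableEquiv.prodComm (α := ℝ) (β := ℝ×ℝ)).trans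
    MeasurableEquiv.prodAssoc).measurableEmbedding

lemma me_t12 : MeasurableEmbedding (fun p : ℝ×ℝ×ℝ => (p.2.1, (p.1, p.2.2))) :=
  me_t23.comp me_t312

lemma me_t231 : MeasurableEmbedding (fun p : ℝ×ℝ×ℝ => (p.2.2, (p.1, p.2.1))) :=
  me_t312.comp me_t312

lemma me_t132 : MeasurableEmbedding (fun p : ℝ×ℝ×ℝ => (p.2.2, (p.2.1, p.1))) :=
  me_t23.comp me_t231

lemma cv {m : ℝ×ℝ×ℝ → ℝ×ℝ×ℝ} (hmp : MeasurePreserving m volume volume)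
    (hme : MeasurableEmbedding m) (Ψ : ℝ×ℝ×ℝ → ℝ) {R : Set (ℝ×ℝ×ℝ)}
    (hpre : m ⁻¹' R = simplex3) :
    ∫ q in R, Ψ q = ∫ p in simplex3, Ψ (m p) := by
  rw [← hmp.setIntegral_preimage_emb hme Ψ R, hpre]

end Regions

section Splits

def cellB : Set (ℝ×ℝ×ℝ) := {q | 0 ≤ q.2.1 ∧ q.2.1 ≤ q.2.2 ∧ q.2.2 ≤ q.1 ∧ q.1 ≤ 1}
def cellC : Set (ℝ×ℝ×ℝ) := {q | 0 ≤ q.2.2 ∧ q.2.2 ≤ q.1 ∧ q.1 ≤ q.2.1 ∧ q.2.1 ≤ 1}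
def cellD : Set (ℝ×ℝ×ℝ) := {q | 0 ≤ q.1 ∧ q.1 ≤ q.2.2 ∧ q.2.2 ≤ q.2.1 ∧ q.2.1 ≤ 1}
def cellE : Set (ℝ×ℝ×ℝ) := {q | 0 ≤ q.2.1 ∧ q.2.1 ≤ q.1 ∧ q.1 ≤ q.2.2 ∧ q.2.2 ≤ 1}
def cellF : Set (ℝ×ℝ×ℝ) := {q | 0 ≤ q.1 ∧ q.1 ≤ q.2.1 ∧ q.2.1 ≤ q.2.2 ∧ q.2.2 ≤ 1}

lemma isClosed_cellB : IsClosed cellB :=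
  ocell_closed (A := fun q => q.2.1) (B := fun q => q.2.2) (C := fun q => q.1)
    (by fun_prop) (by fun_prop) (by fun_prop)
lemma isClosed_cellC : IsClosed cellC :=
  ocell_closed (A := fun q => q.2.2) (B := fun q => q.1) (C := fun q => q.2.1)
    (by fun_prop) (by fun_prop) (by fun_prop)
lemma isClosed_cellD : IsClosed cellD :=
  ocell_closed (A := fun q => q.1) (B := fun q => q.2.2) (C := fun q => q.2.1)
    (by fun_prop) (by fun_prop) (by fun_prop)
lemma isClosed_cellE : IsClosed cellE :=
  ocell_closed (A := fun q => q.2.1) (B := fun q => q.1) (C := fun q => q.2.2)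
    (by fun_prop) (by fun_prop) (by fun_prop)
lemma isClosed_cellF : IsClosed cellF :=
  ocell_closed (A := fun q => q.1) (B := fun q => q.2.1) (C := fun q => q.2.2)
    (by fun_prop) (by fun_prop) (by fun_prop)
lemma isClosed_simplex3 : IsClosed simplex3 :=
  ocell_closed (A := fun q => q.2.2) (B := fun q => q.2.1) (C := fun q => q.1)
    (by fun_prop) (by fun_prop) (by fun_prop)

lemma my_setIntegral_prod {α β : Type*} [MeasureSpace α] [MeasureSpace β]
    [SFinite (volume : Measure α)] [SFinite (volume : Measure β)]
    (f : α × β → ℝ) {s : Set α} {t : Set β}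
    (hf : IntegrableOn f (s ×ˢ t) volume) :
    ∫ z in s ×ˢ t, f z = ∫ x in s, ∫ y in t, f (x, y) := by
  rw [Measure.volume_eq_prod]
  exact setIntegral_prod f (by rwa [← Measure.volume_eq_prod])

lemma swap_setIntegral (χ : (ℝ×ℝ)×ℝ → ℝ) (s : Set (ℝ×ℝ)) (t : Set ℝ) :
    ∫ w in s ×ˢ t, χ w = ∫ w in t ×ˢ s, χ (w.2, w.1) := by
  have hmp : MeasurePreserving (Prod.swap : ℝ×(ℝ×ℝ) → (ℝ×ℝ)×ℝ) volume volume := by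
    rw [Measure.volume_eq_prod, Measure.volume_eq_prod]
    exact Measure.measurePreserving_swap
  have h := hmp.setIntegral_preimage_emb
    (MeasurableEquiv.prodComm (α := ℝ×ℝ) (β := ℝ)).symm.measurableEmbedding χ (s ×ˢ t)
  rw [← h, Set.preimage_swap_prod]
  rfl

lemma split3 (Ψ : ℝ×ℝ×ℝ → ℝ) (hΨ : Continuous Ψ) :
    ∫ q in (Icc (0:ℝ) 1) ×ˢ simplex2, Ψ q
      = (∫ p in simplex3, Ψ (p.2.2, (p.1, p.2.1)))
        + (∫ p in simplex3, Ψ (p.2.1, (p.1, p.2.2)))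
        + ∫ p in simplex3, Ψ p := by
  have hint : IntegrableOn Ψ ((Icc (0:ℝ) 1) ×ˢ ((Icc (0:ℝ) 1) ×ˢ (Icc (0:ℝ) 1))) :=
    hΨ.continuousOn.integrableOn_compact cube_compact
  have hsubD : cellD ⊆ (Icc (0:ℝ) 1) ×ˢ ((Icc (0:ℝ) 1) ×ˢ (Icc (0:ℝ) 1)) := by
    rintro ⟨a,b,c⟩ ⟨h1,h2,h3,h4⟩
    exact ⟨⟨by linarith, by linarith⟩, ⟨by linarith, by linarith⟩, by linarith, by linarith⟩
  have hsubC : cellC ⊆ (Icc (0:ℝ) 1) ×ˢ ((Icc (0:ℝ) 1) ×ˢ (Icc (0:ℝ) 1)) := by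
    rintro ⟨a,b,c⟩ ⟨h1,h2,h3,h4⟩
    exact ⟨⟨by linarith, by linarith⟩, ⟨by linarith, by linarith⟩, by linarith, by linarith⟩
  have hsubS : simplex3 ⊆ (Icc (0:ℝ) 1) ×ˢ ((Icc (0:ℝ) 1) ×ˢ (Icc (0:ℝ) 1)) := by
    rintro ⟨a,b,c⟩ ⟨h1,h2,h3,h4⟩
    exact ⟨⟨by linarith, by linarith⟩, ⟨by linarith, by linarith⟩, by linarith, by linarith⟩
  have hU : (Icc (0:ℝ) 1) ×ˢ simplex2 = (cellD ∪ cellC) ∪ simplex3 := by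
    ext ⟨t,b,c⟩
    simp only [cellD, cellC, simplex2, simplex3, mem_prod, mem_Icc, mem_union, mem_setOf_eq]
    constructor
    · rintro ⟨⟨h0,h1⟩,hc,hcb,hb1⟩
      rcases le_total t c with h|h
      · exact Or.inl (Or.inl ⟨h0, h, hcb, hb1⟩)
      · rcases le_total t b with h'|h'
        · exact Or.inl (Or.inr ⟨hc, h, h', hb1⟩)
        · exact Or.inr ⟨hc, hcb, h', h1⟩
    · rintro ((⟨h1,h2,h3,h4⟩|⟨h1,h2,h3,h4⟩)|⟨h1,h2,h3,h4⟩) <;>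
        exact ⟨⟨by linarith, by linarith⟩, by linarith, by linarith, by linarith⟩
  have hd2 : cellD ∩ cellC ⊆ HH := by
    rintro ⟨a,b,c⟩ ⟨⟨h1,h2,h3,h4⟩,h5,h6,h7,h8⟩
    exact Or.inl (Or.inr (by simp only [Set.mem_setOf_eq]; linarith))
  have hd1 : (cellD ∪ cellC) ∩ simplex3 ⊆ HH := by
    rintro ⟨a,b,c⟩ ⟨hDC,h5,h6,h7,h8⟩
    dsimp only at h5 h6 h7 h8
    rcases hDC with ⟨h1,h2,h3,h4⟩|⟨h1,h2,h3,h4⟩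
    · exact Or.inl (Or.inr (by simp only [Set.mem_setOf_eq]; linarith))
    · exact Or.inl (Or.inl (by simp only [Set.mem_setOf_eq]; linarith))
  rw [hU,
    integral_union_ae (aedisj hd1) isClosed_simplex3.measurableSet.nullMeasurableSet
      ((hint.mono_set hsubD).union (hint.mono_set hsubC)) (hint.mono_set hsubS),
    integral_union_ae (aedisj hd2) isClosed_cellC.measurableSet.nullMeasurableSet
      (hint.mono_set hsubD) (hint.mono_set hsubC),
    cv mp_t231 me_t231 Ψ
      (rfl : (fun p : ℝ×ℝ×ℝ => (p.2.2, (p.1, p.2.1))) ⁻¹' cellD = simplex3),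
    cv mp_t12 me_t12 Ψ
      (rfl : (fun p : ℝ×ℝ×ℝ => (p.2.1, (p.1, p.2.2))) ⁻¹' cellC = simplex3)]

lemma splitCube (Ψ : ℝ×ℝ×ℝ → ℝ) (hΨ : Continuous Ψ) :
    ∫ q in (Icc (0:ℝ) 1) ×ˢ ((Icc (0:ℝ) 1) ×ˢ (Icc (0:ℝ) 1)), Ψ q
      = (∫ p in simplex3, Ψ p)
        + (∫ p in simplex3, Ψ (p.1, (p.2.2, p.2.1)))
        + (∫ p in simplex3, Ψ (p.2.1, (p.1, p.2.2)))
        + (∫ p in simplex3, Ψ (p.2.2, (p.1, p.2.1)))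
        + (∫ p in simplex3, Ψ (p.2.1, (p.2.2, p.1)))
        + ∫ p in simplex3, Ψ (p.2.2, (p.2.1, p.1)) := by
  have hint : IntegrableOn Ψ ((Icc (0:ℝ) 1) ×ˢ ((Icc (0:ℝ) 1) ×ˢ (Icc (0:ℝ) 1))) :=
    hΨ.continuousOn.integrableOn_compact cube_compact
  have hsubS : simplex3 ⊆ (Icc (0:ℝ) 1) ×ˢ ((Icc (0:ℝ) 1) ×ˢ (Icc (0:ℝ) 1)) := by
    rintro ⟨a,b,c⟩ ⟨h1,h2,h3,h4⟩
    exact ⟨⟨by linarith, by linarith⟩, ⟨by linarith, by linarith⟩, by linarith, by linarith⟩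
  have hsubB : cellB ⊆ (Icc (0:ℝ) 1) ×ˢ ((Icc (0:ℝ) 1) ×ˢ (Icc (0:ℝ) 1)) := by
    rintro ⟨a,b,c⟩ ⟨h1,h2,h3,h4⟩
    exact ⟨⟨by linarith, by linarith⟩, ⟨by linarith, by linarith⟩, by linarith, by linarith⟩
  have hsubC : cellC ⊆ (Icc (0:ℝ) 1) ×ˢ ((Icc (0:ℝ) 1) ×ˢ (Icc (0:ℝ) 1)) := by
    rintro ⟨a,b,c⟩ ⟨h1,h2,h3,h4⟩
    exact ⟨⟨by linarith, by linarith⟩, ⟨by linarith, by linarith⟩, by linarith, by linarith⟩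
  have hsubD : cellD ⊆ (Icc (0:ℝ) 1) ×ˢ ((Icc (0:ℝ) 1) ×ˢ (Icc (0:ℝ) 1)) := by
    rintro ⟨a,b,c⟩ ⟨h1,h2,h3,h4⟩
    exact ⟨⟨by linarith, by linarith⟩, ⟨by linarith, by linarith⟩, by linarith, by linarith⟩
  have hsubE : cellE ⊆ (Icc (0:ℝ) 1) ×ˢ ((Icc (0:ℝ) 1) ×ˢ (Icc (0:ℝ) 1)) := by
    rintro ⟨a,b,c⟩ ⟨h1,h2,h3,h4⟩
    exact ⟨⟨by linarith, by linarith⟩, ⟨by linarith, by linarith⟩, by linarith, by linarith⟩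
  have hsubF : cellF ⊆ (Icc (0:ℝ) 1) ×ˢ ((Icc (0:ℝ) 1) ×ˢ (Icc (0:ℝ) 1)) := by
    rintro ⟨a,b,c⟩ ⟨h1,h2,h3,h4⟩
    exact ⟨⟨by linarith, by linarith⟩, ⟨by linarith, by linarith⟩, by linarith, by linarith⟩
  have hU : (Icc (0:ℝ) 1) ×ˢ ((Icc (0:ℝ) 1) ×ˢ (Icc (0:ℝ) 1))
      = ((((simplex3 ∪ cellB) ∪ cellC) ∪ cellD) ∪ cellE) ∪ cellF := by
    ext ⟨a,b,c⟩
    simp only [cellB, cellC, cellD, cellE, cellF, simplex3, mem_prod, mem_Icc, mem_union,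
      mem_setOf_eq]
    constructor
    · rintro ⟨⟨h0a,h1a⟩,⟨h0b,h1b⟩,h0c,h1c⟩
      rcases le_total a b with hab|hab <;> rcases le_total a c with hac|hac <;>
        rcases le_total b c with hbc|hbc <;> tauto
    · rintro (((((⟨h1,h2,h3,h4⟩|⟨h1,h2,h3,h4⟩)|⟨h1,h2,h3,h4⟩)|⟨h1,h2,h3,h4⟩)|⟨h1,h2,h3,h4⟩)|⟨h1,h2,h3,h4⟩) <;>
        exact ⟨⟨by linarith, by linarith⟩, ⟨by linarith, by linarith⟩, by linarith, by linarith⟩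
  have hd1 : simplex3 ∩ cellB ⊆ HH := by
    rintro ⟨a,b,c⟩ ⟨⟨h1,h2,h3,h4⟩,h5,h6,h7,h8⟩
    exact Or.inr (by simp only [Set.mem_setOf_eq]; linarith)
  have hd2 : (simplex3 ∪ cellB) ∩ cellC ⊆ HH := by
    rintro ⟨a,b,c⟩ ⟨hl,h5,h6,h7,h8⟩
    dsimp only at h5 h6 h7 h8
    rcases hl with ⟨h1,h2,h3,h4⟩|⟨h1,h2,h3,h4⟩
    · exact Or.inl (Or.inl (by simp only [Set.mem_setOf_eq]; linarith))
    · exact Or.inl (Or.inl (by simp only [Set.mem_setOf_eq]; linarith))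
  have hd3 : ((simplex3 ∪ cellB) ∪ cellC) ∩ cellD ⊆ HH := by
    rintro ⟨a,b,c⟩ ⟨hl,h5,h6,h7,h8⟩
    dsimp only at h5 h6 h7 h8
    rcases hl with (⟨h1,h2,h3,h4⟩|⟨h1,h2,h3,h4⟩)|⟨h1,h2,h3,h4⟩
    · exact Or.inl (Or.inr (by simp only [Set.mem_setOf_eq]; linarith))
    · exact Or.inl (Or.inr (by simp only [Set.mem_setOf_eq]; linarith))
    · exact Or.inl (Or.inr (by simp only [Set.mem_setOf_eq]; linarith))
  have hd4 : (((simplex3 ∪ cellB) ∪ cellC) ∪ cellD) ∩ cellE ⊆ HH := by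
    rintro ⟨a,b,c⟩ ⟨hl,h5,h6,h7,h8⟩
    dsimp only at h5 h6 h7 h8
    rcases hl with ((⟨h1,h2,h3,h4⟩|⟨h1,h2,h3,h4⟩)|⟨h1,h2,h3,h4⟩)|⟨h1,h2,h3,h4⟩
    · exact Or.inl (Or.inr (by simp only [Set.mem_setOf_eq]; linarith))
    · exact Or.inl (Or.inr (by simp only [Set.mem_setOf_eq]; linarith))
    · exact Or.inl (Or.inr (by simp only [Set.mem_setOf_eq]; linarith))
    · exact Or.inl (Or.inl (by simp only [Set.mem_setOf_eq]; linarith))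
  have hd5 : ((((simplex3 ∪ cellB) ∪ cellC) ∪ cellD) ∪ cellE) ∩ cellF ⊆ HH := by
    rintro ⟨a,b,c⟩ ⟨hl,h5,h6,h7,h8⟩
    dsimp only at h5 h6 h7 h8
    rcases hl with (((⟨h1,h2,h3,h4⟩|⟨h1,h2,h3,h4⟩)|⟨h1,h2,h3,h4⟩)|⟨h1,h2,h3,h4⟩)|⟨h1,h2,h3,h4⟩
    · exact Or.inr (by simp only [Set.mem_setOf_eq]; linarith)
    · exact Or.inl (Or.inl (by simp only [Set.mem_setOf_eq]; linarith))
    · exact Or.inr (by simp only [Set.mem_setOf_eq]; linarith)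
    · exact Or.inr (by simp only [Set.mem_setOf_eq]; linarith)
    · exact Or.inl (Or.inl (by simp only [Set.mem_setOf_eq]; linarith))
  rw [hU,
    integral_union_ae (aedisj hd5) isClosed_cellF.measurableSet.nullMeasurableSet
      (((((hint.mono_set hsubS).union (hint.mono_set hsubB)).union
        (hint.mono_set hsubC)).union (hint.mono_set hsubD)).union (hint.mono_set hsubE))
      (hint.mono_set hsubF),
    integral_union_ae (aedisj hd4) isClosed_cellE.measurableSet.nullMeasurableSet
      ((((hint.mono_set hsubS).union (hint.mono_set hsubB)).union
        (hint.mono_set hsubC)).union (hint.mono_set hsubD)) (hint.mono_set hsubE),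
    integral_union_ae (aedisj hd3) isClosed_cellD.measurableSet.nullMeasurableSet
      (((hint.mono_set hsubS).union (hint.mono_set hsubB)).union
        (hint.mono_set hsubC)) (hint.mono_set hsubD),
    integral_union_ae (aedisj hd2) isClosed_cellC.measurableSet.nullMeasurableSet
      ((hint.mono_set hsubS).union (hint.mono_set hsubB)) (hint.mono_set hsubC),
    integral_union_ae (aedisj hd1) isClosed_cellB.measurableSet.nullMeasurableSet
      (hint.mono_set hsubS) (hint.mono_set hsubB),
    cv mp_t23 me_t23 Ψ
      (rfl : (fun p : ℝ×ℝ×ℝ => (p.1, (p.2.2, p.2.1))) ⁻¹' cellB = simplex3),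
    cv mp_t12 me_t12 Ψ
      (rfl : (fun p : ℝ×ℝ×ℝ => (p.2.1, (p.1, p.2.2))) ⁻¹' cellC = simplex3),
    cv mp_t231 me_t231 Ψ
      (rfl : (fun p : ℝ×ℝ×ℝ => (p.2.2, (p.1, p.2.1))) ⁻¹' cellD = simplex3),
    cv mp_t312 me_t312 Ψ
      (rfl : (fun p : ℝ×ℝ×ℝ => (p.2.1, (p.2.2, p.1))) ⁻¹' cellE = simplex3),
    cv mp_t132 me_t132 Ψ
      (rfl : (fun p : ℝ×ℝ×ℝ => (p.2.2, (p.2.1, p.1))) ⁻¹' cellF = simplex3)]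

end Splits

section VopIntegral
variable {n : ℕ}

theorem vop_integral_field {A : Type*} [NormedAddCommGroup A] [NormedSpace ℝ A] [MeasureSpace A]
    [BorelSpace A] [SecondCountableTopology A] [IsFiniteMeasureOnCompacts (volume : Measure A)]
    {K : Set A} (hK : IsCompact K) {v : A × (Fin n → ℝ) → (Fin n → ℝ)} (hv : Continuous v)
    (u : (Fin n → ℝ) → ℝ) (y : Fin n → ℝ) :
    vop (fun z => ∫ a in K, v (a, z)) u y = ∫ a in K, vop (fun z => v (a, z)) u y := by
  have hint : Integrable (fun a => v (a, y)) (volume.restrict K) :=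
    ((hv.comp (continuous_id.prodMk continuous_const)).continuousOn).integrableOn_compact hK
  exact ((fderiv ℝ u y).integral_comp_comm hint).symm

theorem vop_integral_fun {A : Type*} [NormedAddCommGroup A] [NormedSpace ℝ A] [MeasureSpace A]
    [BorelSpace A] [SecondCountableTopology A] [IsFiniteMeasureOnCompacts (volume : Measure A)]
    {K : Set A} (hK : IsCompact K) {H : A × (Fin n → ℝ) → ℝ}
    (hH : ContDiff ℝ ∞ H) (h : (Fin n → ℝ) → (Fin n → ℝ)) (z : Fin n → ℝ) :
    vop h (fun y => ∫ a in K, H (a, y)) z = ∫ a in K, vop h (fun y => H (a, y)) z := by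
  have hder := param_fderiv hK hH z
  have hint : Integrable (fun a => fderiv ℝ (fun y => H (a, y)) z) (volume.restrict K) :=
    (((partial_fderiv_smooth' hH).continuous.comp
      (continuous_id.prodMk continuous_const)).continuousOn).integrableOn_compact hK
  show fderiv ℝ (fun y => ∫ a in K, H (a, y)) z (h z) = _
  rw [hder, ContinuousLinearMap.integral_apply hint]
  rfl

theorem vop_family_smooth {P : Type*} [NormedAddCommGroup P] [NormedSpace ℝ P]
    {F : Type*} [NormedAddCommGroup F] [NormedSpace ℝ F]
    {u : P × (Fin n → ℝ) → F} {v : P × (Fin n → ℝ) → (Fin n → ℝ)}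
    (hu : ContDiff ℝ ∞ u) (hv : ContDiff ℝ ∞ v) :
    ContDiff ℝ ∞ (fun q : P × (Fin n → ℝ) => fderiv ℝ (fun z => u (q.1, z)) q.2 (v q)) :=
  (partial_fderiv_smooth' hu).clm_apply hv

end VopIntegral



set_option maxHeartbeats 1000000 in
/-- third-order simplex symmetrization identity:
`6∫_{Σ₃} g^{τ₃}∘g^{τ₂}∘g^{τ₁} = 2∫_{Σ₃}[g^{τ₃},[g^{τ₂},g^{τ₁}]]
 + 2(∫_{Σ₂}[g^{τ₂},g^{τ₁}])∘(∫₀¹ g) + (∫₀¹ g)∘(∫_{Σ₂}[g^{τ₂},g^{τ₁}])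
 + (∫₀¹ g)^{∘3}` as operators on smooth functions. -/
theorem chronological_third_order {n : ℕ}
    (g : ℝ → (Fin n → ℝ) → (Fin n → ℝ))
    (hg : ContDiff ℝ (⊤ : ℕ∞) (fun p : ℝ × (Fin n → ℝ) => g p.1 p.2))
    (f : (Fin n → ℝ) → ℝ) (hf : ContDiff ℝ (⊤ : ℕ∞) f) (x : Fin n → ℝ) :
    6 * (∫ p in simplex3, vop (g p.2.2) (vop (g p.2.1) (vop (g p.1) f)) x) =
      2 * (∫ p in simplex3,
            vop (vbr (g p.2.2) (vbr (g p.2.1) (g p.1))) f x)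
      + 2 * vop (fun y => ∫ p in simplex2, vbr (g p.2) (g p.1) y)
            (vop (fun y => ∫ t in (0:ℝ)..1, g t y) f) x
      + vop (fun y => ∫ t in (0:ℝ)..1, g t y)
            (vop (fun y => ∫ p in simplex2, vbr (g p.2) (g p.1) y) f) x
      + vop (fun y => ∫ t in (0:ℝ)..1, g t y)
            (vop (fun y => ∫ t in (0:ℝ)..1, g t y)
              (vop (fun y => ∫ t in (0:ℝ)..1, g t y) f)) x := by
  have h1i : (1 : WithTop ℕ∞) ≤ ∞ := WithTop.coe_le_coe.mpr le_top
  have h2i : (2 : WithTop ℕ∞) ≤ ∞ := WithTop.coe_le_coe.mpr le_top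
  have hf' : ContDiff ℝ ∞ f := hf.of_le (by simp)
  have hg' : ContDiff ℝ ∞ (fun p : ℝ × (Fin n → ℝ) => g p.1 p.2) := hg.of_le (by simp)
  have hIcc : IsCompact (Icc (0:ℝ) 1) := isCompact_Icc
  have hS2 : IsCompact simplex2 := isCompact_simplex2
  have hGfun : (fun y : Fin n → ℝ => ∫ t in (0:ℝ)..1, g t y)
      = fun y : Fin n → ℝ => ∫ t in Icc (0:ℝ) 1, g t y := by
    funext y
    rw [intervalIntegral.integral_of_le zero_le_one, ← integral_Icc_eq_integral_Ioc]
  rw [hGfun]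
  -- joint smoothness of the basic families
  have hA1 : ContDiff ℝ ∞ (fun q : ℝ × (Fin n → ℝ) => vop (g q.1) f q.2) :=
    vop_family_smooth (hf'.comp contDiff_snd) hg'
  have hA2 : ContDiff ℝ ∞ (fun q : (ℝ × ℝ) × (Fin n → ℝ) =>
      vop (g q.1.1) (vop (g q.1.2) f) q.2) :=
    vop_family_smooth (hA1.comp ((contDiff_snd.comp contDiff_fst).prodMk contDiff_snd))
      (hg'.comp ((contDiff_fst.comp contDiff_fst).prodMk contDiff_snd))
  have hA3 : ContDiff ℝ ∞ (fun q : (ℝ × (ℝ × ℝ)) × (Fin n → ℝ) =>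
      vop (g q.1.1) (vop (g q.1.2.1) (vop (g q.1.2.2) f)) q.2) :=
    vop_family_smooth
      (hA2.comp (((contDiff_fst.comp (contDiff_snd.comp contDiff_fst)).prodMk
        (contDiff_snd.comp (contDiff_snd.comp contDiff_fst))).prodMk contDiff_snd))
      (hg'.comp ((contDiff_fst.comp contDiff_fst).prodMk contDiff_snd))
  have hVB : ContDiff ℝ ∞ (fun q : (ℝ × ℝ) × (Fin n → ℝ) =>
      vbr (g q.1.2) (g q.1.1) q.2) := by
    have hterm1 := vop_family_smooth (n := n)
      (u := fun q : (ℝ × ℝ) × (Fin n → ℝ) => g q.1.1 q.2)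
      (v := fun q : (ℝ × ℝ) × (Fin n → ℝ) => g q.1.2 q.2)
      (hg'.comp ((contDiff_fst.comp contDiff_fst).prodMk contDiff_snd))
      (hg'.comp ((contDiff_snd.comp contDiff_fst).prodMk contDiff_snd))
    have hterm2 := vop_family_smooth (n := n)
      (u := fun q : (ℝ × ℝ) × (Fin n → ℝ) => g q.1.2 q.2)
      (v := fun q : (ℝ × ℝ) × (Fin n → ℝ) => g q.1.1 q.2)
      (hg'.comp ((contDiff_snd.comp contDiff_fst).prodMk contDiff_snd))
      (hg'.comp ((contDiff_fst.comp contDiff_fst).prodMk contDiff_snd))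
    exact hterm1.sub hterm2
  have hVBf : ContDiff ℝ ∞ (fun q : (ℝ × ℝ) × (Fin n → ℝ) =>
      vop (vbr (g q.1.2) (g q.1.1)) f q.2) :=
    vop_family_smooth (hf'.comp contDiff_snd) hVB
  -- slices
  have hgsl : ∀ t : ℝ, ContDiff ℝ ∞ (g t) := fun t =>
    hg'.comp ((contDiff_const (c := t)).prodMk contDiff_id)
  have hA1sl : ∀ t : ℝ, ContDiff ℝ ∞ (vop (g t) f) := fun t =>
    hA1.comp ((contDiff_const (c := t)).prodMk contDiff_id)
  have hA2sl : ∀ s t : ℝ, ContDiff ℝ ∞ (vop (g s) (vop (g t) f)) := fun s t =>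
    hA2.comp ((contDiff_const (c := (s, t))).prodMk contDiff_id)
  have hVBsl : ∀ a b : ℝ, ContDiff ℝ ∞ (vbr (g b) (g a)) := fun a b =>
    hVB.comp ((contDiff_const (c := (a, b))).prodMk contDiff_id)
  -- bracket expansion as functions
  have hBr1 : ∀ a b : ℝ, vop (vbr (g b) (g a)) f
      = fun y => vop (g b) (vop (g a) f) y - vop (g a) (vop (g b) f) y := by
    intro a b
    funext y
    exact vop_vbr_eq ((hgsl b).differentiable (by simp) y) ((hgsl a).differentiable (by simp) y)
      (hf'.of_le h2i).contDiffAt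
  -- linearity over the integral vector fields
  have vopG : ∀ (u : (Fin n → ℝ) → ℝ) (y : Fin n → ℝ),
      vop (fun z => ∫ t in Icc (0:ℝ) 1, g t z) u y = ∫ t in Icc (0:ℝ) 1, vop (g t) u y :=
    fun u y => vop_integral_field hIcc hg'.continuous u y
  have vopB : ∀ (u : (Fin n → ℝ) → ℝ) (y : Fin n → ℝ),
      vop (fun z => ∫ p in simplex2, vbr (g p.2) (g p.1) z) u y
        = ∫ p in simplex2, vop (vbr (g p.2) (g p.1)) u y :=
    fun u y => vop_integral_field hS2 hVB.continuous u y
  -- differentiation under the integral sign instances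
  have L2G : ∀ (h : (Fin n → ℝ) → Fin n → ℝ) (z : Fin n → ℝ),
      vop h (fun y => ∫ t in Icc (0:ℝ) 1, vop (g t) f y) z
        = ∫ t in Icc (0:ℝ) 1, vop h (vop (g t) f) z :=
    fun h z => vop_integral_fun hIcc hA1 h z
  have hA2b : ∀ b : ℝ, ContDiff ℝ ∞ (fun q : ℝ × (Fin n → ℝ) =>
      vop (g b) (vop (g q.1) f) q.2) := fun b =>
    hA2.comp (((contDiff_const (c := b)).prodMk contDiff_fst).prodMk contDiff_snd)
  have L2A2 : ∀ (b : ℝ) (h : (Fin n → ℝ) → Fin n → ℝ) (z : Fin n → ℝ),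
      vop h (fun y => ∫ t in Icc (0:ℝ) 1, vop (g b) (vop (g t) f) y) z
        = ∫ t in Icc (0:ℝ) 1, vop h (vop (g b) (vop (g t) f)) z :=
    fun b h z => vop_integral_fun hIcc (hA2b b) h z
  have L2sq : ∀ (h : (Fin n → ℝ) → Fin n → ℝ) (z : Fin n → ℝ),
      vop h (fun y => ∫ q in (Icc (0:ℝ) 1) ×ˢ (Icc (0:ℝ) 1),
          vop (g q.1) (vop (g q.2) f) y) z
        = ∫ q in (Icc (0:ℝ) 1) ×ˢ (Icc (0:ℝ) 1), vop h (vop (g q.1) (vop (g q.2) f)) z :=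
    fun h z => vop_integral_fun (hIcc.prod hIcc) hA2 h z
  have L2B : ∀ (h : (Fin n → ℝ) → Fin n → ℝ) (z : Fin n → ℝ),
      vop h (fun y => ∫ p in simplex2, vop (vbr (g p.2) (g p.1)) f y) z
        = ∫ p in simplex2, vop h (vop (vbr (g p.2) (g p.1)) f) z :=
    fun h z => vop_integral_fun hS2 hVBf h z
  -- continuity and integrability helpers
  have hcont3 : ∀ (a b c : ℝ×ℝ×ℝ → ℝ), Continuous a → Continuous b → Continuous c →
      Continuous (fun p : ℝ×ℝ×ℝ => vop (g (a p)) (vop (g (b p)) (vop (g (c p)) f)) x) := by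
    intro a b c ha hb hc
    exact hA3.continuous.comp ((ha.prodMk (hb.prodMk hc)).prodMk continuous_const)
  have hint3 : ∀ (a b c : ℝ×ℝ×ℝ → ℝ), Continuous a → Continuous b → Continuous c →
      IntegrableOn (fun p : ℝ×ℝ×ℝ => vop (g (a p)) (vop (g (b p)) (vop (g (c p)) f)) x)
        simplex3 := by
    intro a b c ha hb hc
    exact ((hcont3 a b c ha hb hc).continuousOn).integrableOn_compact isCompact_simplex3
  have hi321 : IntegrableOn (fun p : ℝ×ℝ×ℝ =>
      vop (g p.2.2) (vop (g p.2.1) (vop (g p.1) f)) x) simplex3 :=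
    hint3 (fun p => p.2.2) (fun p => p.2.1) (fun p => p.1)
      (by fun_prop) (by fun_prop) (by fun_prop)
  have hi312 : IntegrableOn (fun p : ℝ×ℝ×ℝ =>
      vop (g p.2.2) (vop (g p.1) (vop (g p.2.1) f)) x) simplex3 :=
    hint3 (fun p => p.2.2) (fun p => p.1) (fun p => p.2.1)
      (by fun_prop) (by fun_prop) (by fun_prop)
  have hi213 : IntegrableOn (fun p : ℝ×ℝ×ℝ =>
      vop (g p.2.1) (vop (g p.1) (vop (g p.2.2) f)) x) simplex3 :=
    hint3 (fun p => p.2.1) (fun p => p.1) (fun p => p.2.2)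
      (by fun_prop) (by fun_prop) (by fun_prop)
  have hi123 : IntegrableOn (fun p : ℝ×ℝ×ℝ =>
      vop (g p.1) (vop (g p.2.1) (vop (g p.2.2) f)) x) simplex3 :=
    hint3 (fun p => p.1) (fun p => p.2.1) (fun p => p.2.2)
      (by fun_prop) (by fun_prop) (by fun_prop)
  have hi132 : IntegrableOn (fun p : ℝ×ℝ×ℝ =>
      vop (g p.1) (vop (g p.2.2) (vop (g p.2.1) f)) x) simplex3 :=
    hint3 (fun p => p.1) (fun p => p.2.2) (fun p => p.2.1)
      (by fun_prop) (by fun_prop) (by fun_prop)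
  have hi231 : IntegrableOn (fun p : ℝ×ℝ×ℝ =>
      vop (g p.2.1) (vop (g p.2.2) (vop (g p.1) f)) x) simplex3 :=
    hint3 (fun p => p.2.1) (fun p => p.2.2) (fun p => p.1)
      (by fun_prop) (by fun_prop) (by fun_prop)
  -- ===== Term 1: the iterated bracket =====
  have hpt1 : ∀ p : ℝ×ℝ×ℝ, vop (vbr (g p.2.2) (vbr (g p.2.1) (g p.1))) f x
      = vop (g p.2.2) (vop (g p.2.1) (vop (g p.1) f)) x
        - vop (g p.2.2) (vop (g p.1) (vop (g p.2.1) f)) x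
        - vop (g p.2.1) (vop (g p.1) (vop (g p.2.2) f)) x
        + vop (g p.1) (vop (g p.2.1) (vop (g p.2.2) f)) x := by
    intro p
    rw [vop_vbr_eq ((hgsl p.2.2).differentiable (by simp) x)
        ((hVBsl p.1 p.2.1).differentiable (by simp) x) (hf'.of_le h2i).contDiffAt,
      hBr1 p.1 p.2.1,
      vop_sub ((hA2sl p.2.1 p.1).differentiable (by simp) x)
        ((hA2sl p.1 p.2.1).differentiable (by simp) x),
      vop_vbr_eq ((hgsl p.2.1).differentiable (by simp) x) ((hgsl p.1).differentiable (by simp) x)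
        ((hA1sl p.2.2).of_le h2i).contDiffAt]
    ring
  have hT1 : ∫ p in simplex3, vop (vbr (g p.2.2) (vbr (g p.2.1) (g p.1))) f x
      = (∫ p in simplex3, vop (g p.2.2) (vop (g p.2.1) (vop (g p.1) f)) x)
        - (∫ p in simplex3, vop (g p.2.2) (vop (g p.1) (vop (g p.2.1) f)) x)
        - (∫ p in simplex3, vop (g p.2.1) (vop (g p.1) (vop (g p.2.2) f)) x)
        + ∫ p in simplex3, vop (g p.1) (vop (g p.2.1) (vop (g p.2.2) f)) x := by
    simp only [hpt1]
    have e1 : IntegrableOn (fun p : ℝ×ℝ×ℝ =>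
        vop (g p.2.2) (vop (g p.2.1) (vop (g p.1) f)) x
          - vop (g p.2.2) (vop (g p.1) (vop (g p.2.1) f)) x) simplex3 := hi321.sub hi312
    have e2 : IntegrableOn (fun p : ℝ×ℝ×ℝ =>
        vop (g p.2.2) (vop (g p.2.1) (vop (g p.1) f)) x
          - vop (g p.2.2) (vop (g p.1) (vop (g p.2.1) f)) x
          - vop (g p.2.1) (vop (g p.1) (vop (g p.2.2) f)) x) simplex3 := e1.sub hi213
    rw [integral_add e2 hi123, integral_sub e1 hi213, integral_sub hi321 hi312]
  -- common first step: the innermost `vop G f`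
  have hstep1 : vop (fun y : Fin n → ℝ => ∫ t in Icc (0:ℝ) 1, g t y) f
      = fun y => ∫ t in Icc (0:ℝ) 1, vop (g t) f y := funext fun y => vopG f y
  -- ===== Term 4: G∘G∘G =====
  have hcontq : ∀ z : Fin n → ℝ, Continuous (fun q : ℝ×ℝ => vop (g q.1) (vop (g q.2) f) z) :=
    fun z => hA2.continuous.comp (continuous_id.prodMk continuous_const)
  have hT4 : vop (fun y => ∫ t in Icc (0:ℝ) 1, g t y)
      (vop (fun y => ∫ t in Icc (0:ℝ) 1, g t y)
        (vop (fun y => ∫ t in Icc (0:ℝ) 1, g t y) f)) x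
      = (∫ p in simplex3, vop (g p.1) (vop (g p.2.1) (vop (g p.2.2) f)) x)
        + (∫ p in simplex3, vop (g p.1) (vop (g p.2.2) (vop (g p.2.1) f)) x)
        + (∫ p in simplex3, vop (g p.2.1) (vop (g p.1) (vop (g p.2.2) f)) x)
        + (∫ p in simplex3, vop (g p.2.2) (vop (g p.1) (vop (g p.2.1) f)) x)
        + (∫ p in simplex3, vop (g p.2.1) (vop (g p.2.2) (vop (g p.1) f)) x)
        + ∫ p in simplex3, vop (g p.2.2) (vop (g p.2.1) (vop (g p.1) f)) x := by
    rw [hstep1]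
    have hmid : vop (fun y : Fin n → ℝ => ∫ t in Icc (0:ℝ) 1, g t y)
        (fun y => ∫ t in Icc (0:ℝ) 1, vop (g t) f y)
        = fun z => ∫ q in (Icc (0:ℝ) 1) ×ˢ (Icc (0:ℝ) 1),
            vop (g q.1) (vop (g q.2) f) z := by
      funext z
      rw [vopG]
      simp only [L2G]
      exact (my_setIntegral_prod (fun q : ℝ×ℝ => vop (g q.1) (vop (g q.2) f) z)
        (((hcontq z).continuousOn).integrableOn_compact (hIcc.prod hIcc))).symm
    rw [hmid, vopG]
    simp only [L2sq]
    calc ∫ r in Icc (0:ℝ) 1, ∫ q in (Icc (0:ℝ) 1) ×ˢ (Icc (0:ℝ) 1),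
          vop (g r) (vop (g q.1) (vop (g q.2) f)) x
        = ∫ w in (Icc (0:ℝ) 1) ×ˢ ((Icc (0:ℝ) 1) ×ˢ (Icc (0:ℝ) 1)),
            vop (g w.1) (vop (g w.2.1) (vop (g w.2.2) f)) x :=
          (my_setIntegral_prod (fun w : ℝ × (ℝ×ℝ) =>
            vop (g w.1) (vop (g w.2.1) (vop (g w.2.2) f)) x)
            (((hcont3 (fun w => w.1) (fun w => w.2.1) (fun w => w.2.2) (by fun_prop)
              (by fun_prop) (by fun_prop)).continuousOn).integrableOn_compact
                cube_compact)).symm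
      _ = _ := splitCube _ (hcont3 (fun w => w.1) (fun w => w.2.1) (fun w => w.2.2)
          (by fun_prop) (by fun_prop) (by fun_prop))
  -- ===== Term 3: G ∘ B =====
  have hpt3 : ∀ (t : ℝ) (p : ℝ × ℝ), vop (g t) (vop (vbr (g p.2) (g p.1)) f) x
      = vop (g t) (vop (g p.2) (vop (g p.1) f)) x
        - vop (g t) (vop (g p.1) (vop (g p.2) f)) x := by
    intro t p
    rw [hBr1 p.1 p.2, vop_sub ((hA2sl p.2 p.1).differentiable (by simp) x)
      ((hA2sl p.1 p.2).differentiable (by simp) x)]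
  have hBf : vop (fun y => ∫ p in simplex2, vbr (g p.2) (g p.1) y) f
      = fun y => ∫ p in simplex2, vop (vbr (g p.2) (g p.1)) f y :=
    funext fun y => vopB f y
  have hT3 : vop (fun y => ∫ t in Icc (0:ℝ) 1, g t y)
      (vop (fun y => ∫ p in simplex2, vbr (g p.2) (g p.1) y) f) x
      = (∫ p in simplex3, (vop (g p.2.2) (vop (g p.2.1) (vop (g p.1) f)) x
            - vop (g p.2.2) (vop (g p.1) (vop (g p.2.1) f)) x))
        + (∫ p in simplex3, (vop (g p.2.1) (vop (g p.2.2) (vop (g p.1) f)) x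
            - vop (g p.2.1) (vop (g p.1) (vop (g p.2.2) f)) x))
        + ∫ p in simplex3, (vop (g p.1) (vop (g p.2.2) (vop (g p.2.1) f)) x
            - vop (g p.1) (vop (g p.2.1) (vop (g p.2.2) f)) x) := by
    rw [hBf, vopG]
    simp only [L2B]
    simp only [hpt3]
    calc ∫ t in Icc (0:ℝ) 1, ∫ p in simplex2,
          (vop (g t) (vop (g p.2) (vop (g p.1) f)) x
            - vop (g t) (vop (g p.1) (vop (g p.2) f)) x)
        = ∫ w in (Icc (0:ℝ) 1) ×ˢ simplex2,
            (vop (g w.1) (vop (g w.2.2) (vop (g w.2.1) f)) x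
              - vop (g w.1) (vop (g w.2.1) (vop (g w.2.2) f)) x) :=
          (my_setIntegral_prod (fun w : ℝ × (ℝ×ℝ) =>
            vop (g w.1) (vop (g w.2.2) (vop (g w.2.1) f)) x
              - vop (g w.1) (vop (g w.2.1) (vop (g w.2.2) f)) x)
            ((((hcont3 (fun w => w.1) (fun w => w.2.2) (fun w => w.2.1) (by fun_prop)
                (by fun_prop) (by fun_prop)).sub
              (hcont3 (fun w => w.1) (fun w => w.2.1) (fun w => w.2.2) (by fun_prop)
                (by fun_prop) (by fun_prop))).continuousOn).integrableOn_compact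
              (hIcc.prod hS2))).symm
      _ = _ := split3 _ ((hcont3 (fun w => w.1) (fun w => w.2.2) (fun w => w.2.1) (by fun_prop)
          (by fun_prop) (by fun_prop)).sub
            (hcont3 (fun w => w.1) (fun w => w.2.1) (fun w => w.2.2) (by fun_prop)
              (by fun_prop) (by fun_prop)))
  -- ===== Term 2: B ∘ G =====
  have hu1C2 : ContDiff ℝ ((2:ℕ) : WithTop ℕ∞)
      (fun y : Fin n → ℝ => ∫ t in Icc (0:ℝ) 1, vop (g t) f y) :=
    param_contDiff_nat hIcc 2 hA1
  have hu1fun : ∀ hv : (Fin n → ℝ) → Fin n → ℝ,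
      vop hv (fun y => ∫ t in Icc (0:ℝ) 1, vop (g t) f y)
      = fun z => ∫ t in Icc (0:ℝ) 1, vop hv (vop (g t) f) z :=
    fun hv => funext fun z => L2G hv z
  have hcontt : ∀ a b : ℝ, Continuous (fun t : ℝ =>
      vop (g a) (vop (g b) (vop (g t) f)) x) := fun a b =>
    hA3.continuous.comp ((continuous_const.prodMk
      (continuous_const.prodMk continuous_id)).prodMk continuous_const)
  have hcont3' : ∀ (a b c : (ℝ×ℝ)×ℝ → ℝ), Continuous a → Continuous b → Continuous c →
      Continuous (fun w : (ℝ×ℝ)×ℝ => vop (g (a w)) (vop (g (b w)) (vop (g (c w)) f)) x) := by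
    intro a b c ha hb hc
    exact hA3.continuous.comp ((ha.prodMk (hb.prodMk hc)).prodMk continuous_const)
  have hintT2 : IntegrableOn (fun w : (ℝ×ℝ) × ℝ =>
      vop (g w.1.2) (vop (g w.1.1) (vop (g w.2) f)) x
        - vop (g w.1.1) (vop (g w.1.2) (vop (g w.2) f)) x) (simplex2 ×ˢ Icc (0:ℝ) 1) :=
    (((hcont3' (fun w => w.1.2) (fun w => w.1.1) (fun w => w.2) (by fun_prop) (by fun_prop)
        (by fun_prop)).sub
      (hcont3' (fun w => w.1.1) (fun w => w.1.2) (fun w => w.2) (by fun_prop) (by fun_prop)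
        (by fun_prop))).continuousOn).integrableOn_compact (hS2.prod hIcc)
  have hcontT2 : Continuous (fun w : ℝ × (ℝ×ℝ) =>
      vop (g w.2.2) (vop (g w.2.1) (vop (g w.1) f)) x
        - vop (g w.2.1) (vop (g w.2.2) (vop (g w.1) f)) x) :=
    (hcont3 (fun w => w.2.2) (fun w => w.2.1) (fun w => w.1) (by fun_prop) (by fun_prop)
        (by fun_prop)).sub
      (hcont3 (fun w => w.2.1) (fun w => w.2.2) (fun w => w.1) (by fun_prop) (by fun_prop)
        (by fun_prop))
  have hpt2 : ∀ p : ℝ × ℝ, vop (vbr (g p.2) (g p.1))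
        (fun y => ∫ t in Icc (0:ℝ) 1, vop (g t) f y) x
      = ∫ t in Icc (0:ℝ) 1,
          (vop (g p.2) (vop (g p.1) (vop (g t) f)) x
            - vop (g p.1) (vop (g p.2) (vop (g t) f)) x) := by
    intro p
    rw [vop_vbr_eq ((hgsl p.2).differentiable (by simp) x) ((hgsl p.1).differentiable (by simp) x)
        (hu1C2.contDiffAt.of_le (le_of_eq rfl)),
      hu1fun (g p.1), hu1fun (g p.2), L2A2 p.1 (g p.2) x, L2A2 p.2 (g p.1) x,
      ← integral_sub (((hcontt p.2 p.1).continuousOn).integrableOn_compact hIcc)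
        (((hcontt p.1 p.2).continuousOn).integrableOn_compact hIcc)]
  have hT2 : vop (fun y => ∫ p in simplex2, vbr (g p.2) (g p.1) y)
      (vop (fun y => ∫ t in Icc (0:ℝ) 1, g t y) f) x
      = (∫ p in simplex3, (vop (g p.2.1) (vop (g p.1) (vop (g p.2.2) f)) x
            - vop (g p.1) (vop (g p.2.1) (vop (g p.2.2) f)) x))
        + (∫ p in simplex3, (vop (g p.2.2) (vop (g p.1) (vop (g p.2.1) f)) x
            - vop (g p.1) (vop (g p.2.2) (vop (g p.2.1) f)) x))
        + ∫ p in simplex3, (vop (g p.2.2) (vop (g p.2.1) (vop (g p.1) f)) x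
            - vop (g p.2.1) (vop (g p.2.2) (vop (g p.1) f)) x) := by
    rw [hstep1, vopB]
    simp only [hpt2]
    calc ∫ p in simplex2, ∫ t in Icc (0:ℝ) 1,
          (vop (g p.2) (vop (g p.1) (vop (g t) f)) x
            - vop (g p.1) (vop (g p.2) (vop (g t) f)) x)
        = ∫ w in simplex2 ×ˢ Icc (0:ℝ) 1,
            (vop (g w.1.2) (vop (g w.1.1) (vop (g w.2) f)) x
              - vop (g w.1.1) (vop (g w.1.2) (vop (g w.2) f)) x) :=
          (my_setIntegral_prod (fun w : (ℝ×ℝ) × ℝ =>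
            vop (g w.1.2) (vop (g w.1.1) (vop (g w.2) f)) x
              - vop (g w.1.1) (vop (g w.1.2) (vop (g w.2) f)) x) hintT2).symm
      _ = ∫ w in (Icc (0:ℝ) 1) ×ˢ simplex2,
            (vop (g w.2.2) (vop (g w.2.1) (vop (g w.1) f)) x
              - vop (g w.2.1) (vop (g w.2.2) (vop (g w.1) f)) x) :=
          swap_setIntegral _ simplex2 (Icc (0:ℝ) 1)
      _ = _ := split3 _ hcontT2
  rw [hT1, hT2, hT3, hT4,
    integral_sub hi213 hi123, integral_sub hi312 hi132, integral_sub hi321 hi231,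
    integral_sub hi321 hi312, integral_sub hi231 hi213, integral_sub hi132 hi123]
  ring
end

section
/- Shuffle identity for triple brackets: for time-dependent vector fields g^t, ∫_{Σ₃} [g^{τ₃},[g^{τ₂},g^{τ₁}]] dτ₃dτ₂dτ₁ = ∫_{Σ₃} [g^{τ₁},[g^{τ₂},g^{τ₃}]] dτ₃dτ₂dτ₁ + (1/2)[∫₀¹ g^t dt, ∫_{Σ₂} [g^{τ₂},g^{τ₁}] dτ₂dτ₁]. -/
open MeasureTheory

open Set Function Bornology

section Aux

variable {n : ℕ}

/-! ### Pointwise lemmas about `vbr` -/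

lemma hasFDerivAt_vbr {v w : (Fin n → ℝ) → (Fin n → ℝ)}
    (hv : ContDiff ℝ (⊤ : ℕ∞) v) (hw : ContDiff ℝ (⊤ : ℕ∞) w) (x : Fin n → ℝ) :
    HasFDerivAt (vbr v w)
      (((fderiv ℝ w x).comp (fderiv ℝ v x) + (fderiv ℝ (fderiv ℝ w) x).flip (v x))
        - ((fderiv ℝ v x).comp (fderiv ℝ w x) + (fderiv ℝ (fderiv ℝ v) x).flip (w x))) x := by
  have hw' : HasFDerivAt (fderiv ℝ w) (fderiv ℝ (fderiv ℝ w) x) x :=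
    (((hw.fderiv_right (m := 1) (by exact WithTop.coe_le_coe.mpr le_top)).differentiable one_ne_zero) x).hasFDerivAt
  have hv' : HasFDerivAt (fderiv ℝ v) (fderiv ℝ (fderiv ℝ v) x) x :=
    (((hv.fderiv_right (m := 1) (by exact WithTop.coe_le_coe.mpr le_top)).differentiable one_ne_zero) x).hasFDerivAt
  have h1 : HasFDerivAt v (fderiv ℝ v x) x := ((hv.differentiable (by simp)) x).hasFDerivAt
  have h2 : HasFDerivAt w (fderiv ℝ w x) x := ((hw.differentiable (by simp)) x).hasFDerivAt
  exact (hw'.clm_apply h1).sub (hv'.clm_apply h2)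

lemma vbr_neg_right' {u h : (Fin n → ℝ) → (Fin n → ℝ)} (x : Fin n → ℝ) :
    vbr u (fun y => -(h y)) x = - vbr u h x := by
  simp only [vbr, fderiv_fun_neg, ContinuousLinearMap.neg_apply, map_neg, neg_sub]
  abel

lemma vbr_neg_right {u v w : (Fin n → ℝ) → (Fin n → ℝ)} (x : Fin n → ℝ) :
    vbr u (vbr w v) x = - vbr u (vbr v w) x := by
  rw [show vbr w v = fun y => -(vbr v w y) from funext fun y => by simp [vbr, neg_sub]]
  exact vbr_neg_right' x

lemma vbr_jacobi {u v w : (Fin n → ℝ) → (Fin n → ℝ)}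
    (hu : ContDiff ℝ (⊤ : ℕ∞) u) (hv : ContDiff ℝ (⊤ : ℕ∞) v) (hw : ContDiff ℝ (⊤ : ℕ∞) w) (x : Fin n → ℝ) :
    vbr v (vbr w u) x = vbr w (vbr v u) x + vbr u (vbr w v) x := by
  have symm : ∀ (f : (Fin n → ℝ) → (Fin n → ℝ)), ContDiff ℝ (⊤ : ℕ∞) f → ∀ a b,
      fderiv ℝ (fderiv ℝ f) x a b = fderiv ℝ (fderiv ℝ f) x b a := by
    intro f hf a b
    exact second_derivative_symmetric (fun y => ((hf.differentiable (by simp)) y).hasFDerivAt)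
      (((hf.fderiv_right (m := 1) (by exact WithTop.coe_le_coe.mpr le_top)).differentiable one_ne_zero) x).hasFDerivAt a b
  have e1 := (hasFDerivAt_vbr hw hu x).fderiv
  have e2 := (hasFDerivAt_vbr hv hu x).fderiv
  have e3 := (hasFDerivAt_vbr hw hv x).fderiv
  simp only [vbr] at e1 e2 e3 ⊢
  rw [e1, e2, e3]
  simp only [ContinuousLinearMap.coe_sub', Pi.sub_apply, ContinuousLinearMap.add_apply,
    ContinuousLinearMap.coe_comp', comp_apply, ContinuousLinearMap.flip_apply, map_sub]
  rw [symm u hu (v x) (w x), symm v hv (w x) (u x), symm w hw (v x) (u x)]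
  abel

/-! ### Smoothness of families -/

lemma contDiff_vbr_family {P : Type*} [NormedAddCommGroup P] [NormedSpace ℝ P]
    {f h : P → (Fin n → ℝ) → (Fin n → ℝ)}
    (hf : ContDiff ℝ (⊤ : ℕ∞) fun p : P × (Fin n → ℝ) => f p.1 p.2)
    (hh : ContDiff ℝ (⊤ : ℕ∞) fun p : P × (Fin n → ℝ) => h p.1 p.2) :
    ContDiff ℝ (⊤ : ℕ∞) (fun p : P × (Fin n → ℝ) => vbr (f p.1) (h p.1) p.2) := by
  unfold vbr
  apply ContDiff.sub
  · exact ContDiff.fderiv_apply (f := fun (p : P × (Fin n → ℝ)) y => h p.1 y) (g := Prod.snd)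
      (k := fun p => f p.1 p.2) (hh.comp ((contDiff_fst.fst).prodMk contDiff_snd))
      contDiff_snd hf (by simp)
  · exact ContDiff.fderiv_apply (f := fun (p : P × (Fin n → ℝ)) y => f p.1 y) (g := Prod.snd)
      (k := fun p => h p.1 p.2) (hf.comp ((contDiff_fst.fst).prodMk contDiff_snd))
      contDiff_snd hh (by simp)

/-! ### Differentiation under the integral sign -/

section param
variable {α : Type*} [NormedAddCommGroup α] [NormedSpace ℝ α] [MeasureSpace α]
  [BorelSpace α] [IsFiniteMeasureOnCompacts (volume : Measure α)] [ProperSpace α]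

omit [MeasureSpace α] [BorelSpace α] [IsFiniteMeasureOnCompacts (volume : Measure α)]
  [ProperSpace α] in
lemma contDiff_pfderiv {f : α → (Fin n → ℝ) → (Fin n → ℝ)}
    (hf : ContDiff ℝ (⊤ : ℕ∞) (fun p : α × (Fin n → ℝ) => f p.1 p.2)) :
    ContDiff ℝ (⊤ : ℕ∞) (fun p : α × (Fin n → ℝ) => fderiv ℝ (f p.1) p.2) :=
  ContDiff.fderiv (f := fun (p : α × (Fin n → ℝ)) y => f p.1 y) (g := Prod.snd)
    (hf.comp ((contDiff_fst.fst).prodMk contDiff_snd)) contDiff_snd (by simp)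

lemma hasFDerivAt_setIntegral {s : Set α} (hs : IsBounded s) (hsm : MeasurableSet s)
    {f : α → (Fin n → ℝ) → (Fin n → ℝ)}
    (hf : ContDiff ℝ (⊤ : ℕ∞) (fun p : α × (Fin n → ℝ) => f p.1 p.2)) (x : Fin n → ℝ) :
    HasFDerivAt (fun y => ∫ a in s, f a y) (∫ a in s, fderiv ℝ (f a) x) x := by
  haveI : IsFiniteMeasure ((volume : Measure α).restrict s) := by
    constructor
    rw [Measure.restrict_apply_univ]
    exact lt_of_le_of_lt (measure_mono subset_closure) hs.isCompact_closure.measure_lt_top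
  have hfa : ∀ a, ContDiff ℝ (⊤ : ℕ∞) (f a) := fun a => hf.comp (contDiff_const.prodMk contDiff_id)
  have hD : Continuous (fun p : α × (Fin n → ℝ) => fderiv ℝ (f p.1) p.2) :=
    (contDiff_pfderiv hf).continuous
  obtain ⟨C, hC⟩ :=
    (hs.isCompact_closure.prod (isCompact_closedBall x 1)).exists_bound_of_continuousOn
      hD.continuousOn
  apply hasFDerivAt_integral_of_dominated_of_fderiv_le (bound := fun _ => C)
    (F' := fun y a => fderiv ℝ (f a) y) (s := Metric.ball x 1) (Metric.ball_mem_nhds x one_pos)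
  · exact Filter.Eventually.of_forall fun x' =>
      ((hf.continuous.comp (continuous_id.prodMk continuous_const)).aestronglyMeasurable)
  · exact (((hf.continuous.comp
      (continuous_id.prodMk continuous_const)).continuousOn).integrableOn_compact
      hs.isCompact_closure).mono_set subset_closure
  · exact (hD.comp (continuous_id.prodMk continuous_const)).aestronglyMeasurable
  · filter_upwards [ae_restrict_mem hsm] with a ha
    intro x' hx'
    exact hC (a, x') ⟨subset_closure ha, Metric.ball_subset_closedBall hx'⟩
  · exact integrable_const C
  · exact Filter.Eventually.of_forall fun a => fun x' _ =>
      (((hfa a).differentiable (by simp)) x').hasFDerivAt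
end param

lemma integrableOn_of_bounded_cont {γ E : Type*} [NormedAddCommGroup γ] [NormedSpace ℝ γ]
    [MeasureSpace γ] [BorelSpace γ] [IsFiniteMeasureOnCompacts (volume : Measure γ)]
    [ProperSpace γ] [NormedAddCommGroup E]
    {s : Set γ} (hb : IsBounded s) {f : γ → E} (hf : Continuous f) :
    IntegrableOn f s volume :=
  (hf.continuousOn.integrableOn_compact hb.isCompact_closure).mono_set subset_closure

section two
variable {α β : Type*} [NormedAddCommGroup α] [NormedSpace ℝ α] [MeasureSpace α]
  [BorelSpace α] [IsFiniteMeasureOnCompacts (volume : Measure α)] [ProperSpace α]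
  [NormedAddCommGroup β] [NormedSpace ℝ β] [MeasureSpace β]
  [BorelSpace β] [IsFiniteMeasureOnCompacts (volume : Measure β)] [ProperSpace β]
  [IsFiniteMeasureOnCompacts (volume : Measure (β × α))]
  [SFinite (volume : Measure α)] [SFinite (volume : Measure β)]

lemma vbr_setIntegral {s : Set α} {t : Set β}
    (hs : IsBounded s) (hsm : MeasurableSet s)
    (ht : IsBounded t) (htm : MeasurableSet t)
    {f : α → (Fin n → ℝ) → (Fin n → ℝ)} {h : β → (Fin n → ℝ) → (Fin n → ℝ)}
    (hf : ContDiff ℝ (⊤ : ℕ∞) (fun p : α × (Fin n → ℝ) => f p.1 p.2))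
    (hh : ContDiff ℝ (⊤ : ℕ∞) (fun p : β × (Fin n → ℝ) => h p.1 p.2))
    (x : Fin n → ℝ) :
    vbr (fun y => ∫ a in s, f a y) (fun y => ∫ b in t, h b y) x
      = ∫ a in s, ∫ b in t, vbr (f a) (h b) x := by
  have Dfc : Continuous (fun a => fderiv ℝ (f a) x) :=
    (contDiff_pfderiv hf).continuous.comp (continuous_id.prodMk continuous_const)
  have Dhc : Continuous (fun b => fderiv ℝ (h b) x) :=
    (contDiff_pfderiv hh).continuous.comp (continuous_id.prodMk continuous_const)
  have fc : Continuous (fun a => f a x) :=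
    hf.continuous.comp (continuous_id.prodMk continuous_const)
  have hc : Continuous (fun b => h b x) :=
    hh.continuous.comp (continuous_id.prodMk continuous_const)
  have intf : IntegrableOn (fun a => f a x) s volume := integrableOn_of_bounded_cont hs fc
  have inth : IntegrableOn (fun b => h b x) t volume := integrableOn_of_bounded_cont ht hc
  have intDf : IntegrableOn (fun a => fderiv ℝ (f a) x) s volume :=
    integrableOn_of_bounded_cont hs Dfc
  have intDh : IntegrableOn (fun b => fderiv ℝ (h b) x) t volume :=
    integrableOn_of_bounded_cont ht Dhc
  have eDf := (hasFDerivAt_setIntegral hs hsm hf x).fderiv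
  have eDh := (hasFDerivAt_setIntegral ht htm hh x).fderiv
  show fderiv ℝ (fun y => ∫ b in t, h b y) x (∫ a in s, f a x)
      - fderiv ℝ (fun y => ∫ a in s, f a y) x (∫ b in t, h b x) = _
  rw [eDf, eDh]
  rw [ContinuousLinearMap.integral_apply intDh, ContinuousLinearMap.integral_apply intDf]
  have step1 : ∀ b ∈ t, fderiv ℝ (h b) x (∫ a in s, f a x)
      = ∫ a in s, fderiv ℝ (h b) x (f a x) :=
    fun b _ => (ContinuousLinearMap.integral_comp_comm _ intf).symm
  have step2 : ∀ a ∈ s, fderiv ℝ (f a) x (∫ b in t, h b x)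
      = ∫ b in t, fderiv ℝ (f a) x (h b x) :=
    fun a _ => (ContinuousLinearMap.integral_comp_comm _ inth).symm
  rw [setIntegral_congr_fun htm step1, setIntegral_congr_fun hsm step2]
  have swap : (∫ b in t, ∫ a in s, fderiv ℝ (h b) x (f a x))
      = ∫ a in s, ∫ b in t, fderiv ℝ (h b) x (f a x) := by
    apply integral_integral_swap
    have : Integrable (fun z : β × α => fderiv ℝ (h z.1) x (f z.2 x))
        ((volume : Measure (β × α)).restrict (t ×ˢ s)) := by
      apply integrableOn_of_bounded_cont (ht.prod hs)
      exact (Dhc.comp continuous_fst).clm_apply (fc.comp continuous_snd)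
    rwa [Measure.prod_restrict, ← Measure.volume_eq_prod]
  have out1 : IntegrableOn (fun a => ∫ b in t, fderiv ℝ (h b) x (f a x)) s volume := by
    have e : (fun a => ∫ b in t, fderiv ℝ (h b) x (f a x))
        = fun a => (∫ b in t, fderiv ℝ (h b) x) (f a x) :=
      funext fun a => (ContinuousLinearMap.integral_apply intDh _).symm
    rw [e]
    exact integrableOn_of_bounded_cont hs ((ContinuousLinearMap.continuous _).comp fc)
  have out2 : IntegrableOn (fun a => ∫ b in t, fderiv ℝ (f a) x (h b x)) s volume := by
    have e : (fun a => ∫ b in t, fderiv ℝ (f a) x (h b x))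
        = fun a => fderiv ℝ (f a) x (∫ b in t, h b x) :=
      funext fun a => ContinuousLinearMap.integral_comp_comm _ inth
    rw [e]
    exact integrableOn_of_bounded_cont hs (Dfc.clm_apply continuous_const)
  rw [swap, ← integral_sub out1 out2]
  apply setIntegral_congr_fun hsm
  intro a _
  simp only
  rw [← integral_sub (integrableOn_of_bounded_cont ht (Dhc.clm_apply continuous_const))
    (integrableOn_of_bounded_cont ht (continuous_const.clm_apply hc))]
  rfl
end two

/-! ### Geometry of the regions -/

def regT1 : Set (ℝ × ℝ × ℝ) := {p | 0 ≤ p.1 ∧ p.1 ≤ p.2.2 ∧ p.2.2 ≤ p.2.1 ∧ p.2.1 ≤ 1}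
def regT2 : Set (ℝ × ℝ × ℝ) := {p | 0 ≤ p.2.2 ∧ p.2.2 ≤ p.1 ∧ p.1 ≤ p.2.1 ∧ p.2.1 ≤ 1}

lemma null_of_linear_ker (f : (ℝ × ℝ × ℝ) →ₗ[ℝ] ℝ) (p₀ : ℝ × ℝ × ℝ) (hp : f p₀ ≠ 0) :
    volume {p : ℝ × ℝ × ℝ | f p = 0} = 0 := by
  haveI h2 : (volume : Measure (ℝ × ℝ)).IsAddHaarMeasure := by
    rw [Measure.volume_eq_prod]; infer_instance
  haveI h3 : (volume : Measure (ℝ × ℝ × ℝ)).IsAddHaarMeasure := by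
    rw [Measure.volume_eq_prod]; infer_instance
  have : {p : ℝ × ℝ × ℝ | f p = 0} = (LinearMap.ker f : Set (ℝ × ℝ × ℝ)) := by
    ext p; simp [LinearMap.mem_ker]
  rw [this]
  apply Measure.addHaar_submodule
  intro h
  exact hp (LinearMap.mem_ker.mp (h ▸ Submodule.mem_top))

lemma plane1_null : volume {p : ℝ × ℝ × ℝ | p.1 = 0} = 0 := by
  have := null_of_linear_ker (LinearMap.fst ℝ ℝ (ℝ × ℝ)) (1, 0, 0) (by norm_num)
  simpa using this

lemma plane12_null : volume {p : ℝ × ℝ × ℝ | p.1 = p.2.1} = 0 := by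
  have := null_of_linear_ker
    (LinearMap.fst ℝ ℝ (ℝ × ℝ) - (LinearMap.fst ℝ ℝ ℝ).comp (LinearMap.snd ℝ ℝ (ℝ × ℝ)))
    (1, 0, 0) (by norm_num)
  have e : {p : ℝ × ℝ × ℝ |
      (LinearMap.fst ℝ ℝ (ℝ × ℝ) - (LinearMap.fst ℝ ℝ ℝ).comp (LinearMap.snd ℝ ℝ (ℝ × ℝ))) p = 0}
      = {p : ℝ × ℝ × ℝ | p.1 = p.2.1} := by
    ext p; simp [sub_eq_zero]
  rwa [e] at this

lemma plane13_null : volume {p : ℝ × ℝ × ℝ | p.1 = p.2.2} = 0 := by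
  have := null_of_linear_ker
    (LinearMap.fst ℝ ℝ (ℝ × ℝ) - (LinearMap.snd ℝ ℝ ℝ).comp (LinearMap.snd ℝ ℝ (ℝ × ℝ)))
    (1, 0, 0) (by norm_num)
  have e : {p : ℝ × ℝ × ℝ |
      (LinearMap.fst ℝ ℝ (ℝ × ℝ) - (LinearMap.snd ℝ ℝ ℝ).comp (LinearMap.snd ℝ ℝ (ℝ × ℝ))) p = 0}
      = {p : ℝ × ℝ × ℝ | p.1 = p.2.2} := by
    ext p; simp [sub_eq_zero]
  rwa [e] at this

noncomputable def sig2 : (ℝ × ℝ × ℝ) ≃ᵐ (ℝ × ℝ × ℝ) :=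
  (MeasurableEquiv.prodAssoc.symm.trans
    ((MeasurableEquiv.prodComm.prodCongr (MeasurableEquiv.refl ℝ)).trans
      MeasurableEquiv.prodAssoc))

noncomputable def sig1 : (ℝ × ℝ × ℝ) ≃ᵐ (ℝ × ℝ × ℝ) :=
  ((MeasurableEquiv.refl ℝ).prodCongr MeasurableEquiv.prodComm).trans sig2

lemma vp_swap2 : MeasurePreserving (Prod.swap : ℝ × ℝ → ℝ × ℝ) volume volume := by
  rw [Measure.volume_eq_prod]
  exact Measure.measurePreserving_swap

lemma mp_sig2 : MeasurePreserving (⇑sig2) volume volume := by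
  have h1 : MeasurePreserving (⇑(MeasurableEquiv.prodAssoc (α := ℝ) (β := ℝ) (γ := ℝ)).symm)
      volume volume := MeasurePreserving.symm _ volume_preserving_prodAssoc
  have h2 : MeasurePreserving (Prod.map (Prod.swap : ℝ × ℝ → ℝ × ℝ) (id : ℝ → ℝ))
      volume volume := by
    rw [Measure.volume_eq_prod]
    exact vp_swap2.prod (MeasurePreserving.id _)
  have h3 : MeasurePreserving (⇑(MeasurableEquiv.prodAssoc (α := ℝ) (β := ℝ) (γ := ℝ)))
      volume volume := volume_preserving_prodAssoc
  exact (h3.comp h2).comp h1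

lemma mp_sig1 : MeasurePreserving (⇑sig1) volume volume := by
  have h0 : MeasurePreserving (Prod.map (id : ℝ → ℝ) (Prod.swap : ℝ × ℝ → ℝ × ℝ))
      volume volume := by
    rw [Measure.volume_eq_prod]
    exact (MeasurePreserving.id _).prod vp_swap2
  exact mp_sig2.comp h0

lemma transfer1 {E : Type*} [NormedAddCommGroup E] [NormedSpace ℝ E] (F : ℝ × ℝ × ℝ → E) :
    ∫ p in regT1, F p = ∫ p in simplex3, F (p.2.2, (p.1, p.2.1)) := by
  have h := mp_sig1.setIntegral_preimage_emb sig1.measurableEmbedding F regT1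
  have e : ⇑sig1 ⁻¹' regT1 = simplex3 := by
    ext p; exact Iff.rfl
  rw [e] at h
  exact h.symm

lemma transfer2 {E : Type*} [NormedAddCommGroup E] [NormedSpace ℝ E] (F : ℝ × ℝ × ℝ → E) :
    ∫ p in regT2, F p = ∫ p in simplex3, F (p.2.1, (p.1, p.2.2)) := by
  have h := mp_sig2.setIntegral_preimage_emb sig2.measurableEmbedding F regT2
  have e : ⇑sig2 ⁻¹' regT2 = simplex3 := by
    ext p; exact Iff.rfl
  rw [e] at h
  exact h.symm

lemma box_eq : Icc (0:ℝ) 1 ×ˢ simplex2 = (regT1 ∪ regT2) ∪ simplex3 := by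
  ext p
  simp only [Set.mem_prod, Set.mem_Icc, simplex2, simplex3, regT1, regT2, Set.mem_union,
    Set.mem_setOf_eq]
  constructor
  · rintro ⟨⟨h0, h1⟩, hq0, hq21, hq11⟩
    rcases le_total p.1 p.2.2 with h | h
    · exact Or.inl (Or.inl ⟨h0, h, hq21, hq11⟩)
    · rcases le_total p.1 p.2.1 with h' | h'
      · exact Or.inl (Or.inr ⟨hq0, h, h', hq11⟩)
      · exact Or.inr ⟨hq0, hq21, h', h1⟩
  · rintro ((⟨a, b, c, d⟩ | ⟨a, b, c, d⟩) | ⟨a, b, c, d⟩)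
    · exact ⟨⟨a, (b.trans c).trans d⟩, a.trans b, c, d⟩
    · exact ⟨⟨a.trans b, c.trans d⟩, a, b.trans c, d⟩
    · exact ⟨⟨a.trans (b.trans c), d⟩, a, b, c.trans d⟩

lemma meas_simplex2 : MeasurableSet simplex2 := by
  simp only [simplex2, Set.setOf_and]
  exact ((measurableSet_le measurable_const measurable_snd).inter
    ((measurableSet_le measurable_snd measurable_fst).inter
      (measurableSet_le measurable_fst measurable_const)))

lemma meas_simplex3 : MeasurableSet simplex3 := by
  simp only [simplex3, Set.setOf_and]
  exact ((measurableSet_le measurable_const (measurable_snd.comp measurable_snd)).inter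
    (((measurableSet_le (measurable_snd.comp measurable_snd)
        (measurable_fst.comp measurable_snd))).inter
      ((measurableSet_le (measurable_fst.comp measurable_snd) measurable_fst).inter
        (measurableSet_le measurable_fst measurable_const))))

lemma meas_regT2 : MeasurableSet regT2 := by
  simp only [regT2, Set.setOf_and]
  exact ((measurableSet_le measurable_const (measurable_snd.comp measurable_snd)).inter
    (((measurableSet_le (measurable_snd.comp measurable_snd) measurable_fst)).inter
      ((measurableSet_le measurable_fst (measurable_fst.comp measurable_snd)).inter
        (measurableSet_le (measurable_fst.comp measurable_snd) measurable_const))))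

lemma bounded_simplex2 : IsBounded simplex2 := by
  apply ((Metric.isBounded_Icc (0:ℝ) 1).prod (Metric.isBounded_Icc (0:ℝ) 1)).subset
  rintro ⟨a, b⟩ ⟨h1, h2, h3⟩
  exact ⟨⟨(h1.trans h2), h3⟩, ⟨h1, h2.trans h3⟩⟩

lemma subset_box3 {S : Set (ℝ × ℝ × ℝ)}
    (h : ∀ p ∈ S, p.1 ∈ Icc (0:ℝ) 1 ∧ p.2.1 ∈ Icc (0:ℝ) 1 ∧ p.2.2 ∈ Icc (0:ℝ) 1) :
    IsBounded S := by
  apply ((Metric.isBounded_Icc (0:ℝ) 1).prod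
    ((Metric.isBounded_Icc (0:ℝ) 1).prod (Metric.isBounded_Icc (0:ℝ) 1))).subset
  rintro p hp
  obtain ⟨a, b, c⟩ := h p hp
  exact ⟨a, b, c⟩

lemma bounded_simplex3 : IsBounded simplex3 :=
  subset_box3 fun p ⟨h1, h2, h3, h4⟩ =>
    ⟨⟨(h1.trans h2).trans h3, h4⟩, ⟨h1.trans h2, h3.trans h4⟩, ⟨h1, h2.trans (h3.trans h4)⟩⟩

lemma bounded_regT1 : IsBounded regT1 :=
  subset_box3 fun p ⟨h1, h2, h3, h4⟩ =>
    ⟨⟨h1, h2.trans (h3.trans h4)⟩, ⟨(h1.trans h2).trans h3, h4⟩, ⟨h1.trans h2, h3.trans h4⟩⟩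

lemma bounded_regT2 : IsBounded regT2 :=
  subset_box3 fun p ⟨h1, h2, h3, h4⟩ =>
    ⟨⟨h1.trans h2, h3.trans h4⟩, ⟨(h1.trans h2).trans h3, h4⟩, ⟨h1, (h2.trans h3).trans h4⟩⟩

lemma integral_box (F : ℝ × ℝ × ℝ → Fin n → ℝ) (hF : Continuous F) :
    ∫ p in Icc (0:ℝ) 1 ×ˢ simplex2, F p
      = ((∫ p in regT1, F p) + (∫ p in regT2, F p)) + ∫ p in simplex3, F p := by
  have i1 : IntegrableOn F regT1 volume := integrableOn_of_bounded_cont bounded_regT1 hF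
  have i2 : IntegrableOn F regT2 volume := integrableOn_of_bounded_cont bounded_regT2 hF
  have i3 : IntegrableOn F simplex3 volume := integrableOn_of_bounded_cont bounded_simplex3 hF
  have dis1 : AEDisjoint volume regT1 regT2 := by
    refine measure_mono_null ?_ plane13_null
    rintro p ⟨⟨_, h2, _, _⟩, ⟨_, h6, _, _⟩⟩
    exact le_antisymm h2 h6
  have dis2 : AEDisjoint volume (regT1 ∪ regT2) simplex3 := by
    refine measure_mono_null
      (t := {p : ℝ × ℝ × ℝ | p.1 = p.2.2} ∪ {p : ℝ × ℝ × ℝ | p.1 = p.2.1}) ?_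
      (measure_union_null plane13_null plane12_null)
    rintro p ⟨(⟨_, h2, h3, _⟩ | ⟨_, _, h3, _⟩), ⟨_, _, k3, _⟩⟩
    · exact Or.inl (le_antisymm h2 (h3.trans k3))
    · exact Or.inr (le_antisymm h3 k3)
  rw [box_eq, integral_union_ae dis2 meas_simplex3.nullMeasurableSet (i1.union i2) i3,
    integral_union_ae dis1 meas_regT2.nullMeasurableSet i1 i2]

end Aux

/-- shuffle identity for triple brackets:
`∫_{Σ₃}[g^{τ₃},[g^{τ₂},g^{τ₁}]] = ∫_{Σ₃}[g^{τ₁},[g^{τ₂},g^{τ₃}]]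
 + (1/2)[∫₀¹ g^t dt, ∫_{Σ₂}[g^{τ₂},g^{τ₁}]]`. -/
theorem shuffle_identity_triple_brackets {n : ℕ}
    (g : ℝ → (Fin n → ℝ) → (Fin n → ℝ))
    (hg : ContDiff ℝ (⊤ : ℕ∞) (fun p : ℝ × (Fin n → ℝ) => g p.1 p.2))
    (x : Fin n → ℝ) :
    (∫ p in simplex3, vbr (g p.2.2) (vbr (g p.2.1) (g p.1)) x) =
      (∫ p in simplex3, vbr (g p.1) (vbr (g p.2.1) (g p.2.2)) x)
      + (1 / 2 : ℝ) • vbr (fun y => ∫ t in (0:ℝ)..1, g t y)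
          (fun y => ∫ p in simplex2, vbr (g p.2) (g p.1) y) x := by
  classical
  -- smoothness of the inner family on Σ₂
  have hK : ContDiff ℝ (⊤ : ℕ∞) (fun p : (ℝ × ℝ) × (Fin n → ℝ) => vbr (g p.1.2) (g p.1.1) p.2) :=
    contDiff_vbr_family (f := fun q : ℝ × ℝ => g q.2) (h := fun q : ℝ × ℝ => g q.1)
      (hg.comp ((contDiff_fst.snd).prodMk contDiff_snd))
      (hg.comp ((contDiff_fst.fst).prodMk contDiff_snd))
  -- smoothness of each g a and of each vbr pair
  have hga : ∀ a, ContDiff ℝ (⊤ : ℕ∞) (g a) := fun a => hg.comp (contDiff_const.prodMk contDiff_id)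
  -- the joint integrand
  have hPhi : Continuous (fun p : ℝ × ℝ × ℝ => vbr (g p.1) (vbr (g p.2.2) (g p.2.1)) x) := by
    have hfam : ContDiff ℝ (⊤ : ℕ∞) (fun p : (ℝ × ℝ × ℝ) × (Fin n → ℝ) =>
        vbr (g p.1.1) (vbr (g p.1.2.2) (g p.1.2.1)) p.2) := by
      apply contDiff_vbr_family (f := fun r : ℝ × ℝ × ℝ => g r.1)
        (h := fun r : ℝ × ℝ × ℝ => vbr (g r.2.2) (g r.2.1))
        (hg.comp ((contDiff_fst.fst).prodMk contDiff_snd))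
      exact contDiff_vbr_family (f := fun r : ℝ × ℝ × ℝ => g r.2.2)
        (h := fun r : ℝ × ℝ × ℝ => g r.2.1)
        (hg.comp ((contDiff_fst.snd.snd).prodMk contDiff_snd))
        (hg.comp ((contDiff_fst.snd.fst).prodMk contDiff_snd))
    exact hfam.continuous.comp (continuous_id.prodMk continuous_const)
  -- Step 1: interval integral to set integral
  have e0 : (fun y => ∫ t in (0:ℝ)..1, g t y) = fun y => ∫ t in Ioc (0:ℝ) 1, g t y :=
    funext fun y => intervalIntegral.integral_of_le zero_le_one
  rw [e0]
  -- Step 2: bracket of integrals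
  rw [vbr_setIntegral (s := Ioc (0:ℝ) 1) (t := simplex2)
    (Metric.isBounded_Ioc 0 1) measurableSet_Ioc bounded_simplex2 meas_simplex2 hg hK x]
  -- Step 3: iterated to product integral
  have e1 : (∫ t in Ioc (0:ℝ) 1, ∫ q in simplex2, vbr (g t) (vbr (g q.2) (g q.1)) x)
      = ∫ p in Ioc (0:ℝ) 1 ×ˢ simplex2,
          vbr (g p.1) (vbr (g p.2.2) (g p.2.1)) x := by
    have hint : IntegrableOn (fun p : ℝ × ℝ × ℝ => vbr (g p.1) (vbr (g p.2.2) (g p.2.1)) x)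
        (Ioc (0:ℝ) 1 ×ˢ simplex2) volume :=
      integrableOn_of_bounded_cont ((Metric.isBounded_Ioc (0:ℝ) 1).prod bounded_simplex2) hPhi
    rw [Measure.volume_eq_prod] at hint
    rw [show (volume : Measure (ℝ × ℝ × ℝ))
        = ((volume : Measure ℝ).prod (volume : Measure (ℝ × ℝ))) from Measure.volume_eq_prod ℝ (ℝ × ℝ)]
    exact (setIntegral_prod _ hint).symm
  rw [e1]
  -- Step 4: Ioc to Icc
  have e2 : (∫ p in Ioc (0:ℝ) 1 ×ˢ simplex2, vbr (g p.1) (vbr (g p.2.2) (g p.2.1)) x)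
      = ∫ p in Icc (0:ℝ) 1 ×ˢ simplex2, vbr (g p.1) (vbr (g p.2.2) (g p.2.1)) x := by
    apply setIntegral_congr_set
    rw [MeasureTheory.ae_eq_set]
    constructor
    · refine measure_mono_null (t := (∅ : Set (ℝ × ℝ × ℝ))) ?_ measure_empty
      rintro p ⟨⟨h1, h2⟩, h3⟩
      exact absurd ⟨⟨le_of_lt h1.1, h1.2⟩, h2⟩ h3
    · refine measure_mono_null ?_ plane1_null
      rintro p ⟨⟨h1, h2⟩, h3⟩
      by_contra hne
      exact h3 ⟨⟨lt_of_le_of_ne h1.1 (Ne.symm hne), h1.2⟩, h2⟩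
  rw [e2, integral_box _ hPhi, transfer1, transfer2]
  -- pointwise identities
  have jac : ∀ p ∈ simplex3,
      vbr (g p.2.1) (vbr (g p.2.2) (g p.1)) x
        = vbr (g p.2.2) (vbr (g p.2.1) (g p.1)) x
          + vbr (g p.1) (vbr (g p.2.2) (g p.2.1)) x :=
    fun p _ => vbr_jacobi (hga p.1) (hga p.2.1) (hga p.2.2) x
  have neg : ∀ p ∈ simplex3,
      vbr (g p.1) (vbr (g p.2.2) (g p.2.1)) x
        = - vbr (g p.1) (vbr (g p.2.1) (g p.2.2)) x :=
    fun p _ => vbr_neg_right x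
  -- integrability of the LHS-type and RHS-type integrands on simplex3
  have hL : Continuous (fun p : ℝ × ℝ × ℝ => vbr (g p.2.2) (vbr (g p.2.1) (g p.1)) x) :=
    hPhi.comp (Continuous.prodMk (continuous_snd.comp continuous_snd)
      (continuous_fst.prodMk (continuous_fst.comp continuous_snd)))
  have hR : Continuous (fun p : ℝ × ℝ × ℝ => vbr (g p.1) (vbr (g p.2.1) (g p.2.2)) x) :=
    hPhi.comp (continuous_fst.prodMk
      ((continuous_snd.comp continuous_snd).prodMk (continuous_fst.comp continuous_snd)))
  have iL : IntegrableOn (fun p : ℝ × ℝ × ℝ => vbr (g p.2.2) (vbr (g p.2.1) (g p.1)) x)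
      simplex3 volume := integrableOn_of_bounded_cont bounded_simplex3 hL
  have iR : IntegrableOn (fun p : ℝ × ℝ × ℝ => vbr (g p.1) (vbr (g p.2.1) (g p.2.2)) x)
      simplex3 volume := integrableOn_of_bounded_cont bounded_simplex3 hR
  have eMid : (∫ p in simplex3, vbr (g p.2.1) (vbr (g p.2.2) (g p.1)) x)
      = (∫ p in simplex3, vbr (g p.2.2) (vbr (g p.2.1) (g p.1)) x)
        + ∫ p in simplex3, vbr (g p.1) (vbr (g p.2.2) (g p.2.1)) x := by
    rw [← integral_add iL (integrableOn_of_bounded_cont bounded_simplex3 hPhi)]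
    exact setIntegral_congr_fun meas_simplex3 fun p hp => by
      rw [jac p hp]
  have eNeg : (∫ p in simplex3, vbr (g p.1) (vbr (g p.2.2) (g p.2.1)) x)
      = - ∫ p in simplex3, vbr (g p.1) (vbr (g p.2.1) (g p.2.2)) x := by
    rw [← integral_neg]
    exact setIntegral_congr_fun meas_simplex3 fun p hp => neg p hp
  rw [eMid, eNeg]
  module
end

section
/- Key intermediate bound: under the hypotheses of the minimality inequality (p even, η horizontal arc-length parameterized on [0,τ] with η₁(0)=η₁(τ)=0, |η̇₁| ≤ 1 a.e.), setting β = ‖η₁‖_∞ and V(τ) = ∫₀^τ u₂ dt, one has (2/(p+1))·β^{p+1} ≤ ∫₀^τ η₁^p dt ≤ β^p (τ − V(τ)). -/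
/-!
Since `|η̇₁| ≤ 1` and `η₁` vanishes at both ends, `|η₁|` lies above the tent of slope 1 and
height `β` around a point where `|η₁| = β`; the tent fits inside `[0, τ]`, and as `p` is even
the integral of its `p`-th power, `2β^{p+1}/(p+1)`, bounds `∫ η₁^p` from below. For the upper
bound, the constraint `∫ u₂ η₁^p = 0` gives `∫ η₁^p = ∫ (1 - u₂) η₁^p`, and `0 ≤ 1 - u₂`,
`η₁^p ≤ β^p`.
-/

open MeasureTheory Set intervalIntegral
open scoped NNReal

theorem lipschitzOnWith_integral_of_norm_le {E : Type*} [NormedAddCommGroup E] [NormedSpace ℝ E]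
    {f : ℝ → E} {a b : ℝ} {C : ℝ≥0} (hf : IntervalIntegrable f volume a b)
    (hC : ∀ᵐ x, x ∈ uIcc a b → ‖f x‖ ≤ C) :
    LipschitzOnWith C (fun t => ∫ s in a..t, f s) (uIcc a b) := by
  refine lipschitzOnWith_iff_norm_sub_le.2 fun s hs t ht => ?_
  have hsub : uIcc t s ⊆ uIcc a b := uIcc_subset_uIcc ht hs
  rw [integral_interval_sub_left (hf.mono_set (uIcc_subset_uIcc_left hs))
    (hf.mono_set (uIcc_subset_uIcc_left ht)), Real.norm_eq_abs]
  refine norm_integral_le_of_norm_le_const_ae ?_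
  filter_upwards [hC] with x hx hxI using hx (hsub (uIoc_subset_uIcc hxI))

theorem le_integral_pow_of_ramp_up_le_abs {g : ℝ → ℝ} {p : ℕ} {a b : ℝ} (hp : Even p)
    (hab : a ≤ b) (hg : IntervalIntegrable (fun t => g t ^ p) volume a b)
    (hramp : ∀ t ∈ Icc a b, t - a ≤ |g t|) :
    (b - a) ^ (p + 1) / (p + 1) ≤ ∫ t in a..b, g t ^ p := by
  calc (b - a) ^ (p + 1) / (p + 1) = ∫ t in a..b, (t - a) ^ p := by
        simp [integral_comp_sub_right fun t => t ^ p]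
    _ ≤ ∫ t in a..b, g t ^ p := by
        refine integral_mono_on hab (Continuous.intervalIntegrable (by fun_prop) _ _) hg
          fun t ht => ?_
        rw [← hp.pow_abs (g t)]
        exact pow_le_pow_left₀ (by linarith [ht.1]) (hramp t ht) p

theorem le_integral_pow_of_ramp_down_le_abs {g : ℝ → ℝ} {p : ℕ} {a b : ℝ} (hp : Even p)
    (hab : a ≤ b) (hg : IntervalIntegrable (fun t => g t ^ p) volume a b)
    (hramp : ∀ t ∈ Icc a b, b - t ≤ |g t|) :
    (b - a) ^ (p + 1) / (p + 1) ≤ ∫ t in a..b, g t ^ p := by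
  calc (b - a) ^ (p + 1) / (p + 1) = ∫ t in a..b, (b - t) ^ p := by
        simp [integral_comp_sub_left fun t => t ^ p]
    _ ≤ ∫ t in a..b, g t ^ p := by
        refine integral_mono_on hab (Continuous.intervalIntegrable (by fun_prop) _ _) hg
          fun t ht => ?_
        rw [← hp.pow_abs (g t)]
        exact pow_le_pow_left₀ (by linarith [ht.2]) (hramp t ht) p

theorem two_div_mul_abs_pow_le_integral_pow {g : ℝ → ℝ} {p : ℕ} {a b c : ℝ} (hp : Even p)
    (hg : LipschitzOnWith 1 g (Icc a b)) (ha : g a = 0) (hb : g b = 0) (hc : c ∈ Icc a b) :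
    2 / (p + 1) * |g c| ^ (p + 1) ≤ ∫ t in a..b, g t ^ p := by
  set β := |g c|
  have hab : a ≤ b := hc.1.trans hc.2
  have hdist : ∀ t ∈ Icc a b, |g c - g t| ≤ |c - t| := fun t ht => by
    simpa [Real.dist_eq] using hg.dist_le_mul c hc t ht
  have hβa : a ≤ c - β := by
    have := hdist a ⟨le_rfl, hab⟩
    rw [ha, sub_zero, abs_of_nonneg (sub_nonneg.2 hc.1)] at this
    linarith
  have hβb : c + β ≤ b := by
    have := hdist b ⟨hab, le_rfl⟩
    rw [hb, sub_zero, abs_of_nonpos (sub_nonpos.2 hc.2)] at this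
    linarith
  have htent : ∀ t ∈ Icc a b, β - |c - t| ≤ |g t| := fun t ht => by
    linarith [hdist t ht, abs_sub_abs_le_abs_sub (g c) (g t)]
  have hint : IntervalIntegrable (fun t => g t ^ p) volume a b :=
    ((hg.continuousOn.pow p).mono (uIcc_of_le hab).subset).intervalIntegrable
  have hint' : ∀ s ∈ Icc a b, ∀ t ∈ Icc a b, IntervalIntegrable (fun t => g t ^ p) volume s t :=
    fun s hs t ht => hint.mono_set (by rw [uIcc_of_le hab]; exact uIcc_subset_Icc hs ht)
  have hβ : 0 ≤ β := abs_nonneg _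
  have hcβ : c - β ∈ Icc a b := ⟨hβa, by linarith [hc.2]⟩
  have hcβ' : c + β ∈ Icc a b := ⟨by linarith [hc.1], hβb⟩
  have hleft : β ^ (p + 1) / (p + 1) ≤ ∫ t in c - β..c, g t ^ p := by
    simpa using le_integral_pow_of_ramp_up_le_abs hp (by linarith) (hint' _ hcβ _ hc)
      fun t ht => by linarith [htent t ⟨hβa.trans ht.1, ht.2.trans hc.2⟩,
        abs_of_nonneg (sub_nonneg.2 ht.2)]
  have hright : β ^ (p + 1) / (p + 1) ≤ ∫ t in c..c + β, g t ^ p := by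
    simpa using le_integral_pow_of_ramp_down_le_abs hp (by linarith) (hint' _ hc _ hcβ')
      fun t ht => by linarith [htent t ⟨hc.1.trans ht.1, ht.2.trans hβb⟩,
        abs_of_nonpos (sub_nonpos.2 ht.1)]
  calc 2 / (p + 1) * β ^ (p + 1) = β ^ (p + 1) / (p + 1) + β ^ (p + 1) / (p + 1) := by ring
    _ ≤ (∫ t in c - β..c, g t ^ p) + ∫ t in c..c + β, g t ^ p := by gcongr
    _ = ∫ t in c - β..c + β, g t ^ p :=
        integral_add_adjacent_intervals (hint' _ hcβ _ hc) (hint' _ hc _ hcβ')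
    _ ≤ ∫ t in a..b, g t ^ p :=
        integral_mono_interval hβa (by linarith) hβb
          (Filter.Eventually.of_forall fun t => hp.pow_nonneg (g t)) hint

theorem integral_le_mul_sub_integral_of_integral_mul_eq_zero {f w : ℝ → ℝ} {a b M : ℝ}
    (hab : a ≤ b) (hf : ContinuousOn f (Icc a b)) (hw : IntervalIntegrable w volume a b)
    (hwf : ∫ t in a..b, w t * f t = 0) (hw1 : ∀ᵐ t, t ∈ Icc a b → w t ≤ 1)
    (hfM : ∀ t ∈ Icc a b, f t ≤ M) :
    ∫ t in a..b, f t ≤ M * ((b - a) - ∫ t in a..b, w t) := by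
  rw [← uIcc_of_le hab] at hf
  have hwf_int : IntervalIntegrable (fun t => w t * f t) volume a b := hw.mul_continuousOn hf
  calc ∫ t in a..b, f t = ∫ t in a..b, f t - w t * f t := by
        rw [integral_sub hf.intervalIntegrable hwf_int, hwf, sub_zero]
    _ ≤ ∫ t in a..b, M - M * w t := by
        refine integral_mono_ae_restrict hab (hf.intervalIntegrable.sub hwf_int)
          (intervalIntegrable_const.sub (hw.const_mul M)) ?_
        filter_upwards [ae_restrict_of_ae hw1, ae_restrict_mem measurableSet_Icc] with t hwt ht
        nlinarith [hwt ht, hfM t ht]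
    _ = M * ((b - a) - ∫ t in a..b, w t) := by
        rw [integral_sub intervalIntegrable_const (hw.const_mul M),
          intervalIntegral.integral_const_mul, intervalIntegral.integral_const, smul_eq_mul]
        ring

theorem key_intermediate_bound_general
    (p : ℕ) (hpe : Even p) (τ : ℝ)
    (u1 u2 η1 : ℝ → ℝ) (β : ℝ)
    (hu1int : IntervalIntegrable u1 volume 0 τ)
    (hu2int : IntervalIntegrable u2 volume 0 τ)
    (hnorm : ∀ᵐ t ∂volume, t ∈ Set.Icc 0 τ → u1 t ^ 2 + u2 t ^ 2 = 1)
    (hη1 : ∀ t, η1 t = ∫ s in (0:ℝ)..t, u1 s)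
    (hend1 : η1 τ = 0)
    (hzero : (∫ t in (0:ℝ)..τ, u2 t * η1 t ^ p) = 0)
    (hβ : IsGreatest ((fun t => |η1 t|) '' Set.Icc 0 τ) β) :
    2 / ((p : ℝ) + 1) * β ^ (p + 1) ≤ (∫ t in (0:ℝ)..τ, η1 t ^ p) ∧
    (∫ t in (0:ℝ)..τ, η1 t ^ p) ≤ β ^ p * (τ - ∫ t in (0:ℝ)..τ, u2 t) := by
  obtain ⟨⟨t₀, ht₀, hβ₀⟩, hmax⟩ := hβ
  have hτ : 0 ≤ τ := ht₀.1.trans ht₀.2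
  have hlip : LipschitzOnWith 1 η1 (Icc 0 τ) := by
    rw [funext hη1, ← uIcc_of_le hτ]
    refine lipschitzOnWith_integral_of_norm_le hu1int ?_
    filter_upwards [hnorm] with t ht htI
    rw [uIcc_of_le hτ] at htI
    have hu1 : u1 t ^ 2 ≤ 1 := by nlinarith [ht htI, sq_nonneg (u2 t)]
    simpa [sq_le_one_iff_abs_le_one] using hu1
  have hu2 : ∀ᵐ t, t ∈ Icc 0 τ → u2 t ≤ 1 := by
    filter_upwards [hnorm] with t ht htI
    nlinarith [ht htI, sq_nonneg (u1 t)]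
  have hη1β : ∀ t ∈ Icc 0 τ, η1 t ^ p ≤ β ^ p := fun t ht => by
    rw [← hpe.pow_abs]
    exact pow_le_pow_left₀ (abs_nonneg _) (hmax ⟨t, ht, rfl⟩) p
  refine ⟨hβ₀ ▸ two_div_mul_abs_pow_le_integral_pow hpe hlip (by simp [hη1]) hend1 ht₀, ?_⟩
  simpa using integral_le_mul_sub_integral_of_integral_mul_eq_zero (f := fun t => η1 t ^ p) hτ
    (hlip.continuousOn.pow p) hu2int hzero hu2 hη1β

/-- key intermediate bound: with `β = ‖η₁‖_∞` on `[0,τ]` and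
`V(τ) = ∫₀^τ u₂`, one has
`(2/(p+1))β^{p+1} ≤ ∫₀^τ η₁^p ≤ β^p (τ − V(τ))`. -/
theorem key_intermediate_bound
    (p : ℕ) (hp2 : 2 ≤ p) (hpe : Even p) (τ : ℝ) (hτ : 0 < τ)
    (u1 u2 η1 : ℝ → ℝ) (β : ℝ)
    (hu1int : IntervalIntegrable u1 volume 0 τ)
    (hu2int : IntervalIntegrable u2 volume 0 τ)
    (hnorm : ∀ᵐ t ∂volume, t ∈ Set.Icc 0 τ → u1 t ^ 2 + u2 t ^ 2 = 1)
    (hη1 : ∀ t, η1 t = ∫ s in (0:ℝ)..t, u1 s)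
    (hend1 : η1 τ = 0)
    (hzero : (∫ t in (0:ℝ)..τ, u2 t * η1 t ^ p) = 0)
    (hβ : IsGreatest ((fun t => |η1 t|) '' Set.Icc 0 τ) β) :
    2 / ((p : ℝ) + 1) * β ^ (p + 1) ≤ (∫ t in (0:ℝ)..τ, η1 t ^ p) ∧
    (∫ t in (0:ℝ)..τ, η1 t ^ p) ≤ β ^ p * (τ - ∫ t in (0:ℝ)..τ, u2 t) :=
  key_intermediate_bound_general p hpe τ u1 u2 η1 β hu1int hu2int hnorm hη1 hend1 hzero hβ
end

section
/- Lower bound by a tent function: let p be an even positive integer, τ > 0, and h : [0,τ] → ℝ absolutely continuous with h(0) = h(τ) = 0, |h'| ≤ 1 a.e., and β = ‖h‖_∞. Then ∫₀^τ h(t)^p dt ≥ (2/(p+1)) β^{p+1}. -/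
/-!
If `|h|` attains its maximum `β` at `t₀`, then being `1`-Lipschitz forces `|h t| ≥ β - |t - t₀|`
near `t₀`, and vanishing at `0` and `τ` forces the whole tent `[t₀ - β, t₀ + β]` to lie in `[0, τ]`.
So `∫₀^τ h^p` is at least the integral of the `p`-th power of the tent, which is
`2 β^(p+1) / (p+1)`.
-/

theorem integral_tent_pow (p : ℕ) (c : ℝ) {β : ℝ} (hβ : 0 ≤ β) :
    ∫ t in (c - β)..(c + β), (β - |t - c|) ^ p = 2 / ((p : ℝ) + 1) * β ^ (p + 1) := by
  have hcont : Continuous fun t : ℝ => (β - |t - c|) ^ p := by fun_prop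
  have left : ∫ t in (c - β)..c, (β - |t - c|) ^ p = ∫ t in (c - β)..c, (t - (c - β)) ^ p := by
    refine intervalIntegral.integral_congr fun t ht => ?_
    rw [Set.uIcc_of_le (by linarith)] at ht
    rw [abs_of_nonpos (by linarith [ht.2])]
    ring_nf
  have right : ∫ t in c..(c + β), (β - |t - c|) ^ p = ∫ t in c..(c + β), (c + β - t) ^ p := by
    refine intervalIntegral.integral_congr fun t ht => ?_
    rw [Set.uIcc_of_le (by linarith)] at ht
    rw [abs_of_nonneg (by linarith [ht.1])]
    ring_nf
  rw [← intervalIntegral.integral_add_adjacent_intervals (hcont.intervalIntegrable _ _)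
    (hcont.intervalIntegrable _ _), left, right,
    intervalIntegral.integral_comp_sub_right (· ^ p), intervalIntegral.integral_comp_sub_left (· ^ p)]
  simp only [sub_self, sub_sub_cancel, add_sub_cancel_left, integral_pow]
  rw [zero_pow (Nat.succ_ne_zero p)]
  ring

theorem LipschitzOnWith.abs_sub_abs_sub_le_abs {s : Set ℝ} {f : ℝ → ℝ}
    (hf : LipschitzOnWith 1 f s) {x y : ℝ} (hx : x ∈ s) (hy : y ∈ s) :
    |f x| - |y - x| ≤ |f y| := by
  have := hf.dist_le_mul y hy x hx
  simp only [Real.dist_eq, NNReal.coe_one, one_mul] at this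
  linarith [abs_sub_abs_le_abs_sub (f x) (f y), abs_sub_comm (f x) (f y)]

theorem LipschitzOnWith.Icc_sub_abs_add_abs_subset {f : ℝ → ℝ} {a b x : ℝ}
    (hf : LipschitzOnWith 1 f (Set.Icc a b)) (ha : f a = 0) (hb : f b = 0)
    (hx : x ∈ Set.Icc a b) :
    Set.Icc (x - |f x|) (x + |f x|) ⊆ Set.Icc a b := by
  have hab : a ≤ b := hx.1.trans hx.2
  have from_a := hf.abs_sub_abs_sub_le_abs hx ⟨le_rfl, hab⟩
  have from_b := hf.abs_sub_abs_sub_le_abs hx ⟨hab, le_rfl⟩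
  rw [ha, abs_zero, abs_of_nonpos (sub_nonpos.2 hx.1)] at from_a
  rw [hb, abs_zero, abs_of_nonneg (sub_nonneg.2 hx.2)] at from_b
  exact Set.Icc_subset_Icc (by linarith) (by linarith)

theorem tent_function_lower_bound_general
    (p : ℕ) (hpe : Even p) (τ : ℝ)
    (h : ℝ → ℝ) (hlip : LipschitzOnWith 1 h (Set.Icc 0 τ))
    (h0 : h 0 = 0) (hτ0 : h τ = 0)
    (β : ℝ) (hβ : IsGreatest ((fun t => |h t|) '' Set.Icc 0 τ) β) :
    2 / ((p : ℝ) + 1) * β ^ (p + 1) ≤ ∫ t in (0:ℝ)..τ, h t ^ p := by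
  obtain ⟨⟨t₀, ht₀, hβt₀⟩, -⟩ := hβ
  dsimp only at hβt₀
  have tent_subset : Set.Icc (t₀ - β) (t₀ + β) ⊆ Set.Icc 0 τ :=
    hβt₀ ▸ hlip.Icc_sub_abs_add_abs_subset h0 hτ0 ht₀
  have hβ0 : 0 ≤ β := hβt₀ ▸ abs_nonneg _
  have tent_le : ∀ t ∈ Set.Icc (t₀ - β) (t₀ + β), (β - |t - t₀|) ^ p ≤ h t ^ p := by
    intro t ht
    rw [← hpe.pow_abs (h t), ← hβt₀]
    have near_peak : |t - t₀| ≤ |h t₀| := abs_sub_le_iff.2 ⟨by linarith [ht.2], by linarith [ht.1]⟩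
    exact pow_le_pow_left₀ (sub_nonneg.2 near_peak)
      (hlip.abs_sub_abs_sub_le_abs ht₀ (tent_subset ht)) p
  have hcont : ContinuousOn (fun t => h t ^ p) (Set.Icc 0 τ) := hlip.continuousOn.pow p
  have tent_lo : 0 ≤ t₀ - β := (tent_subset ⟨le_rfl, by linarith⟩).1
  have tent_hi : t₀ + β ≤ τ := (tent_subset ⟨by linarith, le_rfl⟩).2
  calc 2 / ((p : ℝ) + 1) * β ^ (p + 1)
      = ∫ t in (t₀ - β)..(t₀ + β), (β - |t - t₀|) ^ p := (integral_tent_pow p t₀ hβ0).symm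
    _ ≤ ∫ t in (t₀ - β)..(t₀ + β), h t ^ p :=
        intervalIntegral.integral_mono_on (by linarith)
          ((by fun_prop : Continuous fun t => (β - |t - t₀|) ^ p).intervalIntegrable _ _)
          ((hcont.mono tent_subset).intervalIntegrable_of_Icc (by linarith)) tent_le
    _ ≤ ∫ t in (0:ℝ)..τ, h t ^ p :=
        intervalIntegral.integral_mono_interval tent_lo (by linarith) tent_hi
          (Filter.Eventually.of_forall fun t => hpe.pow_nonneg _)
          (hcont.intervalIntegrable_of_Icc (by linarith))

/-- lower bound by a tent function: if `p` is even and positive,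
`h` is `1`-Lipschitz on `[0,τ]` (i.e. absolutely continuous with `|h'| ≤ 1`
a.e.), `h(0) = h(τ) = 0`, and `β = ‖h‖_∞`, then
`∫₀^τ h^p ≥ (2/(p+1))β^{p+1}`. -/
theorem tent_function_lower_bound
    (p : ℕ) (hpe : Even p) (hp : 0 < p) (τ : ℝ) (hτ : 0 < τ)
    (h : ℝ → ℝ) (hlip : LipschitzOnWith 1 h (Set.Icc 0 τ))
    (h0 : h 0 = 0) (hτ0 : h τ = 0)
    (β : ℝ) (hβ : IsGreatest ((fun t => |h t|) '' Set.Icc 0 τ) β) :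
    2 / ((p : ℝ) + 1) * β ^ (p + 1) ≤ ∫ t in (0:ℝ)..τ, h t ^ p :=
  tent_function_lower_bound_general p hpe τ h hlip h0 hτ0 β hβ
end

section
/- For the system γ̇₁ = u₁, γ̇₂ = u₂(1−γ₁), γ̇₃ = u₂γ₁^p on ℝ³ with p ≥ 2 and controls with |u| = 1 a.e., every singular extremal starting at the origin with |γ₁| ≤ 1 satisfies γ₁ ≡ 0 and |u₂| = 1 a.e.; i.e., any dual curve λ with λ₁ = 0, λ₂(1−γ₁) + λ₃γ₁^p = 0 and the Goh condition λ₂ = p λ₃ γ₁^{p−1} along γ forces λ₂ = 0 and γ₁ = 0. -/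
/-!
Substituting the Goh condition `λ₂ = p λ₃ γ₁^{p-1}` into `λ₂ (1 - γ₁) + λ₃ γ₁^p = 0` gives
`λ₃ γ₁^{p-1} (p (1 - γ₁) + γ₁) = 0`. For `|γ₁| ≤ 1` the last factor is at least `1`, and
`λ₃ = 0` would force `λ₂ = 0`, hence `λ = 0` because `λ₁ = 0`. So `γ₁^{p-1} = 0`, i.e. `γ₁ = 0`,
and then `λ₂ = 0` by the Goh condition.
-/

lemma mul_one_sub_add_pos {p x : ℝ} (hp : 1 ≤ p) (hx : |x| ≤ 1) : 0 < p * (1 - x) + x := by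
  have hx₁ : x ≤ 1 := (abs_le.mp hx).2
  nlinarith

lemma abnormal_goh_factor {p : ℕ} (hp : 1 ≤ p) {x : ℝ} {l : ℝ × ℝ}
    (habn : l.1 * (1 - x) + l.2 * x ^ p = 0) (hgoh : l.1 = p * l.2 * x ^ (p - 1)) :
    l.2 * x ^ (p - 1) * (p * (1 - x) + x) = 0 := by
  obtain ⟨k, rfl⟩ : ∃ k, p = k + 1 := ⟨p - 1, by omega⟩
  rw [hgoh] at habn
  simp only [Nat.add_sub_cancel] at habn ⊢
  linear_combination habn

lemma eq_zero_of_abnormal_goh {p : ℕ} (hp : 1 ≤ p) {x : ℝ} {l : ℝ × ℝ} (hx : |x| ≤ 1)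
    (hl : l ≠ 0) (habn : l.1 * (1 - x) + l.2 * x ^ p = 0)
    (hgoh : l.1 = p * l.2 * x ^ (p - 1)) : x = 0 ∧ l.1 = 0 := by
  have hl₂ : l.2 ≠ 0 := fun h ↦ hl (Prod.ext (by simp [hgoh, h]) h)
  have hpos := mul_one_sub_add_pos (p := p) (by exact_mod_cast hp) hx
  have hpow : x ^ (p - 1) = 0 := by
    have hfactor := abnormal_goh_factor hp habn hgoh
    rwa [mul_eq_zero, mul_eq_zero, or_iff_right hl₂, or_iff_left hpos.ne'] at hfactor
  exact ⟨eq_zero_of_pow_eq_zero hpow, by rw [hgoh, mul_assoc, hpow, mul_zero, mul_zero]⟩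

/-- the abnormality conditions `λ₁ = 0`,
`λ₂(1−γ₁) + λ₃γ₁^p = 0` and the Goh condition `λ₂ = pλ₃γ₁^{p−1}` together with
`|γ₁| ≤ 1` and `λ ≠ 0` force `γ₁ ≡ 0` and `λ₂ ≡ 0`. -/
theorem singular_extremal_forces_gamma_zero
    (p : ℕ) (hp : 2 ≤ p) (γ1 : ℝ → ℝ) (lam : ℝ → ℝ × ℝ × ℝ)
    (hbound : ∀ t ∈ Set.Icc (0:ℝ) 1, |γ1 t| ≤ 1)
    (hlamne : ∀ t ∈ Set.Icc (0:ℝ) 1, lam t ≠ 0)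
    (h1 : ∀ t ∈ Set.Icc (0:ℝ) 1, (lam t).1 = 0)
    (h2 : ∀ t ∈ Set.Icc (0:ℝ) 1,
      (lam t).2.1 * (1 - γ1 t) + (lam t).2.2 * γ1 t ^ p = 0)
    (hgoh : ∀ t ∈ Set.Icc (0:ℝ) 1,
      (lam t).2.1 = (p : ℝ) * (lam t).2.2 * γ1 t ^ (p - 1)) :
    ∀ t ∈ Set.Icc (0:ℝ) 1, γ1 t = 0 ∧ (lam t).2.1 = 0 := by
  intro t ht
  have hne : (lam t).2 ≠ 0 := fun h ↦ hlamne t ht (Prod.ext (h1 t ht) h)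
  exact eq_zero_of_abnormal_goh (by omega) (hbound t ht) hne (h2 t ht) (hgoh t ht)
end

section
/- The singular extremal γ(t) = (0,t,0) for the distribution spanned by f₁ = ∂/∂x₁, f₂ = (1−x₁)∂/∂x₂ + x₁^p∂/∂x₃ (p ≥ 2) is strictly singular: there is no absolutely continuous curve λ : [0,1] → ℝ³ such that (γ,λ) solves the normal Hamiltonian system γ̇ = ∂H/∂λ, λ̇ = −∂H/∂x for H(x,λ) = (⟨λ,f₁(x)⟩² + ⟨λ,f₂(x)⟩²)/2. -/
open MeasureTheory

/-- Euclidean pairing on `ℝ³ = ℝ × ℝ × ℝ`. -/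
def dot3 (a b : ℝ × ℝ × ℝ) : ℝ := a.1 * b.1 + a.2.1 * b.2.1 + a.2.2 * b.2.2

/-- Gradient of a scalar function on `ℝ³ = ℝ × ℝ × ℝ`. -/
noncomputable def grad3 (f : ℝ × ℝ × ℝ → ℝ) (x : ℝ × ℝ × ℝ) : ℝ × ℝ × ℝ :=
  (fderiv ℝ f x (1, 0, 0), fderiv ℝ f x (0, 1, 0), fderiv ℝ f x (0, 0, 1))

/-- The sub-Riemannian Hamiltonian of the frame `f₁ = ∂/∂x₁`,
`f₂ = (1−x₁)∂/∂x₂ + x₁^p ∂/∂x₃`. -/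
noncomputable def subHam (p : ℕ) (x l : ℝ × ℝ × ℝ) : ℝ :=
  (dot3 l ((1:ℝ), (0:ℝ), (0:ℝ)) ^ 2 + dot3 l ((0:ℝ), 1 - x.1, x.1 ^ p) ^ 2) / 2


/-!
On `γ` we have `x₁ = 0`, so `f₂(γ) = ∂/∂x₂` and, as `p ≥ 2`, `∂f₂/∂x₁ = -∂/∂x₂` there. Hence
`∂H/∂λ = (λ₁, λ₂, 0)` and `∂H/∂x = (-λ₂², 0, 0)` along `γ`: the first equation forces `λ₁ = 0`,
`λ₂ = 1` almost everywhere, and then the second gives `λ̇₁ = 1`. But the continuous `λ₁` vanishes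
a.e. on `(0, 1)`, hence everywhere there, so its derivative is `0`.
-/

open Set

lemma grad3_eq_of_hasFDerivAt {f : ℝ × ℝ × ℝ → ℝ} {f' : ℝ × ℝ × ℝ →L[ℝ] ℝ} {x : ℝ × ℝ × ℝ}
    (h : HasFDerivAt f f' x) : grad3 f x = (f' (1, 0, 0), f' (0, 1, 0), f' (0, 0, 1)) := by
  rw [grad3, h.fderiv]

lemma grad3_comp_fst {g : ℝ → ℝ} {g' : ℝ} {x : ℝ × ℝ × ℝ} (h : HasDerivAt g g' x.1) :
    grad3 (fun x => g x.1) x = (g', 0, 0) :=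
  (grad3_eq_of_hasFDerivAt (h.comp_hasFDerivAt x hasFDerivAt_fst)).trans (by simp)

lemma grad3_half_sq_fst_add_sq_fst_snd (l : ℝ × ℝ × ℝ) :
    grad3 (fun l : ℝ × ℝ × ℝ => (l.1 ^ 2 + l.2.1 ^ 2) / 2) l = (l.1, l.2.1, 0) := by
  have h₁ : HasFDerivAt (fun l : ℝ × ℝ × ℝ => l.1) _ l := hasFDerivAt_fst (𝕜 := ℝ)
  have h₂ : HasFDerivAt (fun l : ℝ × ℝ × ℝ => l.2.1) _ l := (hasFDerivAt_snd (𝕜 := ℝ)).fst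
  simp_rw [div_eq_mul_inv]
  exact (grad3_eq_of_hasFDerivAt (((h₁.pow 2).fun_add (h₂.pow 2)).mul_const 2⁻¹)).trans (by simp)

lemma subHam_gamma {p : ℕ} (hp : p ≠ 0) (t : ℝ) (l : ℝ × ℝ × ℝ) :
    subHam p (0, t, 0) l = (l.1 ^ 2 + l.2.1 ^ 2) / 2 := by
  simp [subHam, dot3, zero_pow hp]

lemma hasDerivAt_subHam_fst (p : ℕ) (l : ℝ × ℝ × ℝ) (s : ℝ) :
    HasDerivAt (fun s => subHam p (s, 0, 0) l)
      (dot3 l (0, 1 - s, s ^ p) * (-l.2.1 + l.2.2 * (p * s ^ (p - 1)))) s := by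
  have h := ((((hasDerivAt_id' s).const_sub 1).const_mul l.2.1).fun_add
    ((hasDerivAt_pow p s).const_mul l.2.2)).fun_pow 2
  have hfun : (fun s => subHam p (s, 0, 0) l)
      = fun s => (l.1 ^ 2 + (l.2.1 * (1 - s) + l.2.2 * s ^ p) ^ 2) / 2 := by
    funext s
    simp [subHam, dot3]
  rw [hfun]
  exact ((h.const_add (l.1 ^ 2)).div_const 2).congr_deriv (by simp [dot3]; ring)

lemma grad3_subHam_covector_gamma {p : ℕ} (hp : p ≠ 0) (t : ℝ) (l : ℝ × ℝ × ℝ) :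
    grad3 (fun l => subHam p (0, t, 0) l) l = (l.1, l.2.1, 0) := by
  simp_rw [subHam_gamma hp]
  exact grad3_half_sq_fst_add_sq_fst_snd l

lemma grad3_subHam_state_gamma {p : ℕ} (hp : 2 ≤ p) (t : ℝ) (l : ℝ × ℝ × ℝ) :
    grad3 (fun x => subHam p x l) (0, t, 0) = (-l.2.1 ^ 2, 0, 0) := by
  refine (grad3_comp_fst (g := fun s => subHam p (s, 0, 0) l)
    (hasDerivAt_subHam_fst p l 0)).trans ?_
  simp [dot3, zero_pow (by omega : p ≠ 0), zero_pow (by omega : p - 1 ≠ 0), ← sq]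

lemma fst_eq_zero_and_hasDerivAt_fst_one {p : ℕ} (hp : 2 ≤ p) {lam : ℝ → ℝ × ℝ × ℝ} {t : ℝ}
    (hγ : HasDerivAt (fun s : ℝ => ((0 : ℝ), s, (0 : ℝ)))
      (grad3 (fun l => subHam p (0, t, 0) l) (lam t)) t)
    (hlam : HasDerivAt lam (-grad3 (fun x => subHam p x (lam t)) (0, t, 0)) t) :
    (lam t).1 = 0 ∧ HasDerivAt (fun s => (lam s).1) 1 t := by
  have hvel : ((lam t).1, (lam t).2.1, (0 : ℝ)) = (0, 1, 0) := by
    rw [← grad3_subHam_covector_gamma (show p ≠ 0 by omega) t]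
    exact hγ.unique
      ((hasDerivAt_const t 0).prodMk ((hasDerivAt_id t).prodMk (hasDerivAt_const t 0)))
  simp only [Prod.mk.injEq] at hvel
  refine ⟨hvel.1, ?_⟩
  have hfst := (ContinuousLinearMap.fst ℝ ℝ (ℝ × ℝ)).hasFDerivAt.comp_hasDerivAt t hlam
  exact hfst.congr_deriv (by simp [grad3_subHam_state_gamma hp, hvel.2.1])

lemma eq_zero_of_hasDerivAt_of_ae_restrict_eq_zero {E : Type*} [NormedAddCommGroup E]
    [NormedSpace ℝ E] {μ : Measure ℝ} [μ.IsOpenPosMeasure] {f : ℝ → E} {U : Set ℝ} {c : E} {t : ℝ}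
    (hU : IsOpen U) (hf : ContinuousOn f U) (h0 : ∀ᵐ s ∂μ.restrict U, f s = 0) (ht : t ∈ U)
    (hc : HasDerivAt f c t) : c = 0 := by
  have hzero : EqOn f 0 U := Measure.eqOn_open_of_ae_eq h0 hU hf continuousOn_const
  exact hc.unique ((hasDerivAt_const t 0).congr_of_eventuallyEq
    (hzero.eventuallyEq_of_mem (hU.mem_nhds ht)))

/-- the singular extremal `γ(t) = (0,t,0)` is strictly singular:
no absolutely continuous curve of covectors `λ` makes `(γ,λ)` a solution of the
normal Hamiltonian system `γ̇ = ∂H/∂λ`, `λ̇ = −∂H/∂x`. -/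
theorem gamma_strictly_singular (p : ℕ) (hp : 2 ≤ p) :
    ¬ ∃ lam : ℝ → ℝ × ℝ × ℝ, Continuous lam ∧
      ∀ᵐ t ∂volume, t ∈ Set.Ioo (0:ℝ) 1 →
        (HasDerivAt (fun s : ℝ => ((0:ℝ), s, (0:ℝ)))
            (grad3 (fun l => subHam p ((0:ℝ), t, (0:ℝ)) l) (lam t)) t ∧
         HasDerivAt lam (-(grad3 (fun x => subHam p x (lam t)) ((0:ℝ), t, (0:ℝ)))) t) := by
  rintro ⟨lam, hcont, hae⟩
  have hsys : ∀ᵐ t ∂volume.restrict (Ioo (0 : ℝ) 1),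
      t ∈ Ioo 0 1 ∧ (lam t).1 = 0 ∧ HasDerivAt (fun s => (lam s).1) 1 t := by
    filter_upwards [ae_restrict_mem measurableSet_Ioo,
      (ae_restrict_iff' measurableSet_Ioo).2 hae] with t ht hham
    exact ⟨ht, fst_eq_zero_and_hasDerivAt_fst_one hp hham.1 hham.2⟩
  have : (ae (volume.restrict (Ioo (0 : ℝ) 1))).NeBot := ae_neBot.2 (by simp)
  obtain ⟨t, ht, -, hderiv⟩ := hsys.exists
  exact one_ne_zero <| eq_zero_of_hasDerivAt_of_ae_restrict_eq_zero isOpen_Ioo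
    hcont.fst.continuousOn (hsys.mono fun _ h => h.2.1) ht hderiv
end
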